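/- arXiv:1206.1195 — 7 statements merged into one kernel-verified Lean document; each statement's English description precedes it below -/
import Mathlib

section
/- Let H be a complex Hilbert space and let E and F be orthogonal projections on H. If the operator norm ‖E F‖ of the composition E∘F is strictly less than 1, then for every f ∈ H: ‖f‖² ≤ (1 − ‖E F‖)^{−2} · ( ‖f − E f‖² + ‖f − F f‖² ). -/
open MeasureTheory ContinuousLinearMap RCLike
open scoped ENNReal NNReal InnerProductSpace

theorem stmt_5 {H : Type*} [NormedAddCommGroup H] [InnerProductSpace ℂ H]
    [CompleteSpace H]
    (E F : H →L[ℂ] H)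
    (hEproj : E ∘L E = E) (hEsa : IsSelfAdjoint E)
    (hFproj : F ∘L F = F) (hFsa : IsSelfAdjoint F)
    (hEF : ‖E ∘L F‖ < 1) (f : H) :
    ‖f‖ ^ 2 ≤ ((1 - ‖E ∘L F‖) ^ 2)⁻¹ * (‖f - E f‖ ^ 2 + ‖f - F f‖ ^ 2) := by
  set t := ‖E ∘L F‖ with ht
  have ht0 : 0 ≤ t := norm_nonneg _
  have hEE : ∀ x, E (E x) = E x := fun x => by
    calc E (E x) = (E ∘L E) x := rfl
    _ = E x := by rw [hEproj]
  have hFF : ∀ x, F (F x) = F x := fun x => by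
    calc F (F x) = (F ∘L F) x := rfl
    _ = F x := by rw [hFproj]
  -- norm of projections ≤ 1 pointwise
  have hnorm : ∀ (P : H →L[ℂ] H), (∀ x, P (P x) = P x) → IsSelfAdjoint P →
      ∀ x, ‖P x‖ ≤ ‖x‖ := by
    intro P hP hPsa x
    have hsym := hPsa.isSymmetric
    have h1 : (‖P x‖ : ℝ) ^ 2 = re ⟪x, P x⟫_ℂ := by
      have e1 : ⟪P x, P x⟫_ℂ = ⟪x, P (P x)⟫_ℂ := hsym x (P x)
      rw [← inner_self_eq_norm_sq (𝕜 := ℂ), e1, hP]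
    have h2 : re ⟪x, P x⟫_ℂ ≤ ‖x‖ * ‖P x‖ := by
      calc re ⟪x, P x⟫_ℂ ≤ ‖⟪x, P x⟫_ℂ‖ := re_le_norm _
        _ ≤ ‖x‖ * ‖P x‖ := norm_inner_le_norm x (P x)
    nlinarith [norm_nonneg (P x), norm_nonneg x]
  -- Pythagorean: ‖f‖² = ‖f - E f‖² + ‖E f‖²
  have hpyth : ‖f‖ ^ 2 = ‖f - E f‖ ^ 2 + ‖E f‖ ^ 2 := by
    have horth : re ⟪f - E f, E f⟫_ℂ = 0 := by
      have hsym := hEsa.isSymmetric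
      have e1 : ⟪E f, E f⟫_ℂ = ⟪f, E (E f)⟫_ℂ := hsym f (E f)
      have e2 : ⟪E f, E f⟫_ℂ = ⟪f, E f⟫_ℂ := by rw [e1, hEE]
      rw [inner_sub_left, e2]
      simp
    have h := norm_add_sq (𝕜 := ℂ) (f - E f) (E f)
    simp only [sub_add_cancel] at h
    rw [h, horth]
    ring
  have hEFnorm : ∀ x, ‖(E ∘L F) x‖ ≤ t * ‖x‖ := fun x => le_opNorm _ x
  have hFE : ‖F ∘L E‖ = t := by
    have h : F ∘L E = ContinuousLinearMap.adjoint (E ∘L F) := by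
      rw [adjoint_comp, hEsa.adjoint_eq, hFsa.adjoint_eq]
    rw [h, ht]
    exact (ContinuousLinearMap.adjoint : (H →L[ℂ] H) ≃ₗᵢ⋆[ℂ] (H →L[ℂ] H)).norm_map _
  have hp : ‖E f‖ ≤ ‖f - F f‖ + t * ‖F f‖ := by
    have hdecomp : E f = E (f - F f) + (E ∘L F) (F f) := by
      have h1 : (E ∘L F) (F f) = E (F f) := by
        simp [ContinuousLinearMap.comp_apply, hFF]
      rw [h1, ← map_add]
      congr 1
      abel
    calc ‖E f‖ = ‖E (f - F f) + (E ∘L F) (F f)‖ := by rw [← hdecomp]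
      _ ≤ ‖E (f - F f)‖ + ‖(E ∘L F) (F f)‖ := norm_add_le _ _
      _ ≤ ‖f - F f‖ + t * ‖F f‖ := by
          gcongr
          · exact hnorm E hEE hEsa _
          · exact hEFnorm _
  have hq : ‖F f‖ ≤ ‖f - E f‖ + t * ‖E f‖ := by
    have hdecomp : F f = F (f - E f) + (F ∘L E) (E f) := by
      have h1 : (F ∘L E) (E f) = F (E f) := by
        simp [ContinuousLinearMap.comp_apply, hEE]
      rw [h1, ← map_add]
      congr 1
      abel
    calc ‖F f‖ = ‖F (f - E f) + (F ∘L E) (E f)‖ := by rw [← hdecomp]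
      _ ≤ ‖F (f - E f)‖ + ‖(F ∘L E) (E f)‖ := norm_add_le _ _
      _ ≤ ‖f - E f‖ + t * ‖E f‖ := by
          gcongr
          · exact hnorm F hFF hFsa _
          · calc ‖(F ∘L E) (E f)‖ ≤ ‖F ∘L E‖ * ‖E f‖ := le_opNorm _ _
              _ = t * ‖E f‖ := by rw [hFE]
  -- arithmetic
  set a := ‖f - E f‖
  set b := ‖f - F f‖
  set p := ‖E f‖
  set q := ‖F f‖
  have ha : 0 ≤ a := norm_nonneg _
  have hb : 0 ≤ b := norm_nonneg _
  have hp0 : 0 ≤ p := norm_nonneg _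
  have hq0 : 0 ≤ q := norm_nonneg _
  have ht1 : 0 < 1 - t := by linarith
  have h1t : (0:ℝ) < 1 + t := by linarith
  have hP : (1 - t^2) * p ≤ b + t * a := by nlinarith
  have hPnn : 0 ≤ (1 - t^2) * p := by
    have : 0 < 1 - t^2 := by nlinarith
    positivity
  have hkey2 : ((1 - t^2) * p)^2 ≤ (b + t * a)^2 := by
    have := mul_self_le_mul_self hPnn hP
    nlinarith [this]
  have h2nn : (0:ℝ) ≤ 1 + 2*t - t^3 := by nlinarith
  have hmul : (1+t)^2 * ((1-t)^2 * (a^2 + p^2)) ≤ (1+t)^2 * (a^2 + b^2) := by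
    nlinarith [hkey2, mul_nonneg ht0 (sq_nonneg (a - b)),
      mul_nonneg (mul_nonneg ht0 h2nn) (sq_nonneg a),
      mul_nonneg (mul_nonneg ht0 h1t.le) (sq_nonneg b)]
  have hkey : (1-t)^2 * ‖f‖^2 ≤ a^2 + b^2 := by
    rw [hpyth]
    have h12 : (0:ℝ) < (1+t)^2 := by positivity
    exact le_of_mul_le_mul_left hmul h12
  have h2 : (0:ℝ) < (1 - t)^2 := by positivity
  rw [le_inv_mul_iff₀ h2]
  exact hkey
end

section
/- Let S ⊂ Ω and Σ ⊂ Ω̂ be measurable subsets with μ_{2m}(S) < ∞, μ̂_{2m̂}(Σ) < ∞ and μ_{2m}(S) · μ̂_{2m̂}(Σ) < c_T^{−2}. Then for every f ∈ L²(Ω, μ): ‖f‖²_{L²(Ω,μ)} ≤ (1 − c_T √(μ_{2m}(S) μ̂_{2m̂}(Σ)))^{−2} · ( ∫_{Ω∖S} |f(x)|² dμ(x) + ∫_{Ω̂∖Σ} |T f(ξ)|² dμ̂(ξ) ). -/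
open MeasureTheory
open scoped ENNReal NNReal

section Helpers

variable {α : Type*} [MeasurableSpace α] {ν : Measure α}
variable {E : Type*} [NormedAddCommGroup E]

lemma lint_sq_lt_top {u : α → E} (hu : MemLp u 2 ν) : ∫⁻ x, (‖u x‖₊ : ℝ≥0∞)^2 ∂ν < ⊤ := by
  have h := hu.2
  rw [eLpNorm_eq_lintegral_rpow_enorm_toReal two_ne_zero ENNReal.ofNat_ne_top,
    ENNReal.rpow_lt_top_iff_of_pos (by norm_num)] at h
  convert h using 2
  ext x
  norm_num; rfl

lemma memL2_of_lint {u : α → E} (hm : AEStronglyMeasurable u ν)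
    (hfin : ∫⁻ x, (‖u x‖₊ : ℝ≥0∞)^2 ∂ν < ⊤) : MemLp u 2 ν := by
  refine ⟨hm, ?_⟩
  rw [eLpNorm_eq_lintegral_rpow_enorm_toReal two_ne_zero ENNReal.ofNat_ne_top]
  refine ENNReal.rpow_lt_top_of_nonneg (by norm_num) ?_
  convert hfin.ne using 2
  ext x
  norm_num; rfl

lemma integral_sq_eq {u : α → E} (hu : MemLp u 2 ν) :
    ENNReal.ofReal (∫ x, ‖u x‖^2 ∂ν) = ∫⁻ x, (‖u x‖₊ : ℝ≥0∞)^2 ∂ν := by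
  rw [MeasureTheory.ofReal_integral_eq_lintegral_ofReal]
  · congr 1; ext x; rw [ENNReal.ofReal_pow (norm_nonneg _), ← coe_nnnorm, ENNReal.ofReal_coe_nnreal]
  · have := hu.norm.integrable_sq
    simpa using this
  · exact Filter.Eventually.of_forall fun x => sq_nonneg _

lemma int_of_lint {u : α → ℝ} (hm : AEStronglyMeasurable u ν) (h0 : ∀ x, 0 ≤ u x)
    (hfin : ∫⁻ x, ENNReal.ofReal (u x) ∂ν < ⊤) : Integrable u ν := by
  refine ⟨hm, ?_⟩
  rw [hasFiniteIntegral_iff_ofReal (Filter.Eventually.of_forall h0)]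
  exact hfin

lemma mul_int_real {u v : α → ℝ} (hu : MemLp u 2 ν) (hv : MemLp v 2 ν) :
    Integrable (fun x => u x * v x) ν := by
  have h := L2.integrable_inner (𝕜 := ℝ) (hu.toLp u) (hv.toLp v)
  refine h.congr ?_
  filter_upwards [hu.coeFn_toLp, hv.coeFn_toLp] with x h1 h2
  simp [h1, h2, RCLike.inner_apply, mul_comm]

lemma cs_int {u v : α → ℝ} (hu : MemLp u 2 ν) (hv : MemLp v 2 ν) :
    ∫ x, u x * v x ∂ν ≤ Real.sqrt (∫ x, u x ^ 2 ∂ν) * Real.sqrt (∫ x, v x ^ 2 ∂ν) := by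
  set F := hu.toLp u
  set G := hv.toLp v
  have h1 : ∫ x, u x * v x ∂ν = (inner ℝ F G : ℝ) := by
    rw [L2.inner_def]
    refine integral_congr_ae ?_
    filter_upwards [hu.coeFn_toLp, hv.coeFn_toLp] with x h1 h2
    simp [F, G, h1, h2, RCLike.inner_apply, mul_comm]
  have hF : ‖F‖^2 = ∫ x, u x ^ 2 ∂ν := by
    rw [← real_inner_self_eq_norm_sq, L2.inner_def]
    refine integral_congr_ae ?_
    filter_upwards [hu.coeFn_toLp] with x h1
    simp [F, h1, RCLike.inner_apply, sq]
  have hG : ‖G‖^2 = ∫ x, v x ^ 2 ∂ν := by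
    rw [← real_inner_self_eq_norm_sq, L2.inner_def]
    refine integral_congr_ae ?_
    filter_upwards [hv.coeFn_toLp] with x h1
    simp [G, h1, RCLike.inner_apply, sq]
  rw [h1]
  calc (inner ℝ F G : ℝ) ≤ ‖F‖ * ‖G‖ := real_inner_le_norm F G
  _ = Real.sqrt (∫ x, u x ^ 2 ∂ν) * Real.sqrt (∫ x, v x ^ 2 ∂ν) := by
      rw [← hF, ← hG, Real.sqrt_sq (norm_nonneg _), Real.sqrt_sq (norm_nonneg _)]

lemma mul_int_cplx {u v : α → ℂ} (hu : MemLp u 2 ν) (hv : MemLp v 2 ν) :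
    Integrable (fun x => (starRingEnd ℂ) (u x) * v x) ν := by
  have h := L2.integrable_inner (𝕜 := ℂ) (hu.toLp u) (hv.toLp v)
  refine h.congr ?_
  filter_upwards [hu.coeFn_toLp, hv.coeFn_toLp] with x h1 h2
  simp [h1, h2, RCLike.inner_apply, mul_comm]

lemma polar {u v : α → ℂ} (hu : MemLp u 2 ν) (hv : MemLp v 2 ν) :
    ∫ x, ‖u x + v x‖^2 ∂ν =
      ∫ x, ‖u x‖^2 ∂ν + ∫ x, ‖v x‖^2 ∂ν + 2 * ∫ x, ((starRingEnd ℂ) (u x) * v x).re ∂ν := by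
  have hint1 : Integrable (fun x => ‖u x‖^2) ν := by simpa using hu.norm.integrable_sq
  have hint2 : Integrable (fun x => ‖v x‖^2) ν := by simpa using hv.norm.integrable_sq
  have hint12 : Integrable (fun x => ‖u x‖^2 + ‖v x‖^2) ν := hint1.add hint2
  have hint3 : Integrable (fun x => ((starRingEnd ℂ) (u x) * v x).re) ν :=
    (mul_int_cplx hu hv).re
  have hpt : ∀ x, ‖u x + v x‖^2 =
      ‖u x‖^2 + ‖v x‖^2 + 2 * ((starRingEnd ℂ) (u x) * v x).re := by
    intro x
    have h := norm_add_sq (𝕜 := ℂ) (u x) (v x)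
    simp only [RCLike.inner_apply, RCLike.re_to_complex] at h
    rw [mul_comm (v x)] at h; linarith
  calc ∫ x, ‖u x + v x‖^2 ∂ν
      = ∫ x, (‖u x‖^2 + ‖v x‖^2 + 2 * ((starRingEnd ℂ) (u x) * v x).re) ∂ν := by
        exact integral_congr_ae (Filter.Eventually.of_forall hpt)
    _ = ∫ x, ‖u x‖^2 ∂ν + ∫ x, ‖v x‖^2 ∂ν + 2 * ∫ x, ((starRingEnd ℂ) (u x) * v x).re ∂ν := by
        rw [integral_add hint12 (hint3.const_mul 2), integral_add hint1 hint2,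
          integral_const_mul 2 _]

lemma key_arith (A B N s δ : ℝ) (hA : 0 ≤ A) (hB : 0 ≤ B) (hs : 0 ≤ s)
    (hδ0 : 0 ≤ δ) (hδ1 : δ < 1) (hN : N = A + s^2)
    (hkey : s^2 ≤ δ * s * Real.sqrt N + s * Real.sqrt B) :
    N ≤ (A + B) / (1 - δ)^2 := by
  have hN0 : 0 ≤ N := by nlinarith [sq_nonneg s]
  set t := Real.sqrt N with ht
  set b := Real.sqrt B with hb
  set r := Real.sqrt (A + B) with hr
  have ht2 : t^2 = N := Real.sq_sqrt hN0
  have hb2 : b^2 = B := Real.sq_sqrt hB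
  have hr2 : r^2 = A + B := Real.sq_sqrt (by linarith)
  have ht0 : 0 ≤ t := Real.sqrt_nonneg _
  have hb0 : 0 ≤ b := Real.sqrt_nonneg _
  have hr0 : 0 ≤ r := Real.sqrt_nonneg _
  have hbr : b ≤ r := Real.sqrt_le_sqrt (by linarith)
  have hsle : s ≤ δ * t + b := by
    rcases eq_or_lt_of_le hs with h0 | h0
    · rw [← h0]; positivity
    · have h1 : s * s ≤ s * (δ * t + b) := by nlinarith
      exact le_of_mul_le_mul_left (by linarith [h1]) h0
  have hs2 : s^2 ≤ (δ*t+b)^2 := by nlinarith [mul_nonneg hδ0 ht0]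
  have h1 : (1 - δ^2) * t^2 ≤ r^2 + 2*δ*t*r := by
    nlinarith [mul_le_mul_of_nonneg_left hbr (mul_nonneg hδ0 ht0)]
  have h2 : (1 - δ) * t ≤ r := by
    rcases le_or_gt ((1-δ)*t) r with h | h
    · exact h
    · exfalso
      have htpos : 0 < t := by nlinarith
      have hp2 : 0 < (1+δ)*t + r := by nlinarith
      nlinarith [mul_pos (sub_pos.mpr h) hp2]
  have hδ1' : (0:ℝ) < 1 - δ := by linarith
  rw [le_div_iff₀ (by positivity : (0:ℝ) < (1-δ)^2)]
  have h3 := mul_le_mul h2 h2 (mul_nonneg hδ1'.le ht0) hr0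
  nlinarith [h3]

end Helpers

theorem stmt_6
    (d : ℕ) (hd : 1 ≤ d) (a m mh cT : ℝ)
    (ha : 0 < a) (hm : 0 ≤ m) (hmh : 0 ≤ mh) (hcT : 0 < cT)
    (Ω Ωh : Set (EuclideanSpace ℝ (Fin d)))
    (hΩconv : Convex ℝ Ω)
    (hΩcone : ∀ l : ℝ, 0 < l → ∀ x ∈ Ω, l • x ∈ Ω)
    (hΩint : (interior Ω).Nonempty)
    (hΩhconv : Convex ℝ Ωh)
    (hΩhcone : ∀ l : ℝ, 0 < l → ∀ ξ ∈ Ωh, l • ξ ∈ Ωh)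
    (hΩhint : (interior Ωh).Nonempty)
    (μ μh : Measure (EuclideanSpace ℝ (Fin d)))
    (hμac : μ ≪ volume) (hμhac : μh ≪ volume)
    (hμΩ : μ Ωᶜ = 0) (hμhΩ : μh Ωhᶜ = 0)
    (hμhom : ∀ l : ℝ, 0 < l →
      Measure.map (fun x => l⁻¹ • x) μ = (ENNReal.ofReal (l ^ (2 * a))) • μ)
    (hμhhom : ∀ l : ℝ, 0 < l →
      Measure.map (fun ξ => l⁻¹ • ξ) μh = (ENNReal.ofReal (l ^ (2 * a))) • μh)
    (K : EuclideanSpace ℝ (Fin d) → EuclideanSpace ℝ (Fin d) → ℂ)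
    (hKcont : ContinuousOn (fun p => K p.1 p.2) (Ω ×ˢ Ωh))
    (hKbound : ∀ x ξ, ‖K x ξ‖ ≤ cT * (1 + ‖x‖) ^ m * (1 + ‖ξ‖) ^ mh)
    (hKhom : ∀ l : ℝ, 0 < l → ∀ x ξ, K (l • x) ξ = K x (l • ξ))
    (T : (EuclideanSpace ℝ (Fin d) → ℂ) → EuclideanSpace ℝ (Fin d) → ℂ)
    (hTint : ∀ f : EuclideanSpace ℝ (Fin d) → ℂ,
      Integrable f (μ.withDensity fun x => ENNReal.ofReal ((1 + ‖x‖) ^ m)) →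
      ∀ ξ, T f ξ = ∫ x, f x * K x ξ ∂μ)
    (hTmeas : ∀ f : EuclideanSpace ℝ (Fin d) → ℂ, MemLp f 2 μ → AEStronglyMeasurable (T f) μh)
    (hTadd : ∀ f g : EuclideanSpace ℝ (Fin d) → ℂ, MemLp f 2 μ → MemLp g 2 μ → T (f + g) =ᵐ[μh] T f + T g)
    (hTsmul : ∀ (c : ℂ) (f : EuclideanSpace ℝ (Fin d) → ℂ), MemLp f 2 μ → T (c • f) =ᵐ[μh] c • T f)
    (hTplan : ∀ f : EuclideanSpace ℝ (Fin d) → ℂ, MemLp f 2 μ →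
      ∫⁻ ξ, (‖T f ξ‖₊ : ℝ≥0∞) ^ 2 ∂μh = ∫⁻ x, (‖f x‖₊ : ℝ≥0∞) ^ 2 ∂μ)
    (hTsurj : ∀ g : EuclideanSpace ℝ (Fin d) → ℂ, MemLp g 2 μh → ∃ f : EuclideanSpace ℝ (Fin d) → ℂ, MemLp f 2 μ ∧ T f =ᵐ[μh] g)
    (hTinv : ∀ f : EuclideanSpace ℝ (Fin d) → ℂ,
      Integrable f (μ.withDensity fun x => ENNReal.ofReal ((1 + ‖x‖) ^ m)) →
      Integrable (T f) (μh.withDensity fun ξ => ENNReal.ofReal ((1 + ‖ξ‖) ^ mh)) →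
      ∀ᵐ x ∂μ, f x = ∫ ξ, T f ξ * (starRingEnd ℂ) (K x ξ) ∂μh)
    (S Sh : Set (EuclideanSpace ℝ (Fin d))) (hSmeas : MeasurableSet S) (hShmeas : MeasurableSet Sh)
    (hSsub : S ⊆ Ω) (hShsub : Sh ⊆ Ωh)
    (hSfin : (μ.withDensity fun x => ENNReal.ofReal ((1 + ‖x‖) ^ (2 * m))) S < ⊤) (hShfin : (μh.withDensity fun ξ => ENNReal.ofReal ((1 + ‖ξ‖) ^ (2 * mh))) Sh < ⊤)
    (hsmall : ((μ.withDensity fun x => ENNReal.ofReal ((1 + ‖x‖) ^ (2 * m))) S) * ((μh.withDensity fun ξ => ENNReal.ofReal ((1 + ‖ξ‖) ^ (2 * mh))) Sh) < ENNReal.ofReal (1 / cT ^ 2))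
    (f : EuclideanSpace ℝ (Fin d) → ℂ) (hf : MemLp f 2 μ) :
    (∫⁻ x, (‖f x‖₊ : ℝ≥0∞) ^ 2 ∂μ) ≤
      (ENNReal.ofReal ((1 - cT * Real.sqrt ((((μ.withDensity fun x => ENNReal.ofReal ((1 + ‖x‖) ^ (2 * m))) S) * ((μh.withDensity fun ξ => ENNReal.ofReal ((1 + ‖ξ‖) ^ (2 * mh))) Sh)).toReal)) ^ 2))⁻¹ *
        ((∫⁻ x in Ω \ S, (‖f x‖₊ : ℝ≥0∞) ^ 2 ∂μ) +
          (∫⁻ ξ in Ωh \ Sh, (‖T f ξ‖₊ : ℝ≥0∞) ^ 2 ∂μh)) := by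
  classical
  set WS := (μ.withDensity fun x => ENNReal.ofReal ((1 + ‖x‖) ^ (2 * m))) S with hWSdef
  set WH := (μh.withDensity fun ξ => ENNReal.ofReal ((1 + ‖ξ‖) ^ (2 * mh))) Sh with hWHdef
  have h1x : ∀ x : EuclideanSpace ℝ (Fin d), (0:ℝ) < 1 + ‖x‖ := fun x => by positivity
  -- continuity of weights
  have hcontm : Continuous fun x : EuclideanSpace ℝ (Fin d) => (1 + ‖x‖) ^ m := by
    exact (continuous_const.add continuous_norm).rpow_const (fun x => Or.inr (by positivity))
  have hcont2m : Continuous fun x : EuclideanSpace ℝ (Fin d) => (1 + ‖x‖) ^ (2*m) := by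
    exact (continuous_const.add continuous_norm).rpow_const (fun x => Or.inr (by positivity))
  have hcontmh : Continuous fun x : EuclideanSpace ℝ (Fin d) => (1 + ‖x‖) ^ mh := by
    exact (continuous_const.add continuous_norm).rpow_const (fun x => Or.inr (by positivity))
  have hcont2mh : Continuous fun x : EuclideanSpace ℝ (Fin d) => (1 + ‖x‖) ^ (2*mh) := by
    exact (continuous_const.add continuous_norm).rpow_const (fun x => Or.inr (by positivity))
  have hsq : ∀ x : EuclideanSpace ℝ (Fin d), ((1 + ‖x‖) ^ m)^2 = (1 + ‖x‖) ^ (2*m) := by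
    intro x; rw [sq, ← Real.rpow_add (h1x x), two_mul]
  have hsqh : ∀ x : EuclideanSpace ℝ (Fin d), ((1 + ‖x‖) ^ mh)^2 = (1 + ‖x‖) ^ (2*mh) := by
    intro x; rw [sq, ← Real.rpow_add (h1x x), two_mul]
  set MS := WS.toReal with hMS
  set MH := WH.toReal with hMH
  have hMS0 : 0 ≤ MS := ENNReal.toReal_nonneg
  have hMH0 : 0 ≤ MH := ENNReal.toReal_nonneg
  set δ := cT * Real.sqrt ((WS * WH).toReal) with hδdef
  have hδeq : δ = cT * (Real.sqrt MS * Real.sqrt MH) := by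
    rw [hδdef, ENNReal.toReal_mul, Real.sqrt_mul hMS0]
  have hδ0 : 0 ≤ δ := by rw [hδdef]; positivity
  have hδ1 : δ < 1 := by
    have hfin : WS * WH ≠ ⊤ := ENNReal.mul_ne_top hSfin.ne hShfin.ne
    have ht : (WS * WH).toReal < 1 / cT^2 := by
      have h2 := ENNReal.toReal_strict_mono ENNReal.ofReal_ne_top hsmall
      rwa [ENNReal.toReal_ofReal (by positivity)] at h2
    have hsq2 : Real.sqrt ((WS * WH).toReal) < 1 / cT := by
      have h3 := Real.sqrt_lt_sqrt ENNReal.toReal_nonneg ht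
      rwa [show (1/cT^2 : ℝ) = (1/cT)^2 by ring, Real.sqrt_sq (by positivity)] at h3
    calc δ < cT * (1 / cT) := by
            rw [hδdef]; exact mul_lt_mul_of_pos_left hsq2 hcT
    _ = 1 := by field_simp
  -- weight integrals on S and Sh
  have hWS_lint : ∫⁻ x in S, ENNReal.ofReal ((1 + ‖x‖) ^ (2*m)) ∂μ = WS :=
    (withDensity_apply _ hSmeas).symm
  have hWH_lint : ∫⁻ ξ in Sh, ENNReal.ofReal ((1 + ‖ξ‖) ^ (2*mh)) ∂μh = WH :=
    (withDensity_apply _ hShmeas).symm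
  have hw2int : Integrable (fun x => (1 + ‖x‖) ^ (2*m)) (μ.restrict S) := by
    refine int_of_lint hcont2m.aestronglyMeasurable (fun x => by positivity) ?_
    rw [hWS_lint]; exact hSfin
  have hwh2int : Integrable (fun ξ => (1 + ‖ξ‖) ^ (2*mh)) (μh.restrict Sh) := by
    refine int_of_lint hcont2mh.aestronglyMeasurable (fun x => by positivity) ?_
    rw [hWH_lint]; exact hShfin
  have hSint2 : ∫ x in S, (1 + ‖x‖) ^ (2*m) ∂μ = MS := by
    have h := ofReal_integral_eq_lintegral_ofReal hw2int
      (Filter.Eventually.of_forall fun x => by positivity)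
    rw [hWS_lint] at h
    rw [hMS, ← h, ENNReal.toReal_ofReal (integral_nonneg fun x => by positivity)]
  have hHint2 : ∫ ξ in Sh, (1 + ‖ξ‖) ^ (2*mh) ∂μh = MH := by
    have h := ofReal_integral_eq_lintegral_ofReal hwh2int
      (Filter.Eventually.of_forall fun x => by positivity)
    rw [hWH_lint] at h
    rw [hMH, ← h, ENNReal.toReal_ofReal (integral_nonneg fun x => by positivity)]
  -- the truncated function g
  set g : EuclideanSpace ℝ (Fin d) → ℂ := S.indicator f with hgdef
  have hgmem : MemLp g 2 μ := hf.indicator hSmeas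
  have hnormf2 : Integrable (fun x => ‖f x‖^2) μ := by simpa using hf.norm.integrable_sq
  set N := ∫ x, ‖f x‖^2 ∂μ with hNdef
  set A := ∫ x in Sᶜ, ‖f x‖^2 ∂μ with hAdef
  set B := ∫ ξ in Shᶜ, ‖T f ξ‖^2 ∂μh with hBdef
  set s2 := ∫ x in S, ‖f x‖^2 ∂μ with hs2def
  have hA0 : 0 ≤ A := integral_nonneg fun x => sq_nonneg _
  have hB0 : 0 ≤ B := integral_nonneg fun x => sq_nonneg _
  have hs20 : 0 ≤ s2 := integral_nonneg fun x => sq_nonneg _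
  have hNsplit : N = A + s2 := by
    rw [hNdef, ← integral_add_compl hSmeas hnormf2, ← hs2def, ← hAdef, add_comm]
  have hgind : ∀ x, ‖g x‖^2 = S.indicator (fun x => ‖f x‖^2) x := by
    intro x; by_cases hx : x ∈ S <;> simp [hgdef, hx]
  have hgsq : ∫ x, ‖g x‖^2 ∂μ = s2 := by
    rw [integral_congr_ae (Filter.Eventually.of_forall hgind), integral_indicator hSmeas]
  -- weighted quantities
  have hfnres : MemLp (fun x => ‖f x‖) 2 (μ.restrict S) := (hf.restrict S).norm
  have hwm_mem : MemLp (fun x : EuclideanSpace ℝ (Fin d) => (1 + ‖x‖) ^ m) 2 (μ.restrict S) := by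
    refine memL2_of_lint hcontm.aestronglyMeasurable ?_
    have heq : ∫⁻ x in S, (‖(1 + ‖x‖) ^ m‖₊ : ℝ≥0∞)^2 ∂μ = WS := by
      rw [← hWS_lint]
      refine lintegral_congr fun x => ?_
      rw [← enorm_eq_nnnorm, Real.enorm_eq_ofReal (by positivity), ← ENNReal.ofReal_pow (by positivity), hsq x]
    rw [heq]; exact hSfin
  set C := ∫ x in S, ‖f x‖ * (1 + ‖x‖) ^ m ∂μ with hCdef
  have hC0 : 0 ≤ C := integral_nonneg fun x => by positivity
  have hCS_C : C ≤ Real.sqrt s2 * Real.sqrt MS := by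
    have h := cs_int hfnres hwm_mem
    have h2 : ∫ x in S, ((1 + ‖x‖) ^ m)^2 ∂μ = MS := by
      rw [← hSint2]; exact integral_congr_ae (Filter.Eventually.of_forall fun x => hsq x)
    rw [h2] at h
    exact h
  have hCint : Integrable (fun x => ‖f x‖ * (1 + ‖x‖) ^ m) (μ.restrict S) :=
    mul_int_real hfnres hwm_mem
  have hgw_fun : (fun x => ‖g x‖ * (1 + ‖x‖) ^ m)
      = S.indicator (fun x => ‖f x‖ * (1 + ‖x‖) ^ m) := by
    ext x; by_cases hx : x ∈ S <;> simp [hgdef, hx]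
  have hgw_int : Integrable (fun x => ‖g x‖ * (1 + ‖x‖) ^ m) μ := by
    rw [hgw_fun, integrable_indicator_iff hSmeas]; exact hCint
  have hgw_eq : ∫ x, ‖g x‖ * (1 + ‖x‖) ^ m ∂μ = C := by
    rw [hgw_fun, integral_indicator hSmeas]
  have hgint : Integrable g (μ.withDensity fun x => ENNReal.ofReal ((1 + ‖x‖) ^ m)) := by
    refine (integrable_withDensity_iff_integrable_smul'
      (ENNReal.measurable_ofReal.comp hcontm.measurable)
      (Filter.Eventually.of_forall fun x => ENNReal.ofReal_lt_top)).mpr ?_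
    have int1 : Integrable (fun x => (1 + ‖x‖) ^ m • g x) μ := by
      refine Integrable.mono' hgw_int (hcontm.aestronglyMeasurable.smul hgmem.1) ?_
      refine Filter.Eventually.of_forall fun x => le_of_eq ?_
      rw [norm_smul, Real.norm_eq_abs, abs_of_nonneg (by positivity), mul_comm]
    refine int1.congr (Filter.Eventually.of_forall fun x => ?_)
    simp only [Function.comp_apply]
    rw [ENNReal.toReal_ofReal (by positivity)]
  -- pointwise bound for T g
  have hTgdef : ∀ ξ, T g ξ = ∫ x, g x * K x ξ ∂μ := hTint g hgint
  have hTgbd : ∀ ξ, ‖T g ξ‖ ≤ cT * C * (1 + ‖ξ‖) ^ mh := by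
    intro ξ
    rw [hTgdef ξ]
    refine le_trans (norm_integral_le_integral_norm _) ?_
    have hmono : ∫ x, ‖g x * K x ξ‖ ∂μ
        ≤ ∫ x, (cT * (1 + ‖ξ‖) ^ mh) * (‖g x‖ * (1 + ‖x‖) ^ m) ∂μ := by
      refine integral_mono_of_nonneg (Filter.Eventually.of_forall fun x => norm_nonneg _)
        (hgw_int.const_mul _) (Filter.Eventually.of_forall fun x => ?_)
      show ‖g x * K x ξ‖ ≤ _
      rw [norm_mul]
      calc ‖g x‖ * ‖K x ξ‖ ≤ ‖g x‖ * (cT * (1 + ‖x‖) ^ m * (1 + ‖ξ‖) ^ mh) :=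
            mul_le_mul_of_nonneg_left (hKbound x ξ) (norm_nonneg _)
      _ = (cT * (1 + ‖ξ‖) ^ mh) * (‖g x‖ * (1 + ‖x‖) ^ m) := by ring
    refine le_trans hmono ?_
    rw [integral_const_mul, hgw_eq]
    exact le_of_eq (by ring)
  -- MemLp of T f, T g
  have hTfmem : MemLp (T f) 2 μh :=
    memL2_of_lint (hTmeas f hf) (by rw [hTplan f hf]; exact lint_sq_lt_top hf)
  have hTgmem : MemLp (T g) 2 μh :=
    memL2_of_lint (hTmeas g hgmem) (by rw [hTplan g hgmem]; exact lint_sq_lt_top hgmem)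
  -- real Plancherel
  have hplanR : ∀ u : EuclideanSpace ℝ (Fin d) → ℂ, MemLp u 2 μ → MemLp (T u) 2 μh →
      ∫ ξ, ‖T u ξ‖^2 ∂μh = ∫ x, ‖u x‖^2 ∂μ := by
    intro u hu huT
    have h1 := integral_sq_eq huT
    have h2 := integral_sq_eq hu
    rw [hTplan u hu, ← h2] at h1
    exact (ENNReal.ofReal_eq_ofReal_iff (integral_nonneg fun x => sq_nonneg _)
      (integral_nonneg fun x => sq_nonneg _)).mp h1
  have hPf : ∫ ξ, ‖T f ξ‖^2 ∂μh = N := hplanR f hf hTfmem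
  have hPg : ∫ ξ, ‖T g ξ‖^2 ∂μh = s2 := (hplanR g hgmem hTgmem).trans hgsq
  -- Plancherel for the sum
  have hgfmem : MemLp (g + f) 2 μ := hgmem.add hf
  have hTgfmem : MemLp (T (g + f)) 2 μh :=
    memL2_of_lint (hTmeas _ hgfmem) (by rw [hTplan _ hgfmem]; exact lint_sq_lt_top hgfmem)
  have hsum_ae : T (g + f) =ᵐ[μh] T g + T f := hTadd g f hgmem hf
  have hPsum : ∫ ξ, ‖T g ξ + T f ξ‖^2 ∂μh = ∫ x, ‖g x + f x‖^2 ∂μ := by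
    have e1 : ENNReal.ofReal (∫ ξ, ‖T g ξ + T f ξ‖^2 ∂μh)
        = ∫⁻ ξ, (‖T g ξ + T f ξ‖₊ : ℝ≥0∞)^2 ∂μh := integral_sq_eq (hTgmem.add hTfmem)
    have e2 : ∫⁻ ξ, (‖T g ξ + T f ξ‖₊ : ℝ≥0∞)^2 ∂μh
        = ∫⁻ ξ, (‖T (g + f) ξ‖₊ : ℝ≥0∞)^2 ∂μh := by
      refine lintegral_congr_ae ?_
      filter_upwards [hsum_ae] with ξ hξ
      rw [hξ]; rfl
    have e3 := hTplan (g + f) hgfmem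
    have e4 : ENNReal.ofReal (∫ x, ‖g x + f x‖^2 ∂μ)
        = ∫⁻ x, (‖(g + f) x‖₊ : ℝ≥0∞)^2 ∂μ := integral_sq_eq hgfmem
    have := e1.trans (e2.trans (e3.trans e4.symm))
    exact (ENNReal.ofReal_eq_ofReal_iff (integral_nonneg fun x => sq_nonneg _)
      (integral_nonneg fun x => sq_nonneg _)).mp this
  -- polarization on both sides
  have hpolL := polar hTgmem hTfmem
  have hpolR := polar hgmem hf
  set Z1 := ∫ ξ, ((starRingEnd ℂ) (T g ξ) * T f ξ).re ∂μh with hZ1def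
  set Z2 := ∫ x, ((starRingEnd ℂ) (g x) * f x).re ∂μ with hZ2def
  have hZeq : Z1 = Z2 := by
    rw [hPsum] at hpolL
    rw [hpolR] at hpolL
    rw [hPg, hPf, hgsq, ← hNdef] at hpolL
    linarith
  have hZ2val : Z2 = s2 := by
    have hpt : ∀ x, ((starRingEnd ℂ) (g x) * f x).re = S.indicator (fun x => ‖f x‖^2) x := by
      intro x
      by_cases hx : x ∈ S
      · simp only [hgdef, Set.indicator_of_mem hx]
        rw [mul_comm, Complex.mul_conj]
        simp [Complex.normSq_eq_norm_sq, sq]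
      · simp [hgdef, hx]
    rw [hZ2def, integral_congr_ae (Filter.Eventually.of_forall hpt), integral_indicator hSmeas]
  -- split Z1 over Sh
  have hZ1int : Integrable (fun ξ => ((starRingEnd ℂ) (T g ξ) * T f ξ).re) μh :=
    (mul_int_cplx hTgmem hTfmem).re
  set I1 := ∫ ξ in Sh, ((starRingEnd ℂ) (T g ξ) * T f ξ).re ∂μh with hI1def
  set I2 := ∫ ξ in Shᶜ, ((starRingEnd ℂ) (T g ξ) * T f ξ).re ∂μh with hI2def
  have hZsplit : Z1 = I1 + I2 := (integral_add_compl hShmeas hZ1int).symm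
  -- bound on ∫_Sh ‖Tg‖²
  have hTgSh : ∫ ξ in Sh, ‖T g ξ‖^2 ∂μh ≤ (cT * C)^2 * MH := by
    have hmono : ∫ ξ in Sh, ‖T g ξ‖^2 ∂μh
        ≤ ∫ ξ in Sh, (cT * C)^2 * (1 + ‖ξ‖) ^ (2*mh) ∂μh := by
      refine integral_mono_of_nonneg (Filter.Eventually.of_forall fun ξ => sq_nonneg _)
        (hwh2int.const_mul _) (Filter.Eventually.of_forall fun ξ => ?_)
      have h := pow_le_pow_left₀ (norm_nonneg _) (hTgbd ξ) 2
      calc ‖T g ξ‖^2 ≤ (cT * C * (1 + ‖ξ‖) ^ mh)^2 := h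
      _ = (cT * C)^2 * ((1 + ‖ξ‖) ^ mh)^2 := by ring
      _ = (cT * C)^2 * (1 + ‖ξ‖) ^ (2*mh) := by rw [hsqh]
    rw [integral_const_mul, hHint2] at hmono
    exact hmono
  -- norm-square integrals on restricted measures
  have hTfsq_int : Integrable (fun ξ => ‖T f ξ‖^2) μh := by simpa using hTfmem.norm.integrable_sq
  have hTgsq_int : Integrable (fun ξ => ‖T g ξ‖^2) μh := by simpa using hTgmem.norm.integrable_sq
  have hTfSh_le : ∫ ξ in Sh, ‖T f ξ‖^2 ∂μh ≤ N := by
    rw [← hPf]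
    exact setIntegral_le_integral hTfsq_int (Filter.Eventually.of_forall fun ξ => sq_nonneg _)
  have hTgShc_le : ∫ ξ in Shᶜ, ‖T g ξ‖^2 ∂μh ≤ s2 := by
    rw [← hPg]
    exact setIntegral_le_integral hTgsq_int (Filter.Eventually.of_forall fun ξ => sq_nonneg _)
  have hSh_nn : 0 ≤ ∫ ξ in Sh, ‖T g ξ‖^2 ∂μh := integral_nonneg fun ξ => sq_nonneg _
  -- Cauchy-Schwarz bounds for I1 and I2
  have hre_le : ∀ ξ, ((starRingEnd ℂ) (T g ξ) * T f ξ).re ≤ ‖T g ξ‖ * ‖T f ξ‖ := by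
    intro ξ
    calc ((starRingEnd ℂ) (T g ξ) * T f ξ).re ≤ ‖(starRingEnd ℂ) (T g ξ) * T f ξ‖ :=
          Complex.re_le_norm _
    _ = ‖T g ξ‖ * ‖T f ξ‖ := by
        rw [norm_mul, RCLike.norm_conj]
  have hIbound : ∀ s : Set (EuclideanSpace ℝ (Fin d)), MeasurableSet s →
      ∫ ξ in s, ((starRingEnd ℂ) (T g ξ) * T f ξ).re ∂μh
        ≤ Real.sqrt (∫ ξ in s, ‖T g ξ‖^2 ∂μh) * Real.sqrt (∫ ξ in s, ‖T f ξ‖^2 ∂μh) := by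
    intro s hs
    have step1 : ∫ ξ in s, ((starRingEnd ℂ) (T g ξ) * T f ξ).re ∂μh
        ≤ ∫ ξ in s, ‖T g ξ‖ * ‖T f ξ‖ ∂μh := by
      refine integral_mono hZ1int.integrableOn
        (mul_int_real (hTgmem.restrict s).norm (hTfmem.restrict s).norm) fun ξ => hre_le ξ
    exact step1.trans (cs_int (hTgmem.restrict s).norm (hTfmem.restrict s).norm)
  have hI1bd : I1 ≤ δ * Real.sqrt s2 * Real.sqrt N := by
    have h := hIbound Sh hShmeas
    have hb1 : Real.sqrt (∫ ξ in Sh, ‖T g ξ‖^2 ∂μh) ≤ cT * C * Real.sqrt MH := by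
      have := Real.sqrt_le_sqrt hTgSh
      rwa [Real.sqrt_mul (sq_nonneg _), Real.sqrt_sq (mul_nonneg hcT.le hC0)] at this
    have hb2 : Real.sqrt (∫ ξ in Sh, ‖T f ξ‖^2 ∂μh) ≤ Real.sqrt N :=
      Real.sqrt_le_sqrt hTfSh_le
    have hmul : Real.sqrt (∫ ξ in Sh, ‖T g ξ‖^2 ∂μh) * Real.sqrt (∫ ξ in Sh, ‖T f ξ‖^2 ∂μh)
        ≤ (cT * C * Real.sqrt MH) * Real.sqrt N :=
      mul_le_mul hb1 hb2 (Real.sqrt_nonneg _) (mul_nonneg (mul_nonneg hcT.le hC0) (Real.sqrt_nonneg _))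
    have hCmul : cT * C * Real.sqrt MH * Real.sqrt N
        ≤ cT * (Real.sqrt s2 * Real.sqrt MS) * Real.sqrt MH * Real.sqrt N := by
      have : cT * C ≤ cT * (Real.sqrt s2 * Real.sqrt MS) :=
        mul_le_mul_of_nonneg_left hCS_C hcT.le
      have h2 : cT * C * Real.sqrt MH ≤ cT * (Real.sqrt s2 * Real.sqrt MS) * Real.sqrt MH :=
        mul_le_mul_of_nonneg_right this (Real.sqrt_nonneg _)
      exact mul_le_mul_of_nonneg_right h2 (Real.sqrt_nonneg _)
    have : I1 ≤ cT * (Real.sqrt s2 * Real.sqrt MS) * Real.sqrt MH * Real.sqrt N :=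
      le_trans h (le_trans hmul hCmul)
    refine le_trans this (le_of_eq ?_)
    rw [hδeq]; ring
  have hI2bd : I2 ≤ Real.sqrt s2 * Real.sqrt B := by
    have h := hIbound Shᶜ hShmeas.compl
    have hb1 : Real.sqrt (∫ ξ in Shᶜ, ‖T g ξ‖^2 ∂μh) ≤ Real.sqrt s2 :=
      Real.sqrt_le_sqrt hTgShc_le
    have hmul : Real.sqrt (∫ ξ in Shᶜ, ‖T g ξ‖^2 ∂μh) * Real.sqrt (∫ ξ in Shᶜ, ‖T f ξ‖^2 ∂μh)
        ≤ Real.sqrt s2 * Real.sqrt B :=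
      mul_le_mul hb1 (le_of_eq rfl) (Real.sqrt_nonneg _) (Real.sqrt_nonneg _)
    exact le_trans h hmul
  -- the key inequality
  have hkey : (Real.sqrt s2)^2 ≤ δ * Real.sqrt s2 * Real.sqrt N + Real.sqrt s2 * Real.sqrt B := by
    rw [Real.sq_sqrt hs20]
    have : s2 = I1 + I2 := by rw [← hZsplit, hZeq, hZ2val]
    linarith [hI1bd, hI2bd]
  have hfinalR : N ≤ (A + B) / (1 - δ)^2 :=
    key_arith A B N (Real.sqrt s2) δ hA0 hB0 (Real.sqrt_nonneg _) hδ0 hδ1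
      (by rw [Real.sq_sqrt hs20]; exact hNsplit) hkey
  -- ENNReal endgame
  have hset1 : (Ω \ S : Set (EuclideanSpace ℝ (Fin d))) =ᵐ[μ] (Sᶜ : Set (EuclideanSpace ℝ (Fin d))) := by
    rw [MeasureTheory.ae_eq_set]
    constructor
    · have : (Ω \ S) \ Sᶜ = ∅ := by ext x; simp
      rw [this]; exact measure_empty
    · refine measure_mono_null ?_ hμΩ
      intro x hx
      simp only [Set.mem_diff, Set.mem_compl_iff] at hx ⊢
      tauto
  have hset2 : (Ωh \ Sh : Set (EuclideanSpace ℝ (Fin d))) =ᵐ[μh] (Shᶜ : Set (EuclideanSpace ℝ (Fin d))) := by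
    rw [MeasureTheory.ae_eq_set]
    constructor
    · have : (Ωh \ Sh) \ Shᶜ = ∅ := by ext x; simp
      rw [this]; exact measure_empty
    · refine measure_mono_null ?_ hμhΩ
      intro x hx
      simp only [Set.mem_diff, Set.mem_compl_iff] at hx ⊢
      tauto
  have hL0 : ∫⁻ x, (‖f x‖₊ : ℝ≥0∞)^2 ∂μ = ENNReal.ofReal N := (integral_sq_eq hf).symm
  have hL1 : ∫⁻ x in Ω \ S, (‖f x‖₊ : ℝ≥0∞)^2 ∂μ = ENNReal.ofReal A := by
    rw [Measure.restrict_congr_set hset1]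
    exact (integral_sq_eq (hf.restrict Sᶜ)).symm
  have hL2 : ∫⁻ ξ in Ωh \ Sh, (‖T f ξ‖₊ : ℝ≥0∞)^2 ∂μh = ENNReal.ofReal B := by
    rw [Measure.restrict_congr_set hset2]
    exact (integral_sq_eq (hTfmem.restrict Shᶜ)).symm
  rw [hL0, hL1, hL2]
  have h1δ : (0:ℝ) < (1 - δ)^2 := by
    have : (0:ℝ) < 1 - δ := by linarith
    positivity
  rw [← ENNReal.ofReal_add hA0 hB0, ← ENNReal.ofReal_inv_of_pos h1δ,
    ← ENNReal.ofReal_mul (by positivity)]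
  refine ENNReal.ofReal_le_ofReal ?_
  have heq : ((1 - δ)^2)⁻¹ * (A + B) = (A + B) / (1 - δ)^2 := by ring
  rw [heq]
  exact hfinalR
end

section
/- Let S ⊂ Ω and Σ ⊂ Ω̂ be measurable subsets with μ_{2m}(S) < ∞ and μ̂_{2m̂}(Σ) < ∞. Let E_S f = χ_S f and F_Σ = T^{−1} E_Σ T, both acting on L²(Ω, μ). Then E_S F_Σ is a Hilbert–Schmidt operator and its Hilbert–Schmidt norm is at most c_T √(μ_{2m}(S) μ̂_{2m̂}(Σ)); equivalently, for every orthonormal family (e_i)_{i∈I} in L²(Ω, μ), Σ_{i∈I} ‖E_S F_Σ e_i‖²_{L²(Ω,μ)} ≤ c_T² μ_{2m}(S) μ̂_{2m̂}(Σ). -/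
open MeasureTheory
open scoped ENNReal NNReal

section helpers

variable {α : Type*} [MeasurableSpace α] {ν : Measure α} {E : Type*} [NormedAddCommGroup E]

lemma eLpNorm_two_eq (f : α → E) :
    eLpNorm f 2 ν = (∫⁻ x, (‖f x‖₊ : ℝ≥0∞) ^ 2 ∂ν) ^ (1/2 : ℝ) := by
  have h2 : (2:ℝ≥0∞).toReal = 2 := by norm_num
  rw [eLpNorm_eq_lintegral_rpow_enorm_toReal two_ne_zero ENNReal.ofNat_ne_top, h2]
  congr 1
  refine lintegral_congr fun x => ?_
  rw [show ((2:ℝ)) = ((2:ℕ):ℝ) by norm_num, ENNReal.rpow_natCast, enorm_eq_nnnorm]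

lemma memL2_iff {f : α → E} :
    MemLp f 2 ν ↔ AEStronglyMeasurable f ν ∧ ∫⁻ x, (‖f x‖₊ : ℝ≥0∞) ^ 2 ∂ν < ∞ := by
  constructor
  · rintro ⟨h1, h2⟩
    refine ⟨h1, ?_⟩
    rw [eLpNorm_two_eq] at h2
    by_contra hc
    rw [not_lt, top_le_iff] at hc
    rw [hc] at h2
    simp [ENNReal.top_rpow_of_pos] at h2
  · rintro ⟨h1, h2⟩
    refine ⟨h1, ?_⟩
    rw [eLpNorm_two_eq]
    exact ENNReal.rpow_lt_top_of_nonneg (by norm_num) h2.ne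

lemma sq_eLpNorm_two (f : α → E) :
    (eLpNorm f 2 ν) ^ (2:ℕ) = ∫⁻ x, (‖f x‖₊ : ℝ≥0∞) ^ 2 ∂ν := by
  rw [eLpNorm_two_eq, ← ENNReal.rpow_natCast _ 2, ← ENNReal.rpow_mul]
  norm_num

lemma nnnorm_sq_eq_ofReal {E : Type*} [NormedAddCommGroup E] (z : E) : (‖z‖₊ : ℝ≥0∞) ^ 2 = ENNReal.ofReal (‖z‖ ^ 2) := by
  rw [ENNReal.ofReal_pow (norm_nonneg z), ofReal_norm, enorm_eq_nnnorm]

lemma rpow_sq_two_mul {b : ℝ} (hb : 0 < b) (r : ℝ) : (b ^ r) ^ 2 = b ^ (2 * r) := by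
  rw [sq, ← Real.rpow_add hb, two_mul]

end helpers

theorem stmt_7
    (d : ℕ) (hd : 1 ≤ d) (a m mh cT : ℝ)
    (ha : 0 < a) (hm : 0 ≤ m) (hmh : 0 ≤ mh) (hcT : 0 < cT)
    (Ω Ωh : Set (EuclideanSpace ℝ (Fin d)))
    (hΩconv : Convex ℝ Ω)
    (hΩcone : ∀ l : ℝ, 0 < l → ∀ x ∈ Ω, l • x ∈ Ω)
    (hΩint : (interior Ω).Nonempty)
    (hΩhconv : Convex ℝ Ωh)
    (hΩhcone : ∀ l : ℝ, 0 < l → ∀ ξ ∈ Ωh, l • ξ ∈ Ωh)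
    (hΩhint : (interior Ωh).Nonempty)
    (μ μh : Measure (EuclideanSpace ℝ (Fin d)))
    (hμac : μ ≪ volume) (hμhac : μh ≪ volume)
    (hμΩ : μ Ωᶜ = 0) (hμhΩ : μh Ωhᶜ = 0)
    (hμhom : ∀ l : ℝ, 0 < l →
      Measure.map (fun x => l⁻¹ • x) μ = (ENNReal.ofReal (l ^ (2 * a))) • μ)
    (hμhhom : ∀ l : ℝ, 0 < l →
      Measure.map (fun ξ => l⁻¹ • ξ) μh = (ENNReal.ofReal (l ^ (2 * a))) • μh)
    (K : EuclideanSpace ℝ (Fin d) → EuclideanSpace ℝ (Fin d) → ℂ)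
    (hKcont : ContinuousOn (fun p => K p.1 p.2) (Ω ×ˢ Ωh))
    (hKbound : ∀ x ξ, ‖K x ξ‖ ≤ cT * (1 + ‖x‖) ^ m * (1 + ‖ξ‖) ^ mh)
    (hKhom : ∀ l : ℝ, 0 < l → ∀ x ξ, K (l • x) ξ = K x (l • ξ))
    (T : (EuclideanSpace ℝ (Fin d) → ℂ) → EuclideanSpace ℝ (Fin d) → ℂ)
    (hTint : ∀ f : EuclideanSpace ℝ (Fin d) → ℂ,
      Integrable f (μ.withDensity fun x => ENNReal.ofReal ((1 + ‖x‖) ^ m)) →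
      ∀ ξ, T f ξ = ∫ x, f x * K x ξ ∂μ)
    (hTmeas : ∀ f : EuclideanSpace ℝ (Fin d) → ℂ, MemLp f 2 μ → AEStronglyMeasurable (T f) μh)
    (hTadd : ∀ f g : EuclideanSpace ℝ (Fin d) → ℂ, MemLp f 2 μ → MemLp g 2 μ → T (f + g) =ᵐ[μh] T f + T g)
    (hTsmul : ∀ (c : ℂ) (f : EuclideanSpace ℝ (Fin d) → ℂ), MemLp f 2 μ → T (c • f) =ᵐ[μh] c • T f)
    (hTplan : ∀ f : EuclideanSpace ℝ (Fin d) → ℂ, MemLp f 2 μ →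
      ∫⁻ ξ, (‖T f ξ‖₊ : ℝ≥0∞) ^ 2 ∂μh = ∫⁻ x, (‖f x‖₊ : ℝ≥0∞) ^ 2 ∂μ)
    (hTsurj : ∀ g : EuclideanSpace ℝ (Fin d) → ℂ, MemLp g 2 μh → ∃ f : EuclideanSpace ℝ (Fin d) → ℂ, MemLp f 2 μ ∧ T f =ᵐ[μh] g)
    (hTinv : ∀ f : EuclideanSpace ℝ (Fin d) → ℂ,
      Integrable f (μ.withDensity fun x => ENNReal.ofReal ((1 + ‖x‖) ^ m)) →
      Integrable (T f) (μh.withDensity fun ξ => ENNReal.ofReal ((1 + ‖ξ‖) ^ mh)) →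
      ∀ᵐ x ∂μ, f x = ∫ ξ, T f ξ * (starRingEnd ℂ) (K x ξ) ∂μh)
    (Ti : (EuclideanSpace ℝ (Fin d) → ℂ) → EuclideanSpace ℝ (Fin d) → ℂ)
    (hTi1 : ∀ g : EuclideanSpace ℝ (Fin d) → ℂ, MemLp g 2 μh → MemLp (Ti g) 2 μ ∧ T (Ti g) =ᵐ[μh] g)
    (hTi2 : ∀ f : EuclideanSpace ℝ (Fin d) → ℂ, MemLp f 2 μ → Ti (T f) =ᵐ[μ] f)
    (S Sh : Set (EuclideanSpace ℝ (Fin d))) (hSmeas : MeasurableSet S) (hShmeas : MeasurableSet Sh)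
    (hSsub : S ⊆ Ω) (hShsub : Sh ⊆ Ωh)
    (hSfin : (μ.withDensity fun x => ENNReal.ofReal ((1 + ‖x‖) ^ (2 * m))) S < ⊤) (hShfin : (μh.withDensity fun ξ => ENNReal.ofReal ((1 + ‖ξ‖) ^ (2 * mh))) Sh < ⊤)
    (ι : Type) [DecidableEq ι] (e : ι → EuclideanSpace ℝ (Fin d) → ℂ)
    (heL2 : ∀ i, MemLp (e i) 2 μ)
    (horth : ∀ i j, (∫ x, e i x * (starRingEnd ℂ) (e j x) ∂μ) = if i = j then 1 else 0) :
    (∑' i : ι, ∫⁻ x, (‖S.indicator (Ti (Sh.indicator (T (e i)))) x‖₊ : ℝ≥0∞) ^ 2 ∂μ) ≤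
      ENNReal.ofReal (cT ^ 2) * ((μ.withDensity fun x => ENNReal.ofReal ((1 + ‖x‖) ^ (2 * m))) S) * ((μh.withDensity fun ξ => ENNReal.ofReal ((1 + ‖ξ‖) ^ (2 * mh))) Sh) := by
  classical
  set MS := (μ.withDensity fun x => ENNReal.ofReal ((1 + ‖x‖) ^ (2 * m))) S with hMSdef
  set MSh := (μh.withDensity fun ξ => ENNReal.ofReal ((1 + ‖ξ‖) ^ (2 * mh))) Sh with hMShdef
  -- elementary facts about the densities
  have hone : ∀ x : EuclideanSpace ℝ (Fin d), (1:ℝ) ≤ 1 + ‖x‖ := fun x => by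
    have := norm_nonneg x; linarith
  have hbase : ∀ x : EuclideanSpace ℝ (Fin d), (0:ℝ) < 1 + ‖x‖ := fun x =>
    lt_of_lt_of_le one_pos (hone x)
  have hd_le : ∀ (r : ℝ), 0 ≤ r → ∀ x : EuclideanSpace ℝ (Fin d),
      ENNReal.ofReal ((1 + ‖x‖) ^ r) ≤ ENNReal.ofReal ((1 + ‖x‖) ^ (2 * r)) := fun r hr x =>
    ENNReal.ofReal_le_ofReal (Real.rpow_le_rpow_of_exponent_le (hone x) (by linarith))
  have hone_le_d : ∀ (r : ℝ), 0 ≤ r → ∀ x : EuclideanSpace ℝ (Fin d),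
      (1:ℝ≥0∞) ≤ ENNReal.ofReal ((1 + ‖x‖) ^ (2 * r)) := by
    intro r hr x
    have h0 : (1:ℝ) ≤ (1 + ‖x‖) ^ (2 * r) := by
      have := Real.rpow_le_rpow_of_exponent_le (hone x) (by linarith : (0:ℝ) ≤ 2 * r)
      rwa [Real.rpow_zero] at this
    calc (1:ℝ≥0∞) = ENNReal.ofReal 1 := by simp
      _ ≤ _ := ENNReal.ofReal_le_ofReal h0
  have hMSlint : MS = ∫⁻ x in S, ENNReal.ofReal ((1 + ‖x‖) ^ (2 * m)) ∂μ :=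
    withDensity_apply _ hSmeas
  have hMShlint : MSh = ∫⁻ ξ in Sh, ENNReal.ofReal ((1 + ‖ξ‖) ^ (2 * mh)) ∂μh :=
    withDensity_apply _ hShmeas
  have hμS : μ S < ∞ := by
    have h1 : μ S = ∫⁻ _ in S, (1:ℝ≥0∞) ∂μ := (setLIntegral_one S).symm
    have h2 : ∫⁻ _ in S, (1:ℝ≥0∞) ∂μ ≤ ∫⁻ x in S, ENNReal.ofReal ((1 + ‖x‖) ^ (2 * m)) ∂μ :=
      lintegral_mono fun x => hone_le_d m hm x
    rw [h1]
    exact lt_of_le_of_lt (h2.trans_eq hMSlint.symm) hSfin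
  have hμSh : μh Sh < ∞ := by
    have h1 : μh Sh = ∫⁻ _ in Sh, (1:ℝ≥0∞) ∂μh := (setLIntegral_one Sh).symm
    have h2 : ∫⁻ _ in Sh, (1:ℝ≥0∞) ∂μh ≤ ∫⁻ ξ in Sh, ENNReal.ofReal ((1 + ‖ξ‖) ^ (2 * mh)) ∂μh :=
      lintegral_mono fun ξ => hone_le_d mh hmh ξ
    rw [h1]
    exact lt_of_le_of_lt (h2.trans_eq hMShlint.symm) hShfin
  have hSm : ∀ B : Set (EuclideanSpace ℝ (Fin d)), B ⊆ S →
      ∫⁻ x in B, ENNReal.ofReal ((1 + ‖x‖) ^ m) ∂μ < ∞ := by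
    intro B hBS
    calc ∫⁻ x in B, ENNReal.ofReal ((1 + ‖x‖) ^ m) ∂μ
        ≤ ∫⁻ x in B, ENNReal.ofReal ((1 + ‖x‖) ^ (2 * m)) ∂μ :=
          lintegral_mono fun x => hd_le m hm x
      _ ≤ ∫⁻ x in S, ENNReal.ofReal ((1 + ‖x‖) ^ (2 * m)) ∂μ :=
          lintegral_mono' (Measure.restrict_mono hBS le_rfl) le_rfl
      _ = MS := hMSlint.symm
      _ < ∞ := hSfin
  have hμB : ∀ B : Set (EuclideanSpace ℝ (Fin d)), B ⊆ S → μ B < ∞ := fun B hBS =>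
    lt_of_le_of_lt (measure_mono hBS) hμS
  -- a.e. membership in the interiors
  have hIntNull : ∀ (ν : Measure (EuclideanSpace ℝ (Fin d))) (W : Set (EuclideanSpace ℝ (Fin d))),
      ν ≪ volume → ν Wᶜ = 0 → Convex ℝ W → ν (interior W)ᶜ = 0 := by
    intro ν W hac hW hconv
    have hfr : ν (frontier W) = 0 := hac (hconv.addHaar_frontier volume)
    have hsub : (interior W)ᶜ ⊆ Wᶜ ∪ frontier W := by
      intro x hx
      by_cases hxW : x ∈ W
      · exact Or.inr ⟨subset_closure hxW, hx⟩
      · exact Or.inl hxW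
    exact measure_mono_null hsub (measure_union_null hW hfr)
  have hΩnull : μ (interior Ω)ᶜ = 0 := hIntNull μ Ω hμac hμΩ hΩconv
  have hΩhnull : μh (interior Ωh)ᶜ = 0 := hIntNull μh Ωh hμhac hμhΩ hΩhconv
  have hΩhae : ∀ᵐ ξ ∂μh, ξ ∈ interior Ωh := by
    rw [ae_iff]
    exact hΩhnull
  -- measurability of the kernel in the second variable
  have hKx : ∀ x, x ∈ Ω → AEStronglyMeasurable (fun ξ => K x ξ) μh := by
    intro x hx
    have hcont : ContinuousOn (fun ξ => K x ξ) (interior Ωh) := by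
      have h1 : ContinuousOn (fun ξ : EuclideanSpace ℝ (Fin d) => ((x, ξ) : _ × _)) Ωh :=
        (Continuous.prodMk_right x).continuousOn
      exact (hKcont.comp h1 fun ξ hξ => Set.mk_mem_prod hx hξ).mono interior_subset
    have h2 := hcont.aestronglyMeasurable (μ := μh) isOpen_interior.measurableSet
    rwa [Measure.restrict_eq_self_of_ae_mem hΩhae] at h2
  -- L² mapping property of T
  have hmemT : ∀ f : EuclideanSpace ℝ (Fin d) → ℂ, MemLp f 2 μ → MemLp (T f) 2 μh := by
    intro f hf
    refine memL2_iff.2 ⟨hTmeas f hf, ?_⟩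
    rw [hTplan f hf]
    exact (memL2_iff.1 hf).2
  -- T respects a.e. equality
  have hTcongr : ∀ f g : EuclideanSpace ℝ (Fin d) → ℂ, MemLp f 2 μ → f =ᵐ[μ] g →
      T f =ᵐ[μh] T g := by
    intro f g hf hfg
    have hg : MemLp g 2 μ := hf.ae_eq hfg
    have hsub : MemLp (fun x => g x - f x) 2 μ := hg.sub hf
    have h1 : (fun x => g x - f x) + f = g := by funext x; simp
    have hplus := hTadd _ f hsub hf
    rw [h1] at hplus
    have h0 : T (fun x => g x - f x) =ᵐ[μh] 0 := by
      have hz : ∫⁻ ξ, (‖T (fun x => g x - f x) ξ‖₊ : ℝ≥0∞) ^ 2 ∂μh = 0 := by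
        rw [hTplan _ hsub]
        have hc : ∀ᵐ x ∂μ, (‖g x - f x‖₊ : ℝ≥0∞) ^ 2 = (fun _ => (0:ℝ≥0∞)) x := by
          filter_upwards [hfg] with x hx; simp [hx]
        rw [lintegral_congr_ae hc, lintegral_zero]
      have hmm : AEMeasurable (fun ξ => (‖T (fun x => g x - f x) ξ‖₊ : ℝ≥0∞) ^ 2) μh :=
        (hTmeas _ hsub).enorm.pow_const 2
      have h3 := (lintegral_eq_zero_iff' hmm).1 hz
      filter_upwards [h3] with ξ hξ
      have h4 : (‖T (fun x => g x - f x) ξ‖₊ : ℝ≥0∞) ^ 2 = 0 := hξ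
      simpa using h4
    calc T f =ᵐ[μh] T (fun x => g x - f x) + T f := by
          filter_upwards [h0] with ξ hξ
          simp [Pi.add_apply, hξ]
      _ =ᵐ[μh] T g := hplus.symm
  -- the unitary operator induced by T on L²
  obtain ⟨U, hU⟩ : ∃ U : Lp ℂ 2 μ →ₗᵢ[ℂ] Lp ℂ 2 μh,
      ∀ (f : EuclideanSpace ℝ (Fin d) → ℂ) (hf : MemLp f 2 μ),
        U (hf.toLp f) = (hmemT f hf).toLp (T f) := by
    have hTc : ∀ F : Lp ℂ 2 μ, MemLp (T F) 2 μh := fun F => hmemT _ (Lp.memLp F)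
    refine ⟨⟨⟨⟨fun F => (hTc F).toLp (T F), ?_⟩, ?_⟩, ?_⟩, ?_⟩
    · intro F G
      simp only []
      rw [← MemLp.toLp_add (hTc F) (hTc G)]
      refine MemLp.toLp_congr _ _ ?_
      calc T (⇑(F + G)) =ᵐ[μh] T (⇑F + ⇑G) :=
            hTcongr _ _ (Lp.memLp (F + G)) (Lp.coeFn_add F G)
        _ =ᵐ[μh] T ⇑F + T ⇑G := hTadd _ _ (Lp.memLp F) (Lp.memLp G)
    · intro c F
      simp only [RingHom.id_apply]
      rw [← MemLp.toLp_const_smul c (hTc F)]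
      refine MemLp.toLp_congr _ _ ?_
      calc T (⇑(c • F)) =ᵐ[μh] T (c • ⇑F) :=
            hTcongr _ _ (Lp.memLp (c • F)) (Lp.coeFn_smul c F)
        _ =ᵐ[μh] c • T ⇑F := hTsmul c _ (Lp.memLp F)
    · intro F
      show ‖(hTc F).toLp (T ⇑F)‖ = ‖F‖
      rw [Lp.norm_toLp, Lp.norm_def]
      congr 1
      rw [eLpNorm_two_eq, eLpNorm_two_eq, hTplan _ (Lp.memLp F)]
    · intro f hf
      show (hTc (hf.toLp f)).toLp (T ⇑(hf.toLp f)) = (hmemT f hf).toLp (T f)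
      exact MemLp.toLp_congr _ _ (hTcongr _ _ (Lp.memLp _) hf.coeFn_toLp)
  -- unitarity: inner products are preserved
  have hinner : ∀ (f g : EuclideanSpace ℝ (Fin d) → ℂ), MemLp f 2 μ → MemLp g 2 μ →
      ∫ ξ, (starRingEnd ℂ) (T f ξ) * T g ξ ∂μh = ∫ x, (starRingEnd ℂ) (f x) * g x ∂μ := by
    intro f g hf hg
    have h1 := U.inner_map_map (hf.toLp f) (hg.toLp g)
    rw [hU f hf, hU g hg, L2.inner_def, L2.inner_def] at h1
    have h2 : ∫ ξ, (inner ℂ ((hmemT f hf).toLp (T f) ξ) ((hmemT g hg).toLp (T g) ξ) : ℂ) ∂μh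
        = ∫ ξ, (starRingEnd ℂ) (T f ξ) * T g ξ ∂μh := by
      refine integral_congr_ae ?_
      filter_upwards [MemLp.coeFn_toLp (hmemT f hf), MemLp.coeFn_toLp (hmemT g hg)] with ξ hξ1 hξ2
      rw [hξ1, hξ2, RCLike.inner_apply']
    have h3 : ∫ x, (inner ℂ (hf.toLp f x) (hg.toLp g x) : ℂ) ∂μ
        = ∫ x, (starRingEnd ℂ) (f x) * g x ∂μ := by
      refine integral_congr_ae ?_
      filter_upwards [MemLp.coeFn_toLp hf, MemLp.coeFn_toLp hg] with x hx1 hx2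
      rw [hx1, hx2, RCLike.inner_apply']
    rw [h2, h3] at h1
    exact h1
  -- orthonormality in Lp
  have hONbasis : Orthonormal ℂ (fun i => (heL2 i).toLp (e i)) := by
    rw [orthonormal_iff_ite]
    intro i j
    have h2 : (inner ℂ ((heL2 i).toLp (e i)) ((heL2 j).toLp (e j)) : ℂ)
        = ∫ x, (starRingEnd ℂ) (e i x) * e j x ∂μ := by
      rw [L2.inner_def]
      refine integral_congr_ae ?_
      filter_upwards [MemLp.coeFn_toLp (heL2 i), MemLp.coeFn_toLp (heL2 j)] with x hx1 hx2
      rw [hx1, hx2, RCLike.inner_apply']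
    have h3 : ∫ x, (starRingEnd ℂ) (e i x) * e j x ∂μ
        = (starRingEnd ℂ) (∫ x, e i x * (starRingEnd ℂ) (e j x) ∂μ) := by
      rw [← integral_conj]
      refine integral_congr_ae (Filter.Eventually.of_forall fun x => ?_)
      simp [map_mul, mul_comm]
    rw [h2, h3, horth i j]
    by_cases hij : i = j <;> simp [hij]
  -- finiteness instances
  haveI hfinSh : IsFiniteMeasure (μh.restrict Sh) :=
    ⟨by rw [Measure.restrict_apply_univ]; exact hμSh⟩
  haveI hfinS : IsFiniteMeasure (μ.restrict S) :=
    ⟨by rw [Measure.restrict_apply_univ]; exact hμS⟩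
  have hTei : ∀ i, MemLp (T (e i)) 2 μh := fun i => hmemT _ (heL2 i)
  -- the weight is square integrable on Sh
  have hwSh : MemLp (fun ξ : EuclideanSpace ℝ (Fin d) => (1 + ‖ξ‖) ^ mh) 2 (μh.restrict Sh) := by
    have hwcont : Continuous (fun ξ : EuclideanSpace ℝ (Fin d) => (1 + ‖ξ‖) ^ mh) :=
      (continuous_const.add continuous_norm).rpow_const fun ξ => Or.inr hmh
    refine memL2_iff.2 ⟨hwcont.aestronglyMeasurable (μ := μh.restrict Sh), ?_⟩
    have heq : ∀ ξ : EuclideanSpace ℝ (Fin d), (‖(1 + ‖ξ‖) ^ mh‖₊ : ℝ≥0∞) ^ 2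
        = ENNReal.ofReal ((1 + ‖ξ‖) ^ (2 * mh)) := by
      intro ξ
      rw [nnnorm_sq_eq_ofReal, Real.norm_of_nonneg (Real.rpow_nonneg (hbase ξ).le mh),
        rpow_sq_two_mul (hbase ξ)]
    rw [lintegral_congr heq, ← hMShlint]
    exact hShfin
  have hψ : ∀ i, Integrable (fun ξ => ‖T (e i) ξ‖ * (1 + ‖ξ‖) ^ mh) (μh.restrict Sh) := by
    intro i
    have h1 : MemLp (fun ξ => ‖T (e i) ξ‖) 2 (μh.restrict Sh) := ((hTei i).restrict Sh).norm
    have h2 : MemLp ((fun ξ => ‖T (e i) ξ‖) • (fun ξ : EuclideanSpace ℝ (Fin d) => (1 + ‖ξ‖) ^ mh))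
        1 (μh.restrict Sh) := hwSh.smul h1
    have h3 := memLp_one_iff_integrable.1 h2
    simpa [Pi.smul_apply, smul_eq_mul, Pi.mul_def] using h3
  have hφint : ∀ B : Set (EuclideanSpace ℝ (Fin d)), B ⊆ S →
      Integrable (fun x => cT * (1 + ‖x‖) ^ m) (μ.restrict B) := by
    intro B hBS
    have hcont : Continuous (fun x : EuclideanSpace ℝ (Fin d) => cT * (1 + ‖x‖) ^ m) :=
      continuous_const.mul ((continuous_const.add continuous_norm).rpow_const fun x => Or.inr hm)
    refine ⟨hcont.aestronglyMeasurable (μ := μ.restrict B), ?_⟩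
    show ∫⁻ x, (‖cT * (1 + ‖x‖) ^ m‖₊ : ℝ≥0∞) ∂(μ.restrict B) < ⊤
    have heq : ∀ x : EuclideanSpace ℝ (Fin d), (‖cT * (1 + ‖x‖) ^ m‖₊ : ℝ≥0∞)
        = ENNReal.ofReal cT * ENNReal.ofReal ((1 + ‖x‖) ^ m) := by
      intro x
      rw [← enorm_eq_nnnorm, ← ofReal_norm, Real.norm_of_nonneg
        (mul_nonneg hcT.le (Real.rpow_nonneg (hbase x).le m)), ENNReal.ofReal_mul hcT.le]
    rw [lintegral_congr heq, lintegral_const_mul' _ _ ENNReal.ofReal_ne_top]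
    exact ENNReal.mul_lt_top ENNReal.ofReal_lt_top (hSm B hBS)
  -- kernel is a.e. strongly measurable on products
  have hprodK : ∀ B : Set (EuclideanSpace ℝ (Fin d)), B ⊆ S → AEStronglyMeasurable
      (fun p : EuclideanSpace ℝ (Fin d) × EuclideanSpace ℝ (Fin d) => K p.1 p.2)
      ((μ.restrict B).prod (μh.restrict Sh)) := by
    intro B hBS
    haveI : IsFiniteMeasure (μ.restrict B) :=
      ⟨by rw [Measure.restrict_apply_univ]; exact hμB B hBS⟩
    have hW : ContinuousOn (fun p : EuclideanSpace ℝ (Fin d) × EuclideanSpace ℝ (Fin d) =>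
        K p.1 p.2) (interior Ω ×ˢ interior Ωh) :=
      hKcont.mono (Set.prod_mono interior_subset interior_subset)
    have h1 := hW.aestronglyMeasurable (μ := (μ.restrict B).prod (μh.restrict Sh))
      (isOpen_interior.prod isOpen_interior).measurableSet
    have hc : ((μ.restrict B).prod (μh.restrict Sh)) ((interior Ω ×ˢ interior Ωh)ᶜ) = 0 := by
      rw [Set.compl_prod_eq_union]
      refine measure_union_null ?_ ?_
      · rw [Measure.prod_prod]
        have hz : (μ.restrict B) (interior Ω)ᶜ = 0 := by
          rw [Measure.restrict_apply isOpen_interior.measurableSet.compl]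
          exact measure_mono_null Set.inter_subset_left hΩnull
        rw [hz, zero_mul]
      · rw [Measure.prod_prod]
        have hz : (μh.restrict Sh) (interior Ωh)ᶜ = 0 := by
          rw [Measure.restrict_apply isOpen_interior.measurableSet.compl]
          exact measure_mono_null Set.inter_subset_left hΩhnull
        rw [hz, mul_zero]
    have hmem : ∀ᵐ p ∂((μ.restrict B).prod (μh.restrict Sh)),
        p ∈ interior Ω ×ˢ interior Ωh := by
      rw [ae_iff]; exact hc
    rwa [Measure.restrict_eq_self_of_ae_mem hmem] at h1
  -- joint integrability for Fubini
  have hFub : ∀ (i : ι) (B : Set (EuclideanSpace ℝ (Fin d))), B ⊆ S →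
      Integrable (fun p : EuclideanSpace ℝ (Fin d) × EuclideanSpace ℝ (Fin d) =>
        T (e i) p.2 * (starRingEnd ℂ) (K p.1 p.2)) ((μ.restrict B).prod (μh.restrict Sh)) := by
    intro i B hBS
    haveI : IsFiniteMeasure (μ.restrict B) :=
      ⟨by rw [Measure.restrict_apply_univ]; exact hμB B hBS⟩
    have hmeas : AEStronglyMeasurable (fun p : EuclideanSpace ℝ (Fin d) × EuclideanSpace ℝ (Fin d) =>
        T (e i) p.2 * (starRingEnd ℂ) (K p.1 p.2)) ((μ.restrict B).prod (μh.restrict Sh)) := by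
      have h1 : AEStronglyMeasurable (fun p : EuclideanSpace ℝ (Fin d) × EuclideanSpace ℝ (Fin d) =>
          T (e i) p.2) ((μ.restrict B).prod (μh.restrict Sh)) :=
        AEStronglyMeasurable.comp_snd ((hTei i).aestronglyMeasurable.restrict)
      exact h1.mul (RCLike.continuous_conj.comp_aestronglyMeasurable (hprodK B hBS))
    refine Integrable.mono' ((hφint B hBS).mul_prod (hψ i)) hmeas ?_
    refine Filter.Eventually.of_forall fun p => ?_
    rw [norm_mul, RCLike.norm_conj]
    calc ‖T (e i) p.2‖ * ‖K p.1 p.2‖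
        ≤ ‖T (e i) p.2‖ * (cT * (1 + ‖p.1‖) ^ m * (1 + ‖p.2‖) ^ mh) :=
          mul_le_mul_of_nonneg_left (hKbound _ _) (norm_nonneg _)
      _ = cT * (1 + ‖p.1‖) ^ m * (‖T (e i) p.2‖ * (1 + ‖p.2‖) ^ mh) := by ring
  -- bound and measurability for G
  have hGbound : ∀ (i : ι) (x : EuclideanSpace ℝ (Fin d)),
      ‖∫ ξ in Sh, T (e i) ξ * (starRingEnd ℂ) (K x ξ) ∂μh‖ ≤
      cT * (1 + ‖x‖) ^ m * ∫ ξ in Sh, ‖T (e i) ξ‖ * (1 + ‖ξ‖) ^ mh ∂μh := by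
    intro i x
    have h1 : ∀ᵐ ξ ∂(μh.restrict Sh), ‖T (e i) ξ * (starRingEnd ℂ) (K x ξ)‖ ≤
        cT * (1 + ‖x‖) ^ m * (‖T (e i) ξ‖ * (1 + ‖ξ‖) ^ mh) := by
      refine Filter.Eventually.of_forall fun ξ => ?_
      rw [norm_mul, RCLike.norm_conj]
      calc ‖T (e i) ξ‖ * ‖K x ξ‖
          ≤ ‖T (e i) ξ‖ * (cT * (1 + ‖x‖) ^ m * (1 + ‖ξ‖) ^ mh) :=
            mul_le_mul_of_nonneg_left (hKbound x ξ) (norm_nonneg _)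
        _ = cT * (1 + ‖x‖) ^ m * (‖T (e i) ξ‖ * (1 + ‖ξ‖) ^ mh) := by ring
    have h2 := norm_integral_le_of_norm_le ((hψ i).const_mul (cT * (1 + ‖x‖) ^ m)) h1
    calc ‖∫ ξ in Sh, T (e i) ξ * (starRingEnd ℂ) (K x ξ) ∂μh‖
        ≤ ∫ ξ in Sh, cT * (1 + ‖x‖) ^ m * (‖T (e i) ξ‖ * (1 + ‖ξ‖) ^ mh) ∂μh := h2
      _ = cT * (1 + ‖x‖) ^ m * ∫ ξ in Sh, ‖T (e i) ξ‖ * (1 + ‖ξ‖) ^ mh ∂μh :=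
          integral_const_mul _ _
  have hGmeas : ∀ i : ι, AEStronglyMeasurable
      (fun x => ∫ ξ in Sh, T (e i) ξ * (starRingEnd ℂ) (K x ξ) ∂μh) (μ.restrict S) :=
    fun i => (hFub i S subset_rfl).1.integral_prod_right'
  have hGint : ∀ i : ι, Integrable
      (fun x => ∫ ξ in Sh, T (e i) ξ * (starRingEnd ℂ) (K x ξ) ∂μh) (μ.restrict S) := by
    intro i
    refine Integrable.mono'
      ((hφint S subset_rfl).mul_const (∫ ξ in Sh, ‖T (e i) ξ‖ * (1 + ‖ξ‖) ^ mh ∂μh))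
      (hGmeas i) ?_
    exact Filter.Eventually.of_forall fun x => hGbound i x
  -- the key duality identity on sets
  have hu' : ∀ i : ι, MemLp (Sh.indicator (T (e i))) 2 μh :=
    fun i => (hTei i).indicator hShmeas
  have hFi : ∀ i : ι, MemLp (Ti (Sh.indicator (T (e i)))) 2 μ :=
    fun i => (hTi1 _ (hu' i)).1
  have hTFi : ∀ i : ι, T (Ti (Sh.indicator (T (e i)))) =ᵐ[μh] Sh.indicator (T (e i)) :=
    fun i => (hTi1 _ (hu' i)).2
  have hchain : ∀ (i : ι) (B : Set (EuclideanSpace ℝ (Fin d))), MeasurableSet B → B ⊆ S →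
      ∫ x in B, Ti (Sh.indicator (T (e i))) x ∂μ
        = ∫ x in B, (∫ ξ in Sh, T (e i) ξ * (starRingEnd ℂ) (K x ξ) ∂μh) ∂μ := by
    intro i B hB hBS
    haveI : IsFiniteMeasure (μ.restrict B) :=
      ⟨by rw [Measure.restrict_apply_univ]; exact hμB B hBS⟩
    set u : EuclideanSpace ℝ (Fin d) → ℂ := B.indicator (fun _ => (1:ℂ)) with hudef
    have hu2 : MemLp u 2 μ := memLp_indicator_const 2 hB 1 (Or.inr (hμB B hBS).ne)
    have huint : Integrable u (μ.withDensity fun x => ENNReal.ofReal ((1 + ‖x‖) ^ m)) := by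
      refine ⟨(stronglyMeasurable_const.indicator hB).aestronglyMeasurable, ?_⟩
      show ∫⁻ x, (‖u x‖₊ : ℝ≥0∞) ∂(μ.withDensity fun x => ENNReal.ofReal ((1 + ‖x‖) ^ m)) < ⊤
      have h1 : ∀ x, (‖u x‖₊ : ℝ≥0∞) = B.indicator (fun _ => (1:ℝ≥0∞)) x := by
        intro x; by_cases hx : x ∈ B <;> simp [hudef, hx]
      rw [lintegral_congr h1, lintegral_indicator hB, setLIntegral_one, withDensity_apply _ hB]
      exact hSm B hBS
    have hTu : ∀ ξ, T u ξ = ∫ x in B, K x ξ ∂μ := by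
      intro ξ
      rw [hTint u huint ξ, ← integral_indicator hB]
      congr 1
      funext x
      by_cases hx : x ∈ B <;> simp [hudef, hx]
    have hswap := integral_integral_swap
      (f := fun x ξ => T (e i) ξ * (starRingEnd ℂ) (K x ξ)) (hFub i B hBS)
    calc ∫ x in B, Ti (Sh.indicator (T (e i))) x ∂μ
        = ∫ x, Ti (Sh.indicator (T (e i))) x * (starRingEnd ℂ) (u x) ∂μ := by
          rw [← integral_indicator hB]
          congr 1
          funext x
          by_cases hx : x ∈ B <;> simp [hudef, hx]
      _ = (starRingEnd ℂ) (∫ x, (starRingEnd ℂ) (Ti (Sh.indicator (T (e i))) x) * u x ∂μ) := by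
          rw [← integral_conj]
          congr 1
          funext x
          simp [map_mul, mul_comm]
      _ = (starRingEnd ℂ) (∫ ξ, (starRingEnd ℂ) (T (Ti (Sh.indicator (T (e i)))) ξ) * T u ξ ∂μh) := by
          rw [hinner _ _ (hFi i) hu2]
      _ = (starRingEnd ℂ) (∫ ξ, (starRingEnd ℂ) (Sh.indicator (T (e i)) ξ) * T u ξ ∂μh) := by
          congr 1
          refine integral_congr_ae ?_
          filter_upwards [hTFi i] with ξ hξ
          rw [hξ]
      _ = ∫ ξ, Sh.indicator (T (e i)) ξ * (starRingEnd ℂ) (T u ξ) ∂μh := by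
          rw [← integral_conj]
          congr 1
          funext ξ
          simp [map_mul, mul_comm]
      _ = ∫ ξ in Sh, T (e i) ξ * (starRingEnd ℂ) (T u ξ) ∂μh := by
          rw [← integral_indicator hShmeas]
          congr 1
          funext ξ
          by_cases hξ : ξ ∈ Sh <;> simp [hξ]
      _ = ∫ ξ in Sh, (∫ x in B, T (e i) ξ * (starRingEnd ℂ) (K x ξ) ∂μ) ∂μh := by
          refine integral_congr_ae (Filter.Eventually.of_forall fun ξ => ?_)
          show T (e i) ξ * (starRingEnd ℂ) (T u ξ)
              = ∫ x in B, T (e i) ξ * (starRingEnd ℂ) (K x ξ) ∂μ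
          rw [hTu ξ, ← integral_conj, ← integral_const_mul]
      _ = ∫ x in B, (∫ ξ in Sh, T (e i) ξ * (starRingEnd ℂ) (K x ξ) ∂μh) ∂μ := hswap.symm
  have hdual : ∀ i : ι, S.indicator (Ti (Sh.indicator (T (e i)))) =ᵐ[μ]
      S.indicator (fun x => ∫ ξ in Sh, T (e i) ξ * (starRingEnd ℂ) (K x ξ) ∂μh) := by
    intro i
    have hae : Ti (Sh.indicator (T (e i))) =ᵐ[μ.restrict S]
        (fun x => ∫ ξ in Sh, T (e i) ξ * (starRingEnd ℂ) (K x ξ) ∂μh) := by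
      refine ae_eq_of_forall_setIntegral_eq_of_sigmaFinite ?_ ?_ ?_
      · intro A hA _
        exact (((hFi i).restrict S).integrable one_le_two).integrableOn
      · intro A hA _
        exact (hGint i).integrableOn
      · intro A hA _
        rw [Measure.restrict_restrict hA]
        exact hchain i (A ∩ S) (hA.inter hSmeas) Set.inter_subset_right
    have h2 := (ae_restrict_iff' hSmeas).1 hae
    filter_upwards [h2] with x hx
    by_cases hxS : x ∈ S
    · rw [Set.indicator_of_mem hxS, Set.indicator_of_mem hxS]
      exact hx hxS
    · rw [Set.indicator_of_notMem hxS, Set.indicator_of_notMem hxS]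
  -- the main estimate, for each finite subfamily
  rw [ENNReal.tsum_eq_iSup_sum]
  refine iSup_le fun s => ?_
  have hmeasi : ∀ i ∈ s, AEMeasurable
      (fun x => (‖S.indicator (Ti (Sh.indicator (T (e i)))) x‖₊ : ℝ≥0∞) ^ 2) μ :=
    fun i _ => ((hFi i).aestronglyMeasurable.indicator hSmeas).enorm.pow_const 2
  rw [← lintegral_finset_sum' s hmeasi]
  have hptw : ∀ᵐ x ∂μ, (∑ i ∈ s, (‖S.indicator (Ti (Sh.indicator (T (e i)))) x‖₊ : ℝ≥0∞) ^ 2) ≤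
      S.indicator (fun x => ENNReal.ofReal (cT ^ 2 * (1 + ‖x‖) ^ (2 * m)) * MSh) x := by
    have hall := (ae_ball_iff s.countable_toSet).2 fun i (_ : i ∈ (s : Set ι)) => hdual i
    filter_upwards [hall] with x hx
    by_cases hxS : x ∈ S
    swap
    · rw [Set.indicator_of_notMem hxS]
      refine le_of_eq (Finset.sum_eq_zero fun i hi => ?_)
      rw [Set.indicator_of_notMem hxS]
      simp
    · rw [Set.indicator_of_mem hxS]
      have hxΩ : x ∈ Ω := hSsub hxS
      have hgxlint : ∫⁻ ξ, (‖Sh.indicator (fun ξ => K x ξ) ξ‖₊ : ℝ≥0∞) ^ 2 ∂μh ≤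
          ENNReal.ofReal (cT ^ 2 * (1 + ‖x‖) ^ (2 * m)) * MSh := by
        have hpt : ∀ ξ, (‖Sh.indicator (fun ξ => K x ξ) ξ‖₊ : ℝ≥0∞) ^ 2 ≤
            Sh.indicator (fun ξ => ENNReal.ofReal (cT ^ 2 * (1 + ‖x‖) ^ (2 * m)) *
              ENNReal.ofReal ((1 + ‖ξ‖) ^ (2 * mh))) ξ := by
          intro ξ
          by_cases hξ : ξ ∈ Sh
          · rw [Set.indicator_of_mem hξ, Set.indicator_of_mem hξ, nnnorm_sq_eq_ofReal,
              ← ENNReal.ofReal_mul (by positivity)]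
            refine ENNReal.ofReal_le_ofReal ?_
            have h1 : ‖K x ξ‖ ^ 2 ≤ (cT * (1 + ‖x‖) ^ m * (1 + ‖ξ‖) ^ mh) ^ 2 :=
              pow_le_pow_left₀ (norm_nonneg _) (hKbound x ξ) 2
            refine h1.trans_eq ?_
            rw [mul_pow, mul_pow, rpow_sq_two_mul (hbase x), rpow_sq_two_mul (hbase ξ)]
          · rw [Set.indicator_of_notMem hξ, Set.indicator_of_notMem hξ]
            simp
        calc ∫⁻ ξ, (‖Sh.indicator (fun ξ => K x ξ) ξ‖₊ : ℝ≥0∞) ^ 2 ∂μh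
            ≤ ∫⁻ ξ, Sh.indicator (fun ξ => ENNReal.ofReal (cT ^ 2 * (1 + ‖x‖) ^ (2 * m)) *
                ENNReal.ofReal ((1 + ‖ξ‖) ^ (2 * mh))) ξ ∂μh := lintegral_mono hpt
          _ = ∫⁻ ξ in Sh, ENNReal.ofReal (cT ^ 2 * (1 + ‖x‖) ^ (2 * m)) *
                ENNReal.ofReal ((1 + ‖ξ‖) ^ (2 * mh)) ∂μh := lintegral_indicator hShmeas _
          _ = ENNReal.ofReal (cT ^ 2 * (1 + ‖x‖) ^ (2 * m)) *
                ∫⁻ ξ in Sh, ENNReal.ofReal ((1 + ‖ξ‖) ^ (2 * mh)) ∂μh :=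
              lintegral_const_mul' _ _ ENNReal.ofReal_ne_top
          _ = ENNReal.ofReal (cT ^ 2 * (1 + ‖x‖) ^ (2 * m)) * MSh := by rw [← hMShlint]
      have hgxm : MemLp (Sh.indicator (fun ξ => K x ξ)) 2 μh :=
        memL2_iff.2 ⟨(hKx x hxΩ).indicator hShmeas,
          lt_of_le_of_lt hgxlint (ENNReal.mul_lt_top ENNReal.ofReal_lt_top hShfin)⟩
      obtain ⟨H, hHdef⟩ : ∃ H : Lp ℂ 2 μ,
          H = ((hTi1 _ hgxm).1).toLp (Ti (Sh.indicator (fun ξ => K x ξ))) := ⟨_, rfl⟩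
      have hUH : U H = hgxm.toLp (Sh.indicator (fun ξ => K x ξ)) := by
        rw [hHdef, hU _ (hTi1 _ hgxm).1]
        exact MemLp.toLp_congr _ _ (hTi1 _ hgxm).2
      have hGval : ∀ i : ι, (∫ ξ in Sh, T (e i) ξ * (starRingEnd ℂ) (K x ξ) ∂μh)
          = (starRingEnd ℂ) (inner ℂ ((heL2 i).toLp (e i)) H : ℂ) := by
        intro i
        have h1 : (inner ℂ ((heL2 i).toLp (e i)) H : ℂ)
            = inner ℂ (U ((heL2 i).toLp (e i))) (U H) := (U.inner_map_map _ _).symm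
        rw [hU _ (heL2 i), hUH] at h1
        have h2 : (inner ℂ ((hmemT (e i) (heL2 i)).toLp (T (e i)))
              (hgxm.toLp (Sh.indicator (fun ξ => K x ξ))) : ℂ)
            = ∫ ξ, (starRingEnd ℂ) (T (e i) ξ) * Sh.indicator (fun ξ => K x ξ) ξ ∂μh := by
          rw [L2.inner_def]
          refine integral_congr_ae ?_
          filter_upwards [MemLp.coeFn_toLp (hmemT (e i) (heL2 i)),
            MemLp.coeFn_toLp hgxm] with ξ h1' h2'
          rw [h1', h2', RCLike.inner_apply']
        rw [h1, h2, ← integral_conj, ← integral_indicator hShmeas]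
        congr 1
        funext ξ
        by_cases hξ : ξ ∈ Sh
        · simp [Set.indicator_of_mem hξ, map_mul]
        · simp [Set.indicator_of_notMem hξ]
      have hbessel := hONbasis.sum_inner_products_le (x := H) (s := s)
      have hHnorm : ENNReal.ofReal (‖H‖ ^ 2) ≤
          ENNReal.ofReal (cT ^ 2 * (1 + ‖x‖) ^ (2 * m)) * MSh := by
        have h1 : ‖H‖ = (eLpNorm (Sh.indicator (fun ξ => K x ξ)) 2 μh).toReal := by
          rw [← U.norm_map H, hUH, Lp.norm_toLp]
        rw [h1, ENNReal.ofReal_pow ENNReal.toReal_nonneg, ENNReal.ofReal_toReal hgxm.2.ne,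
          sq_eLpNorm_two]
        exact hgxlint
      calc (∑ i ∈ s, (‖S.indicator (Ti (Sh.indicator (T (e i)))) x‖₊ : ℝ≥0∞) ^ 2)
          = ∑ i ∈ s, ENNReal.ofReal (‖(inner ℂ ((heL2 i).toLp (e i)) H : ℂ)‖ ^ 2) := by
            refine Finset.sum_congr rfl fun i hi => ?_
            simp only [hx i (Finset.mem_coe.2 hi), Set.indicator_of_mem hxS]
            rw [hGval i, nnnorm_sq_eq_ofReal, RCLike.norm_conj]
        _ = ENNReal.ofReal (∑ i ∈ s, ‖(inner ℂ ((heL2 i).toLp (e i)) H : ℂ)‖ ^ 2) :=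
            (ENNReal.ofReal_sum_of_nonneg fun i _ => by positivity).symm
        _ ≤ ENNReal.ofReal (‖H‖ ^ 2) := ENNReal.ofReal_le_ofReal hbessel
        _ ≤ _ := hHnorm
  calc ∫⁻ x, (∑ i ∈ s, (‖S.indicator (Ti (Sh.indicator (T (e i)))) x‖₊ : ℝ≥0∞) ^ 2) ∂μ
      ≤ ∫⁻ x, S.indicator (fun x => ENNReal.ofReal (cT ^ 2 * (1 + ‖x‖) ^ (2 * m)) * MSh) x ∂μ :=
        lintegral_mono_ae hptw
    _ = ∫⁻ x in S, ENNReal.ofReal (cT ^ 2 * (1 + ‖x‖) ^ (2 * m)) * MSh ∂μ :=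
        lintegral_indicator hSmeas _
    _ = (∫⁻ x in S, ENNReal.ofReal (cT ^ 2 * (1 + ‖x‖) ^ (2 * m)) ∂μ) * MSh :=
        lintegral_mul_const' _ _ hShfin.ne
    _ = (∫⁻ x in S, ENNReal.ofReal (cT ^ 2) * ENNReal.ofReal ((1 + ‖x‖) ^ (2 * m)) ∂μ) * MSh := by
        congr 1
        refine lintegral_congr fun x => ?_
        rw [← ENNReal.ofReal_mul (by positivity)]
    _ = (ENNReal.ofReal (cT ^ 2) * ∫⁻ x in S, ENNReal.ofReal ((1 + ‖x‖) ^ (2 * m)) ∂μ) * MSh := by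
        rw [lintegral_const_mul' _ _ ENNReal.ofReal_ne_top]
    _ = ENNReal.ofReal (cT ^ 2) * MS * MSh := by rw [← hMSlint]
end

section
/- (Donoho–Stark uncertainty principle for T.) Let S ⊂ Ω and Σ ⊂ Ω̂ be measurable subsets, let ε₁, ε₂ ≥ 0 with ε₁² + ε₂² ≤ 1, and suppose there exists f ∈ L²(Ω, μ) with ‖f‖_{L²(Ω,μ)} = 1 which is ε₁-concentrated on S, i.e. (∫_{Ω∖S} |f|² dμ)^{1/2} ≤ ε₁, and ε₂-bandlimited on Σ, i.e. (∫_{Ω̂∖Σ} |T f|² dμ̂)^{1/2} ≤ ε₂. Then μ_{2m}(S) · μ̂_{2m̂}(Σ) ≥ c_T^{−2} (1 − √(ε₁² + ε₂²))². -/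
open MeasureTheory
open scoped ENNReal NNReal

private lemma cs_lemma {α : Type*} [MeasurableSpace α] (ν : Measure α)
    (u v : α → ℝ≥0∞) (hu : AEMeasurable u ν) (hv : AEMeasurable v ν) :
    ∫⁻ x, u x * v x ∂ν ≤ (∫⁻ x, (u x) ^ 2 ∂ν) ^ (1/2:ℝ) * (∫⁻ x, (v x) ^ 2 ∂ν) ^ (1/2:ℝ) := by
  have h := ENNReal.lintegral_mul_le_Lp_mul_Lq ν (p := 2) (q := 2)
    ⟨by norm_num, by norm_num, by norm_num⟩ hu hv
  simpa [ENNReal.rpow_two] using h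

private lemma eL2 {α : Type*} [MeasurableSpace α] (ν : Measure α) (u : α → ℂ) :
    eLpNorm u 2 ν = (∫⁻ x, (‖u x‖₊ : ℝ≥0∞) ^ 2 ∂ν) ^ (1/2:ℝ) := by
  rw [eLpNorm_eq_lintegral_rpow_enorm_toReal two_ne_zero ENNReal.ofNat_ne_top]
  norm_num [ENNReal.rpow_two, enorm_eq_nnnorm]

set_option maxHeartbeats 1000000 in
theorem stmt_8
    (d : ℕ) (hd : 1 ≤ d) (a m mh cT : ℝ)
    (ha : 0 < a) (hm : 0 ≤ m) (hmh : 0 ≤ mh) (hcT : 0 < cT)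
    (Ω Ωh : Set (EuclideanSpace ℝ (Fin d)))
    (hΩconv : Convex ℝ Ω)
    (hΩcone : ∀ l : ℝ, 0 < l → ∀ x ∈ Ω, l • x ∈ Ω)
    (hΩint : (interior Ω).Nonempty)
    (hΩhconv : Convex ℝ Ωh)
    (hΩhcone : ∀ l : ℝ, 0 < l → ∀ ξ ∈ Ωh, l • ξ ∈ Ωh)
    (hΩhint : (interior Ωh).Nonempty)
    (μ μh : Measure (EuclideanSpace ℝ (Fin d)))
    (hμac : μ ≪ volume) (hμhac : μh ≪ volume)
    (hμΩ : μ Ωᶜ = 0) (hμhΩ : μh Ωhᶜ = 0)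
    (hμhom : ∀ l : ℝ, 0 < l →
      Measure.map (fun x => l⁻¹ • x) μ = (ENNReal.ofReal (l ^ (2 * a))) • μ)
    (hμhhom : ∀ l : ℝ, 0 < l →
      Measure.map (fun ξ => l⁻¹ • ξ) μh = (ENNReal.ofReal (l ^ (2 * a))) • μh)
    (K : EuclideanSpace ℝ (Fin d) → EuclideanSpace ℝ (Fin d) → ℂ)
    (hKcont : ContinuousOn (fun p => K p.1 p.2) (Ω ×ˢ Ωh))
    (hKbound : ∀ x ξ, ‖K x ξ‖ ≤ cT * (1 + ‖x‖) ^ m * (1 + ‖ξ‖) ^ mh)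
    (hKhom : ∀ l : ℝ, 0 < l → ∀ x ξ, K (l • x) ξ = K x (l • ξ))
    (T : (EuclideanSpace ℝ (Fin d) → ℂ) → EuclideanSpace ℝ (Fin d) → ℂ)
    (hTint : ∀ f : EuclideanSpace ℝ (Fin d) → ℂ,
      Integrable f (μ.withDensity fun x => ENNReal.ofReal ((1 + ‖x‖) ^ m)) →
      ∀ ξ, T f ξ = ∫ x, f x * K x ξ ∂μ)
    (hTmeas : ∀ f : EuclideanSpace ℝ (Fin d) → ℂ, MemLp f 2 μ → AEStronglyMeasurable (T f) μh)
    (hTadd : ∀ f g : EuclideanSpace ℝ (Fin d) → ℂ, MemLp f 2 μ → MemLp g 2 μ → T (f + g) =ᵐ[μh] T f + T g)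
    (hTsmul : ∀ (c : ℂ) (f : EuclideanSpace ℝ (Fin d) → ℂ), MemLp f 2 μ → T (c • f) =ᵐ[μh] c • T f)
    (hTplan : ∀ f : EuclideanSpace ℝ (Fin d) → ℂ, MemLp f 2 μ →
      ∫⁻ ξ, (‖T f ξ‖₊ : ℝ≥0∞) ^ 2 ∂μh = ∫⁻ x, (‖f x‖₊ : ℝ≥0∞) ^ 2 ∂μ)
    (hTsurj : ∀ g : EuclideanSpace ℝ (Fin d) → ℂ, MemLp g 2 μh → ∃ f : EuclideanSpace ℝ (Fin d) → ℂ, MemLp f 2 μ ∧ T f =ᵐ[μh] g)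
    (hTinv : ∀ f : EuclideanSpace ℝ (Fin d) → ℂ,
      Integrable f (μ.withDensity fun x => ENNReal.ofReal ((1 + ‖x‖) ^ m)) →
      Integrable (T f) (μh.withDensity fun ξ => ENNReal.ofReal ((1 + ‖ξ‖) ^ mh)) →
      ∀ᵐ x ∂μ, f x = ∫ ξ, T f ξ * (starRingEnd ℂ) (K x ξ) ∂μh)
    (S Sh : Set (EuclideanSpace ℝ (Fin d))) (hSmeas : MeasurableSet S) (hShmeas : MeasurableSet Sh)
    (hSsub : S ⊆ Ω) (hShsub : Sh ⊆ Ωh)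
    (ε₁ ε₂ : ℝ) (hε₁ : 0 ≤ ε₁) (hε₂ : 0 ≤ ε₂) (hε : ε₁ ^ 2 + ε₂ ^ 2 ≤ 1)
    (f : EuclideanSpace ℝ (Fin d) → ℂ) (hf : MemLp f 2 μ)
    (hnorm : (∫⁻ x, (‖f x‖₊ : ℝ≥0∞) ^ 2 ∂μ) = 1)
    (hconc : (∫⁻ x in Ω \ S, (‖f x‖₊ : ℝ≥0∞) ^ 2 ∂μ) ≤ ENNReal.ofReal (ε₁ ^ 2))
    (hband : (∫⁻ ξ in Ωh \ Sh, (‖T f ξ‖₊ : ℝ≥0∞) ^ 2 ∂μh) ≤ ENNReal.ofReal (ε₂ ^ 2)) :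
    ENNReal.ofReal ((1 - Real.sqrt (ε₁ ^ 2 + ε₂ ^ 2)) ^ 2 / cT ^ 2) ≤
      ((μ.withDensity fun x => ENNReal.ofReal ((1 + ‖x‖) ^ (2 * m))) S) * ((μh.withDensity fun ξ => ENNReal.ofReal ((1 + ‖ξ‖) ^ (2 * mh))) Sh) := by
  classical
  have hε₁sq : (0:ℝ) ≤ ε₁ ^ 2 := sq_nonneg _
  have hε₂sq : (0:ℝ) ≤ ε₂ ^ 2 := sq_nonneg _
  have hEnn : (0:ℝ) ≤ ε₁ ^ 2 + ε₂ ^ 2 := by positivity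
  have h1ε₂ : (0:ℝ) ≤ 1 - ε₂ ^ 2 := by linarith
  -- measurability of densities
  have hcontm : ∀ t : ℝ, Measurable fun x : EuclideanSpace ℝ (Fin d) =>
      ENNReal.ofReal ((1 + ‖x‖) ^ t) := by
    intro t
    exact ENNReal.measurable_ofReal.comp
      (((continuous_const.add continuous_norm).rpow_const
        (fun x => Or.inl (by positivity : (1:ℝ) + ‖x‖ ≠ 0))).measurable)
  have hone : ∀ t : ℝ, 0 ≤ t → ∀ x : EuclideanSpace ℝ (Fin d),
      (1:ℝ≥0∞) ≤ ENNReal.ofReal ((1 + ‖x‖) ^ t) := by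
    intro t ht x
    exact ENNReal.one_le_ofReal.mpr (Real.one_le_rpow (by linarith [norm_nonneg x]) ht)
  set WS := (μ.withDensity fun x => ENNReal.ofReal ((1 + ‖x‖) ^ (2 * m))) S with hWSdef
  set WSh := (μh.withDensity fun ξ => ENNReal.ofReal ((1 + ‖ξ‖) ^ (2 * mh))) Sh with hWShdef
  have hWSeq : WS = ∫⁻ x in S, ENNReal.ofReal ((1 + ‖x‖) ^ (2 * m)) ∂μ :=
    withDensity_apply _ hSmeas
  have hWSheq : WSh = ∫⁻ ξ in Sh, ENNReal.ofReal ((1 + ‖ξ‖) ^ (2 * mh)) ∂μh :=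
    withDensity_apply _ hShmeas
  have hμS_le : μ S ≤ WS := by
    rw [hWSeq]
    calc μ S = ∫⁻ _ in S, 1 ∂μ := (setLIntegral_one S).symm
    _ ≤ _ := lintegral_mono fun x => hone _ (by linarith) x
  have hμSh_le : μh Sh ≤ WSh := by
    rw [hWSheq]
    calc μh Sh = ∫⁻ _ in Sh, 1 ∂μh := (setLIntegral_one Sh).symm
    _ ≤ _ := lintegral_mono fun ξ => hone _ (by linarith) ξ
  have hplanf : (∫⁻ ξ, (‖T f ξ‖₊ : ℝ≥0∞) ^ 2 ∂μh) = 1 := (hTplan f hf).trans hnorm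
  -- splitting off null complements of the cones
  have hsplit : ∀ (ν : Measure (EuclideanSpace ℝ (Fin d))) (Ω' A : Set (EuclideanSpace ℝ (Fin d)))
      (u : EuclideanSpace ℝ (Fin d) → ℝ≥0∞), ν Ω'ᶜ = 0 →
      ∫⁻ x in Aᶜ, u x ∂ν ≤ ∫⁻ x in Ω' \ A, u x ∂ν := by
    intro ν Ω' A u hnull
    have hsub : Aᶜ ⊆ (Ω' \ A) ∪ Ω'ᶜ := by
      intro x hx
      by_cases hx2 : x ∈ Ω'
      · exact Or.inl ⟨hx2, hx⟩
      · exact Or.inr hx2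
    calc ∫⁻ x in Aᶜ, u x ∂ν ≤ ∫⁻ x in (Ω' \ A) ∪ Ω'ᶜ, u x ∂ν := lintegral_mono_set hsub
    _ ≤ (∫⁻ x in Ω' \ A, u x ∂ν) + ∫⁻ x in Ω'ᶜ, u x ∂ν := lintegral_union_le _ _ _
    _ = ∫⁻ x in Ω' \ A, u x ∂ν := by rw [setLIntegral_measure_zero _ _ hnull, add_zero]
  have hfc : (∫⁻ x in Sᶜ, (‖f x‖₊ : ℝ≥0∞) ^ 2 ∂μ) ≤ ENNReal.ofReal (ε₁ ^ 2) :=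
    le_trans (hsplit μ Ω S _ hμΩ) hconc
  have hTfc : (∫⁻ ξ in Shᶜ, (‖T f ξ‖₊ : ℝ≥0∞) ^ 2 ∂μh) ≤ ENNReal.ofReal (ε₂ ^ 2) :=
    le_trans (hsplit μh Ωh Sh _ hμhΩ) hband
  have hSsplit : (∫⁻ x in S, (‖f x‖₊ : ℝ≥0∞) ^ 2 ∂μ)
      + (∫⁻ x in Sᶜ, (‖f x‖₊ : ℝ≥0∞) ^ 2 ∂μ) = 1 := by
    rw [lintegral_add_compl _ hSmeas]; exact hnorm
  have hShsplit : (∫⁻ ξ in Sh, (‖T f ξ‖₊ : ℝ≥0∞) ^ 2 ∂μh)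
      + (∫⁻ ξ in Shᶜ, (‖T f ξ‖₊ : ℝ≥0∞) ^ 2 ∂μh) = 1 := by
    rw [lintegral_add_compl _ hShmeas]; exact hplanf
  rcases eq_or_lt_of_le hε with hE1 | hE1
  · rw [hE1, Real.sqrt_one]
    simp
  -- now ε₁² + ε₂² < 1
  have hδpos : 0 < 1 - Real.sqrt (ε₁ ^ 2 + ε₂ ^ 2) := by
    have : Real.sqrt (ε₁ ^ 2 + ε₂ ^ 2) < 1 := by
      rw [show (1:ℝ) = Real.sqrt 1 from Real.sqrt_one.symm]
      exact Real.sqrt_lt_sqrt hEnn hE1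
    linarith
  have hμSpos : μ S ≠ 0 := by
    intro h0
    have h1 : (∫⁻ x in S, (‖f x‖₊ : ℝ≥0∞) ^ 2 ∂μ) = 0 := setLIntegral_measure_zero _ _ h0
    have h2 : (1:ℝ≥0∞) ≤ ENNReal.ofReal (ε₁ ^ 2) := by
      rw [← hSsplit, h1, zero_add]; exact hfc
    have := ENNReal.one_le_ofReal.mp h2
    nlinarith
  have hμShpos : μh Sh ≠ 0 := by
    intro h0
    have h1 : (∫⁻ ξ in Sh, (‖T f ξ‖₊ : ℝ≥0∞) ^ 2 ∂μh) = 0 := setLIntegral_measure_zero _ _ h0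
    have h2 : (1:ℝ≥0∞) ≤ ENNReal.ofReal (ε₂ ^ 2) := by
      rw [← hShsplit, h1, zero_add]; exact hTfc
    have := ENNReal.one_le_ofReal.mp h2
    nlinarith
  have hWSne0 : WS ≠ 0 := fun h0 => hμSpos (le_antisymm (h0 ▸ hμS_le) zero_le)
  have hWShne0 : WSh ≠ 0 := fun h0 => hμShpos (le_antisymm (h0 ▸ hμSh_le) zero_le)
  by_cases hWStop : WS = ∞
  · have : WS * WSh = ∞ := ENNReal.mul_eq_top.mpr (Or.inr ⟨hWStop, hWShne0⟩)
    rw [this]; exact le_top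
  by_cases hWShtop : WSh = ∞
  · have : WS * WSh = ∞ := ENNReal.mul_eq_top.mpr (Or.inl ⟨hWSne0, hWShtop⟩)
    rw [this]; exact le_top
  -- main case
  set g : EuclideanSpace ℝ (Fin d) → ℂ := S.indicator f with hgdef
  set h' : EuclideanSpace ℝ (Fin d) → ℂ := Sᶜ.indicator f with hhdef
  have hsum : g + h' = f := Set.indicator_self_add_compl S f
  have hg2 : MemLp g 2 μ := hf.indicator hSmeas
  have hh2 : MemLp h' 2 μ := hf.indicator hSmeas.compl
  set I := ∫⁻ x in S, (‖f x‖₊ : ℝ≥0∞) * ENNReal.ofReal ((1 + ‖x‖) ^ m) ∂μ with hIdef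
  have hsq : ∀ (t : ℝ) (x : EuclideanSpace ℝ (Fin d)), 0 ≤ t →
      (ENNReal.ofReal ((1 + ‖x‖) ^ t)) ^ 2 = ENNReal.ofReal ((1 + ‖x‖) ^ (2 * t)) := by
    intro t x ht
    rw [← ENNReal.ofReal_pow (by positivity), mul_comm, Real.rpow_mul (by positivity),
      Real.rpow_two]
  have hI : I ≤ WS ^ (1/2:ℝ) := by
    have hcs := cs_lemma (μ.restrict S) _ _
      (hf.aestronglyMeasurable.enorm.restrict : AEMeasurable (fun x => (‖f x‖₊ : ℝ≥0∞)) _) ((hcontm m).aemeasurable.restrict)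
    refine le_trans hcs ?_
    have h1 : (∫⁻ x in S, (‖f x‖₊ : ℝ≥0∞) ^ 2 ∂μ) ^ (1/2:ℝ) ≤ 1 := by
      have hle : (∫⁻ x in S, (‖f x‖₊ : ℝ≥0∞) ^ 2 ∂μ) ≤ 1 := by
        rw [← hnorm]; exact setLIntegral_le_lintegral _ _
      calc (∫⁻ x in S, (‖f x‖₊ : ℝ≥0∞) ^ 2 ∂μ) ^ (1/2:ℝ) ≤ (1:ℝ≥0∞) ^ (1/2:ℝ) :=
        ENNReal.rpow_le_rpow hle (by norm_num)
      _ = 1 := ENNReal.one_rpow _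
    have h2 : (∫⁻ x in S, (ENNReal.ofReal ((1 + ‖x‖) ^ m)) ^ 2 ∂μ) = WS := by
      rw [hWSeq]
      exact lintegral_congr fun x => hsq m x hm
    rw [h2]
    calc (∫⁻ x in S, (‖f x‖₊ : ℝ≥0∞) ^ 2 ∂μ) ^ (1/2:ℝ) * WS ^ (1/2:ℝ)
        ≤ 1 * WS ^ (1/2:ℝ) := mul_le_mul_left h1 _
    _ = WS ^ (1/2:ℝ) := one_mul _
  have hIne : I ≠ ∞ :=
    ne_top_of_le_ne_top (ENNReal.rpow_ne_top_of_nonneg (by norm_num) hWStop) hI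
  have hgnn : ∀ x, (‖g x‖₊ : ℝ≥0∞) * ENNReal.ofReal ((1 + ‖x‖) ^ m)
      = S.indicator (fun x => (‖f x‖₊ : ℝ≥0∞) * ENNReal.ofReal ((1 + ‖x‖) ^ m)) x := by
    intro x
    by_cases hx : x ∈ S <;> simp [hgdef, Set.indicator_of_mem, Set.indicator_of_notMem, hx]
  have hgI : (∫⁻ x, (‖g x‖₊ : ℝ≥0∞) * ENNReal.ofReal ((1 + ‖x‖) ^ m) ∂μ) = I := by
    rw [hIdef, ← lintegral_indicator hSmeas]
    exact lintegral_congr hgnn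
  have hgint : Integrable g (μ.withDensity fun x => ENNReal.ofReal ((1 + ‖x‖) ^ m)) := by
    constructor
    · exact (hf.aestronglyMeasurable.indicator hSmeas).mono_ac
        (withDensity_absolutelyContinuous μ _)
    · show (∫⁻ x, (‖g x‖₊ : ℝ≥0∞) ∂(μ.withDensity fun x => ENNReal.ofReal ((1 + ‖x‖) ^ m))) < ∞
      rw [lintegral_withDensity_eq_lintegral_mul_non_measurable μ (hcontm m)
        (Filter.Eventually.of_forall fun x => ENNReal.ofReal_lt_top)]
      refine lt_of_eq_of_lt ?_
        (lt_of_le_of_lt hI (ENNReal.rpow_lt_top_of_nonneg (by norm_num) hWStop))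
      rw [← hgI]
      exact lintegral_congr fun x => by simp [Pi.mul_apply, mul_comm]
  have hTg := hTint g hgint
  have hKb : ∀ x ξ, (‖K x ξ‖₊ : ℝ≥0∞)
      ≤ ENNReal.ofReal (cT * (1 + ‖ξ‖) ^ mh) * ENNReal.ofReal ((1 + ‖x‖) ^ m) := by
    intro x ξ
    rw [← enorm_eq_nnnorm, ← ofReal_norm, ← ENNReal.ofReal_mul (by positivity)]
    refine ENNReal.ofReal_le_ofReal ?_
    calc ‖K x ξ‖ ≤ cT * (1 + ‖x‖) ^ m * (1 + ‖ξ‖) ^ mh := hKbound x ξ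
    _ = cT * (1 + ‖ξ‖) ^ mh * (1 + ‖x‖) ^ m := by ring
  have hTgbd : ∀ ξ, (‖T g ξ‖₊ : ℝ≥0∞) ≤ ENNReal.ofReal (cT * (1 + ‖ξ‖) ^ mh) * I := by
    intro ξ
    rw [hTg ξ]
    refine le_trans (enorm_integral_le_lintegral_enorm _) ?_
    have hpt : ∀ x, (‖g x * K x ξ‖₊ : ℝ≥0∞)
        ≤ ENNReal.ofReal (cT * (1 + ‖ξ‖) ^ mh)
          * ((‖g x‖₊ : ℝ≥0∞) * ENNReal.ofReal ((1 + ‖x‖) ^ m)) := by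
      intro x
      rw [nnnorm_mul, ENNReal.coe_mul]
      calc (‖g x‖₊ : ℝ≥0∞) * (‖K x ξ‖₊ : ℝ≥0∞)
          ≤ (‖g x‖₊ : ℝ≥0∞) * (ENNReal.ofReal (cT * (1 + ‖ξ‖) ^ mh) * ENNReal.ofReal ((1 + ‖x‖) ^ m)) :=
        mul_le_mul_right (hKb x ξ) _
      _ = _ := by ring
    calc (∫⁻ x, (‖g x * K x ξ‖₊ : ℝ≥0∞) ∂μ)
        ≤ ∫⁻ x, ENNReal.ofReal (cT * (1 + ‖ξ‖) ^ mh)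
            * ((‖g x‖₊ : ℝ≥0∞) * ENNReal.ofReal ((1 + ‖x‖) ^ m)) ∂μ := lintegral_mono hpt
    _ = ENNReal.ofReal (cT * (1 + ‖ξ‖) ^ mh)
        * ∫⁻ x, (‖g x‖₊ : ℝ≥0∞) * ENNReal.ofReal ((1 + ‖x‖) ^ m) ∂μ :=
      lintegral_const_mul' _ _ ENNReal.ofReal_ne_top
    _ = ENNReal.ofReal (cT * (1 + ‖ξ‖) ^ mh) * I := by rw [hgI]
  set A := ∫⁻ ξ in Sh, (‖T g ξ‖₊ : ℝ≥0∞) ^ 2 ∂μh with hAdef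
  have hI2 : I ^ 2 ≤ WS := by
    calc I ^ 2 ≤ (WS ^ (1/2:ℝ)) ^ 2 := pow_le_pow_left' hI 2
    _ = WS := by
      rw [← ENNReal.rpow_two, ← ENNReal.rpow_mul]
      norm_num
  have hAle : A ≤ ENNReal.ofReal (cT ^ 2) * WS * WSh := by
    have hpt : ∀ ξ, (‖T g ξ‖₊ : ℝ≥0∞) ^ 2
        ≤ (ENNReal.ofReal (cT ^ 2) * I ^ 2) * ENNReal.ofReal ((1 + ‖ξ‖) ^ (2 * mh)) := by
      intro ξ
      calc (‖T g ξ‖₊ : ℝ≥0∞) ^ 2 ≤ (ENNReal.ofReal (cT * (1 + ‖ξ‖) ^ mh) * I) ^ 2 :=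
        pow_le_pow_left' (hTgbd ξ) 2
      _ = (ENNReal.ofReal (cT ^ 2) * I ^ 2) * ENNReal.ofReal ((1 + ‖ξ‖) ^ (2 * mh)) := by
        rw [mul_pow, ENNReal.ofReal_mul (le_of_lt hcT), mul_pow,
          ← ENNReal.ofReal_pow (le_of_lt hcT), hsq mh ξ hmh]
        ring
    calc A ≤ ∫⁻ ξ in Sh, (ENNReal.ofReal (cT ^ 2) * I ^ 2)
          * ENNReal.ofReal ((1 + ‖ξ‖) ^ (2 * mh)) ∂μh := lintegral_mono fun ξ => hpt ξ
    _ = (ENNReal.ofReal (cT ^ 2) * I ^ 2)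
        * ∫⁻ ξ in Sh, ENNReal.ofReal ((1 + ‖ξ‖) ^ (2 * mh)) ∂μh :=
      lintegral_const_mul' _ _ (ENNReal.mul_ne_top ENNReal.ofReal_ne_top (ENNReal.pow_ne_top hIne))
    _ = ENNReal.ofReal (cT ^ 2) * I ^ 2 * WSh := by rw [← hWSheq]
    _ ≤ ENNReal.ofReal (cT ^ 2) * WS * WSh :=
      mul_le_mul_left (mul_le_mul_right hI2 _) _
  have hAne : A ≠ ∞ := ne_top_of_le_ne_top
    (ENNReal.mul_ne_top (ENNReal.mul_ne_top ENNReal.ofReal_ne_top hWStop) hWShtop) hAle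
  -- triangle inequality
  have hTfadd : T f =ᵐ[μh] T g + T h' := by
    have h := hTadd g h' hg2 hh2
    rwa [hsum] at h
  have hν : eLpNorm (T f) 2 (μh.restrict Sh)
      ≤ eLpNorm (T g) 2 (μh.restrict Sh) + eLpNorm (T h') 2 (μh.restrict Sh) := by
    calc eLpNorm (T f) 2 (μh.restrict Sh) = eLpNorm (T g + T h') 2 (μh.restrict Sh) :=
      eLpNorm_congr_ae (ae_restrict_of_ae hTfadd)
    _ ≤ _ := eLpNorm_add_le ((hTmeas g hg2).restrict) ((hTmeas h' hh2).restrict) one_le_two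
  rw [eL2, eL2, eL2] at hν
  have hTh'le : (∫⁻ ξ in Sh, (‖T h' ξ‖₊ : ℝ≥0∞) ^ 2 ∂μh) ≤ ENNReal.ofReal (ε₁ ^ 2) := by
    calc (∫⁻ ξ in Sh, (‖T h' ξ‖₊ : ℝ≥0∞) ^ 2 ∂μh)
        ≤ ∫⁻ ξ, (‖T h' ξ‖₊ : ℝ≥0∞) ^ 2 ∂μh := setLIntegral_le_lintegral _ _
    _ = ∫⁻ x, (‖h' x‖₊ : ℝ≥0∞) ^ 2 ∂μ := hTplan h' hh2
    _ = ∫⁻ x in Sᶜ, (‖f x‖₊ : ℝ≥0∞) ^ 2 ∂μ := by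
        rw [← lintegral_indicator hSmeas.compl]
        refine lintegral_congr fun x => ?_
        by_cases hx : x ∈ Sᶜ <;>
          simp [hhdef, Set.indicator_of_mem, Set.indicator_of_notMem, hx]
    _ ≤ ENNReal.ofReal (ε₁ ^ 2) := hfc
  have hTfge : 1 - ENNReal.ofReal (ε₂ ^ 2) ≤ ∫⁻ ξ in Sh, (‖T f ξ‖₊ : ℝ≥0∞) ^ 2 ∂μh := by
    rw [tsub_le_iff_right]
    calc (1:ℝ≥0∞) = (∫⁻ ξ in Sh, (‖T f ξ‖₊ : ℝ≥0∞) ^ 2 ∂μh)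
        + (∫⁻ ξ in Shᶜ, (‖T f ξ‖₊ : ℝ≥0∞) ^ 2 ∂μh) := hShsplit.symm
    _ ≤ _ := add_le_add_right hTfc _
  have hkey : ENNReal.ofReal (Real.sqrt (1 - ε₂ ^ 2)) ≤ A ^ (1/2:ℝ) + ENNReal.ofReal ε₁ := by
    have e1 : (1 - ENNReal.ofReal (ε₂ ^ 2)) = ENNReal.ofReal (1 - ε₂ ^ 2) := by
      rw [← ENNReal.ofReal_one, ← ENNReal.ofReal_sub 1 hε₂sq]
    have e2 : ENNReal.ofReal (1 - ε₂ ^ 2) ^ (1/2:ℝ) = ENNReal.ofReal (Real.sqrt (1 - ε₂ ^ 2)) := by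
      rw [ENNReal.ofReal_rpow_of_nonneg h1ε₂ (by norm_num), Real.sqrt_eq_rpow]
    calc ENNReal.ofReal (Real.sqrt (1 - ε₂ ^ 2))
        = (1 - ENNReal.ofReal (ε₂ ^ 2)) ^ (1/2:ℝ) := by rw [e1, e2]
    _ ≤ (∫⁻ ξ in Sh, (‖T f ξ‖₊ : ℝ≥0∞) ^ 2 ∂μh) ^ (1/2:ℝ) :=
      ENNReal.rpow_le_rpow hTfge (by norm_num)
    _ ≤ A ^ (1/2:ℝ) + (∫⁻ ξ in Sh, (‖T h' ξ‖₊ : ℝ≥0∞) ^ 2 ∂μh) ^ (1/2:ℝ) := hν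
    _ ≤ A ^ (1/2:ℝ) + (ENNReal.ofReal (ε₁ ^ 2)) ^ (1/2:ℝ) :=
      add_le_add_right (ENNReal.rpow_le_rpow hTh'le (by norm_num)) _
    _ = A ^ (1/2:ℝ) + ENNReal.ofReal ε₁ := by
      rw [ENNReal.ofReal_rpow_of_nonneg hε₁sq (by norm_num), ← Real.sqrt_eq_rpow,
        Real.sqrt_sq hε₁]
  set a' := A.toReal with ha'def
  have ha'nn : (0:ℝ) ≤ a' := ENNReal.toReal_nonneg
  have hkeyR : Real.sqrt (1 - ε₂ ^ 2) ≤ Real.sqrt a' + ε₁ := by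
    rw [show A = ENNReal.ofReal a' from (ENNReal.ofReal_toReal hAne).symm,
      ENNReal.ofReal_rpow_of_nonneg ha'nn (by norm_num), ← Real.sqrt_eq_rpow,
      ← ENNReal.ofReal_add (Real.sqrt_nonneg _) hε₁] at hkey
    exact (ENNReal.ofReal_le_ofReal_iff (by positivity)).mp hkey
  have hstep : (1 - Real.sqrt (ε₁ ^ 2 + ε₂ ^ 2)) ^ 2 ≤ a' := by
    set s := Real.sqrt (ε₁ ^ 2 + ε₂ ^ 2) with hsdef
    set t := Real.sqrt (1 - ε₂ ^ 2) with htdef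
    have hs : 0 ≤ s := Real.sqrt_nonneg _
    have ht : 0 ≤ t := Real.sqrt_nonneg _
    have hs2 : s ^ 2 = ε₁ ^ 2 + ε₂ ^ 2 := Real.sq_sqrt hEnn
    have ht2 : t ^ 2 = 1 - ε₂ ^ 2 := Real.sq_sqrt h1ε₂
    have hts : ε₁ ≤ t * s := by
      have h2 : ε₁ ^ 2 ≤ (t * s) ^ 2 := by nlinarith [mul_nonneg (sq_nonneg ε₂) (sub_nonneg.mpr hε)]
      exact (pow_le_pow_iff_left₀ hε₁ (mul_nonneg ht hs) two_ne_zero).mp h2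
    have h12 : 1 - s ≤ t - ε₁ := by
      have h3 : (1 + ε₁) ^ 2 ≤ (t + s) ^ 2 := by nlinarith
      have h4 : 1 + ε₁ ≤ t + s :=
        (pow_le_pow_iff_left₀ (by positivity) (by positivity) two_ne_zero).mp h3
      linarith
    have hfinal : 1 - s ≤ Real.sqrt a' := by linarith
    calc (1 - s) ^ 2 ≤ (Real.sqrt a') ^ 2 := pow_le_pow_left₀ (le_of_lt hδpos) hfinal 2
    _ = a' := Real.sq_sqrt ha'nn
  have haup : a' ≤ cT ^ 2 * (WS.toReal * WSh.toReal) := by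
    have h1 : A.toReal ≤ (ENNReal.ofReal (cT ^ 2) * WS * WSh).toReal :=
      ENNReal.toReal_mono
        (ENNReal.mul_ne_top (ENNReal.mul_ne_top ENNReal.ofReal_ne_top hWStop) hWShtop) hAle
    rwa [ENNReal.toReal_mul, ENNReal.toReal_mul, ENNReal.toReal_ofReal (by positivity),
      mul_assoc] at h1
  have hWfin : WS * WSh ≠ ∞ := ENNReal.mul_ne_top hWStop hWShtop
  rw [ENNReal.ofReal_le_iff_le_toReal hWfin, ENNReal.toReal_mul,
    div_le_iff₀ (by positivity : (0:ℝ) < cT ^ 2)]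
  nlinarith [hstep, haup]
end

section
/- Let S ⊂ Ω and Σ ⊂ Ω̂ be measurable subsets with μ_{2m}(S) < ∞ and μ̂_{2m̂}(Σ) < ∞. Then the linear subspace { f ∈ L²(Ω, μ) : f = 0 μ-a.e. outside S and T f = 0 μ̂-a.e. outside Σ } has finite dimension, bounded above by c_T² · μ_{2m}(S) · μ̂_{2m̂}(Σ). -/
open MeasureTheory
open scoped ENNReal NNReal

section auxlemmas

variable {α : Type*} [MeasurableSpace α] {ν : Measure α}

lemma my_hold2 (u v : α → ℝ≥0∞) (hu : AEMeasurable u ν) (hv : AEMeasurable v ν) :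
    ∫⁻ x, u x * v x ∂ν ≤ (∫⁻ x, u x ^ 2 ∂ν) ^ (1/2:ℝ) * (∫⁻ x, v x ^ 2 ∂ν) ^ (1/2:ℝ) := by
  have h := ENNReal.lintegral_mul_le_Lp_mul_Lq ν (p := 2) (q := 2)
    ⟨by norm_num, by norm_num, by norm_num⟩ hu hv
  have h2 : ∀ w : α → ℝ≥0∞, ∫⁻ x, w x ^ (2:ℝ) ∂ν = ∫⁻ x, w x ^ 2 ∂ν := by
    intro w
    refine lintegral_congr fun x => ?_
    rw [← ENNReal.rpow_natCast (w x) 2]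
    norm_num
  simpa [Pi.mul_apply, h2] using h

lemma my_eLpNorm_two (f : α → ℂ) (ν : Measure α) :
    eLpNorm f 2 ν = (∫⁻ x, ((‖f x‖₊ : ℝ≥0∞)) ^ 2 ∂ν) ^ (1/2:ℝ) := by
  rw [eLpNorm_eq_lintegral_rpow_enorm_toReal two_ne_zero ENNReal.ofNat_ne_top]
  congr 1
  · refine lintegral_congr fun x => ?_
    rw [← ENNReal.rpow_natCast ((‖f x‖₊ : ℝ≥0∞)) 2]
    norm_num
    rfl

lemma my_sq_lintegral_lt_top {f : α → ℂ} (hf : MemLp f 2 ν) :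
    ∫⁻ x, ((‖f x‖₊ : ℝ≥0∞)) ^ 2 ∂ν < ⊤ := by
  have h := hf.2
  rw [my_eLpNorm_two] at h
  by_contra hc
  push_neg at hc
  rw [top_le_iff.mp hc] at h
  simp [ENNReal.top_rpow_of_pos] at h

end auxlemmas

section euclid

variable {d : ℕ}

lemma my_W_meas (e : ℝ) :
    Measurable fun x : EuclideanSpace ℝ (Fin d) => ENNReal.ofReal ((1 + ‖x‖) ^ e) := by
  have hc : Continuous fun x : EuclideanSpace ℝ (Fin d) => (1 + ‖x‖) ^ e :=
    (continuous_const.add continuous_norm).rpow_const (fun x : EuclideanSpace ℝ (Fin d) => Or.inl (by positivity : (1:ℝ) + ‖x‖ ≠ 0))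
  exact hc.measurable.ennreal_ofReal

lemma my_W_sq (e : ℝ) (x : EuclideanSpace ℝ (Fin d)) :
    (ENNReal.ofReal ((1 + ‖x‖) ^ e)) ^ 2 = ENNReal.ofReal ((1 + ‖x‖) ^ (2 * e)) := by
  have h1 : (0:ℝ) ≤ 1 + ‖x‖ := by positivity
  rw [← ENNReal.ofReal_pow (by positivity)]
  congr 1
  rw [mul_comm 2 e, Real.rpow_mul h1, Real.rpow_two]

lemma my_ind_sq (ν : Measure (EuclideanSpace ℝ (Fin d))) (e : ℝ) {s : Set (EuclideanSpace ℝ (Fin d))}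
    (hs : MeasurableSet s) :
    ∫⁻ x, (s.indicator (fun x => ENNReal.ofReal ((1 + ‖x‖) ^ e)) x) ^ 2 ∂ν
      = (ν.withDensity fun x => ENNReal.ofReal ((1 + ‖x‖) ^ (2 * e))) s := by
  rw [withDensity_apply _ hs, ← lintegral_indicator hs]
  refine lintegral_congr fun x => ?_
  by_cases hx : x ∈ s
  · simp [Set.indicator_of_mem hx, my_W_sq]
  · simp [Set.indicator_of_notMem hx]

lemma my_keyInt (ν : Measure (EuclideanSpace ℝ (Fin d))) (e : ℝ)
    {f : EuclideanSpace ℝ (Fin d) → ℂ} {s : Set (EuclideanSpace ℝ (Fin d))}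
    (hs : MeasurableSet s) (hf : MemLp f 2 ν)
    (hf0 : ∀ᵐ x ∂ν, x ∉ s → f x = 0)
    (hfin : (ν.withDensity fun x => ENNReal.ofReal ((1 + ‖x‖) ^ (2 * e))) s < ⊤) :
    Integrable f (ν.withDensity fun x => ENNReal.ofReal ((1 + ‖x‖) ^ e)) := by
  constructor
  · exact hf.aestronglyMeasurable.mono_ac (withDensity_absolutelyContinuous ν _)
  · rw [hasFiniteIntegral_def]
    rw [lintegral_withDensity_eq_lintegral_mul₀' (my_W_meas e).aemeasurable
      (hf.aestronglyMeasurable.mono_ac (withDensity_absolutelyContinuous ν _)).enorm]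
    simp only [Pi.mul_apply]
    have hcong : ∫⁻ x, ENNReal.ofReal ((1 + ‖x‖) ^ e) * (‖f x‖₊ : ℝ≥0∞) ∂ν
        = ∫⁻ x, (‖f x‖₊ : ℝ≥0∞) * s.indicator (fun x => ENNReal.ofReal ((1 + ‖x‖) ^ e)) x ∂ν := by
      refine lintegral_congr_ae ?_
      filter_upwards [hf0] with x hx
      by_cases hxs : x ∈ s
      · simp [Set.indicator_of_mem hxs, mul_comm]
      · simp [Set.indicator_of_notMem hxs, hx hxs]
    simp only [enorm_eq_nnnorm]
    rw [hcong]
    refine lt_of_le_of_lt (my_hold2 _ _ hf.aestronglyMeasurable.enorm ((my_W_meas e).indicator hs).aemeasurable) ?_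
    apply ENNReal.mul_lt_top
    · exact ENNReal.rpow_lt_top_of_nonneg (by norm_num) (my_sq_lintegral_lt_top hf).ne
    · rw [my_ind_sq ν e hs]
      exact ENNReal.rpow_lt_top_of_nonneg (by norm_num) hfin.ne

end euclid

section lpsum

variable {α : Type*} [MeasurableSpace α] {ν : Measure α}

lemma my_coeFn_sum {ι : Type*} (s : Finset ι) (F : ι → Lp ℂ 2 ν) :
    (((∑ i ∈ s, F i : Lp ℂ 2 ν)) : α → ℂ) =ᵐ[ν] fun x => ∑ i ∈ s, (F i : α → ℂ) x := by
  induction s using Finset.cons_induction with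
  | empty => simp only [Finset.sum_empty]; exact Lp.coeFn_zero ℂ 2 ν
  | cons i s hi ih =>
    rw [Finset.sum_cons]
    refine (Lp.coeFn_add _ _).trans ?_
    filter_upwards [ih] with x hx
    simp only [Pi.add_apply, hx, Finset.sum_cons]

lemma my_coeFn_comb {n : ℕ} (c : Fin n → ℂ) (g : Fin n → α → ℂ) (hg : ∀ i, MemLp (g i) 2 ν) :
    (((∑ i : Fin n, c i • ((hg i).toLp (g i)) : Lp ℂ 2 ν)) : α → ℂ)
      =ᵐ[ν] fun x => ∑ i : Fin n, c i * g i x := by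
  refine (my_coeFn_sum Finset.univ _).trans ?_
  have h : ∀ i : Fin n, ((c i • ((hg i).toLp (g i)) : Lp ℂ 2 ν) : α → ℂ) =ᵐ[ν] fun x => c i * g i x := by
    intro i
    refine (Lp.coeFn_smul _ _).trans ?_
    filter_upwards [(hg i).coeFn_toLp] with x hx
    simp [hx]
  have h2 : ∀ᵐ x ∂ν, ∀ i : Fin n, ((c i • ((hg i).toLp (g i)) : Lp ℂ 2 ν) : α → ℂ) x = c i * g i x :=
    ae_all_iff.2 h
  filter_upwards [h2] with x hx
  simp only [hx]

end lpsum

section onb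

lemma my_onb_norm {E : Type*} [NormedAddCommGroup E] [InnerProductSpace ℂ E]
    {n : ℕ} {e : Fin n → E} (he : Orthonormal ℂ e) (β : Fin n → ℂ) :
    ‖∑ j : Fin n, β j • e j‖ ^ 2 = ∑ j : Fin n, ‖β j‖ ^ 2 := by
  have h := he.inner_sum β β Finset.univ
  rw [@inner_self_eq_norm_sq_to_K ℂ] at h
  have h2 : ((‖∑ j : Fin n, β j • e j‖ : ℂ) ^ 2).re = ((∑ j : Fin n, (starRingEnd ℂ) (β j) * β j)).re :=
    congrArg Complex.re h
  rw [← Complex.ofReal_pow] at h2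
  rw [Complex.ofReal_re] at h2
  rw [h2, Complex.re_sum]
  refine Finset.sum_congr rfl fun j _ => ?_
  have : (starRingEnd ℂ) (β j) * β j = ((‖β j‖ : ℂ)) ^ 2 := by
    rw [mul_comm, Complex.mul_conj']
  rw [this, ← Complex.ofReal_pow, Complex.ofReal_re]

end onb

lemma my_rpow_half {x : ℝ≥0∞} (h : x ^ (1/2:ℝ) = 1) : x = 1 := by
  have h2 := congrArg (fun y : ℝ≥0∞ => y ^ (2:ℝ)) h
  rw [← ENNReal.rpow_mul] at h2
  norm_num at h2
  exact h2

lemma my_rpow_sq {t : ℝ} (h : 0 ≤ t) (e : ℝ) : (t ^ e) ^ 2 = t ^ (2 * e) := by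
  rw [mul_comm 2 e, Real.rpow_mul h, Real.rpow_two]

theorem stmt_11
    (d : ℕ) (hd : 1 ≤ d) (a m mh cT : ℝ)
    (ha : 0 < a) (hm : 0 ≤ m) (hmh : 0 ≤ mh) (hcT : 0 < cT)
    (Ω Ωh : Set (EuclideanSpace ℝ (Fin d)))
    (hΩconv : Convex ℝ Ω)
    (hΩcone : ∀ l : ℝ, 0 < l → ∀ x ∈ Ω, l • x ∈ Ω)
    (hΩint : (interior Ω).Nonempty)
    (hΩhconv : Convex ℝ Ωh)
    (hΩhcone : ∀ l : ℝ, 0 < l → ∀ ξ ∈ Ωh, l • ξ ∈ Ωh)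
    (hΩhint : (interior Ωh).Nonempty)
    (μ μh : Measure (EuclideanSpace ℝ (Fin d)))
    (hμac : μ ≪ volume) (hμhac : μh ≪ volume)
    (hμΩ : μ Ωᶜ = 0) (hμhΩ : μh Ωhᶜ = 0)
    (hμhom : ∀ l : ℝ, 0 < l →
      Measure.map (fun x => l⁻¹ • x) μ = (ENNReal.ofReal (l ^ (2 * a))) • μ)
    (hμhhom : ∀ l : ℝ, 0 < l →
      Measure.map (fun ξ => l⁻¹ • ξ) μh = (ENNReal.ofReal (l ^ (2 * a))) • μh)
    (K : EuclideanSpace ℝ (Fin d) → EuclideanSpace ℝ (Fin d) → ℂ)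
    (hKcont : ContinuousOn (fun p => K p.1 p.2) (Ω ×ˢ Ωh))
    (hKbound : ∀ x ξ, ‖K x ξ‖ ≤ cT * (1 + ‖x‖) ^ m * (1 + ‖ξ‖) ^ mh)
    (hKhom : ∀ l : ℝ, 0 < l → ∀ x ξ, K (l • x) ξ = K x (l • ξ))
    (T : (EuclideanSpace ℝ (Fin d) → ℂ) → EuclideanSpace ℝ (Fin d) → ℂ)
    (hTint : ∀ f : EuclideanSpace ℝ (Fin d) → ℂ,
      Integrable f (μ.withDensity fun x => ENNReal.ofReal ((1 + ‖x‖) ^ m)) →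
      ∀ ξ, T f ξ = ∫ x, f x * K x ξ ∂μ)
    (hTmeas : ∀ f : EuclideanSpace ℝ (Fin d) → ℂ, MemLp f 2 μ → AEStronglyMeasurable (T f) μh)
    (hTadd : ∀ f g : EuclideanSpace ℝ (Fin d) → ℂ, MemLp f 2 μ → MemLp g 2 μ → T (f + g) =ᵐ[μh] T f + T g)
    (hTsmul : ∀ (c : ℂ) (f : EuclideanSpace ℝ (Fin d) → ℂ), MemLp f 2 μ → T (c • f) =ᵐ[μh] c • T f)
    (hTplan : ∀ f : EuclideanSpace ℝ (Fin d) → ℂ, MemLp f 2 μ →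
      ∫⁻ ξ, (‖T f ξ‖₊ : ℝ≥0∞) ^ 2 ∂μh = ∫⁻ x, (‖f x‖₊ : ℝ≥0∞) ^ 2 ∂μ)
    (hTsurj : ∀ g : EuclideanSpace ℝ (Fin d) → ℂ, MemLp g 2 μh → ∃ f : EuclideanSpace ℝ (Fin d) → ℂ, MemLp f 2 μ ∧ T f =ᵐ[μh] g)
    (hTinv : ∀ f : EuclideanSpace ℝ (Fin d) → ℂ,
      Integrable f (μ.withDensity fun x => ENNReal.ofReal ((1 + ‖x‖) ^ m)) →
      Integrable (T f) (μh.withDensity fun ξ => ENNReal.ofReal ((1 + ‖ξ‖) ^ mh)) →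
      ∀ᵐ x ∂μ, f x = ∫ ξ, T f ξ * (starRingEnd ℂ) (K x ξ) ∂μh)
    (S Sh : Set (EuclideanSpace ℝ (Fin d))) (hSmeas : MeasurableSet S) (hShmeas : MeasurableSet Sh)
    (hSsub : S ⊆ Ω) (hShsub : Sh ⊆ Ωh)
    (hSfin : (μ.withDensity fun x => ENNReal.ofReal ((1 + ‖x‖) ^ (2 * m))) S < ⊤) (hShfin : (μh.withDensity fun ξ => ENNReal.ofReal ((1 + ‖ξ‖) ^ (2 * mh))) Sh < ⊤)
    (n : ℕ) (g : Fin n → EuclideanSpace ℝ (Fin d) → ℂ)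
    (hgL2 : ∀ i, MemLp (g i) 2 μ)
    (hgS : ∀ i, ∀ᵐ x ∂μ, x ∉ S → g i x = 0)
    (hgSh : ∀ i, ∀ᵐ ξ ∂μh, ξ ∉ Sh → T (g i) ξ = 0)
    (hgind : ∀ α : Fin n → ℂ,
      (fun x => ∑ i : Fin n, α i * g i x) =ᵐ[μ] 0 → ∀ i, α i = 0) :
    (n : ℝ≥0∞) ≤ ENNReal.ofReal (cT ^ 2) * ((μ.withDensity fun x => ENNReal.ofReal ((1 + ‖x‖) ^ (2 * m))) S) * ((μh.withDensity fun ξ => ENNReal.ofReal ((1 + ‖ξ‖) ^ (2 * mh))) Sh) := by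
  classical
  set B := (μh.withDensity fun ξ => ENNReal.ofReal ((1 + ‖ξ‖) ^ (2 * mh))) Sh with hB
  set Br := B.toReal with hBr
  -- restriction to interior
  have hfr : μ (interior Ω)ᶜ = 0 := by
    have h1 : μ (frontier Ω) = 0 := hμac (hΩconv.addHaar_frontier volume)
    have h2 : (interior Ω)ᶜ ⊆ Ωᶜ ∪ frontier Ω := by
      intro x hx
      by_cases hxΩ : x ∈ Ω
      · exact Or.inr ⟨subset_closure hxΩ, hx⟩
      · exact Or.inl hxΩ
    exact measure_mono_null h2 (measure_union_null hμΩ h1)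
  have hμres : μ.restrict (interior Ω) = μ :=
    Measure.restrict_eq_self_of_ae_mem (by rw [ae_iff]; exact hfr)
  have hKmeas : ∀ ξ ∈ Ωh, AEStronglyMeasurable (fun x => K x ξ) μ := by
    intro ξ hξ
    have hc : ContinuousOn (fun x => K x ξ) Ω :=
      hKcont.comp (Continuous.continuousOn (continuous_id.prodMk continuous_const))
        (fun x hx => ⟨hx, hξ⟩)
    have h := ((hc.mono interior_subset).aestronglyMeasurable (μ := μ) isOpen_interior.measurableSet)
    rwa [hμres] at h
  have hμhae : ∀ᵐ ξ ∂μh, ξ ∈ Ωh := by rw [ae_iff]; exact hμhΩ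
  -- integrability of g i against the weight
  have hgInt : ∀ i, Integrable (g i)
      (μ.withDensity fun x => ENNReal.ofReal ((1 + ‖x‖) ^ m)) :=
    fun i => my_keyInt μ m hSmeas (hgL2 i) (hgS i) hSfin
  have hgnormInt : ∀ i, Integrable (fun x => ‖g i x‖ * ((1 + ‖x‖) ^ m)) μ := by
    intro i
    have h := (hgInt i).norm
    rw [integrable_withDensity_iff (my_W_meas m)
      (by filter_upwards with x; exact ENNReal.ofReal_lt_top)] at h
    have heq : (fun x : EuclideanSpace ℝ (Fin d) =>
        ‖g i x‖ * (ENNReal.ofReal ((1 + ‖x‖) ^ m)).toReal)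
        = fun x => ‖g i x‖ * (1 + ‖x‖) ^ m := by
      funext x
      rw [ENNReal.toReal_ofReal (by positivity)]
    rwa [heq] at h
  have hgKInt : ∀ i, ∀ ξ ∈ Ωh, Integrable (fun x => g i x * K x ξ) μ := by
    intro i ξ hξ
    refine Integrable.mono' ((hgnormInt i).const_mul (cT * (1 + ‖ξ‖) ^ mh))
      ((hgL2 i).1.mul (hKmeas ξ hξ)) ?_
    filter_upwards with x
    rw [norm_mul]
    calc ‖g i x‖ * ‖K x ξ‖
        ≤ ‖g i x‖ * (cT * (1 + ‖x‖) ^ m * (1 + ‖ξ‖) ^ mh) :=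
          mul_le_mul_of_nonneg_left (hKbound x ξ) (norm_nonneg _)
      _ = cT * (1 + ‖ξ‖) ^ mh * (‖g i x‖ * (1 + ‖x‖) ^ m) := by ring
  -- MemLp of linear combinations
  have hcombMem : ∀ co : Fin n → ℂ, MemLp (fun x => ∑ i : Fin n, co i * g i x) 2 μ :=
    fun co => memLp_finset_sum Finset.univ (fun i _ => (hgL2 i).const_mul (co i))
  -- the key a.e. bound, for a fixed coefficient vector
  have key : ∀ α : Fin n → ℂ, ∀ᵐ x ∂μ,
      ‖∑ i : Fin n, α i * g i x‖ ≤ cT * (1 + ‖x‖) ^ m * Real.sqrt Br *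
        ‖(∑ i : Fin n, α i • (hgL2 i).toLp (g i) : Lp ℂ 2 μ)‖ := by
    intro α
    set f : EuclideanSpace ℝ (Fin d) → ℂ := fun x => ∑ i : Fin n, α i * g i x with hf
    have hfMem : MemLp f 2 μ := hcombMem α
    have hfInt : Integrable f (μ.withDensity fun x => ENNReal.ofReal ((1 + ‖x‖) ^ m)) :=
      integrable_finset_sum _ (fun i _ => (hgInt i).const_mul (α i))
    have hTf : ∀ ξ ∈ Ωh, T f ξ = ∑ i : Fin n, α i * T (g i) ξ := by
      intro ξ hξ
      rw [hTint f hfInt ξ]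
      have h1 : ∫ x, f x * K x ξ ∂μ = ∫ x, ∑ i : Fin n, α i * (g i x * K x ξ) ∂μ := by
        refine integral_congr_ae (Filter.Eventually.of_forall fun x => ?_)
        show (∑ i : Fin n, α i * g i x) * K x ξ = ∑ i : Fin n, α i * (g i x * K x ξ)
        rw [Finset.sum_mul]
        exact Finset.sum_congr rfl fun i _ => (mul_assoc _ _ _)
      rw [h1, integral_finset_sum _ (fun i _ => ((hgKInt i ξ hξ).const_mul (α i)))]
      refine Finset.sum_congr rfl fun i _ => ?_
      rw [integral_const_mul, hTint (g i) (hgInt i) ξ]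
    have hTf0 : ∀ᵐ ξ ∂μh, ξ ∉ Sh → T f ξ = 0 := by
      filter_upwards [hμhae, ae_all_iff.2 hgSh] with ξ h1 h2 h3
      rw [hTf ξ h1]
      exact Finset.sum_eq_zero fun i _ => by rw [h2 i h3, mul_zero]
    have hTfMem : MemLp (T f) 2 μh := by
      refine ⟨hTmeas f hfMem, ?_⟩
      rw [my_eLpNorm_two, hTplan f hfMem, ← my_eLpNorm_two]
      exact hfMem.2
    have hTfInt : Integrable (T f)
        (μh.withDensity fun ξ => ENNReal.ofReal ((1 + ‖ξ‖) ^ mh)) :=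
      my_keyInt μh mh hShmeas hTfMem hTf0 hShfin
    have hinv := hTinv f hfInt hTfInt
    filter_upwards [hinv] with x hx
    set F : Lp ℂ 2 μ := ∑ i : Fin n, α i • (hgL2 i).toLp (g i) with hF
    have hRHS0 : (0:ℝ) ≤ cT * (1 + ‖x‖) ^ m * Real.sqrt Br * ‖F‖ := by positivity
    rw [← ENNReal.ofReal_le_ofReal_iff hRHS0, ofReal_norm]
    have step1 : (‖f x‖₊ : ℝ≥0∞) ≤ ∫⁻ ξ, ‖T f ξ * (starRingEnd ℂ) (K x ξ)‖₊ ∂μh := by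
      rw [hx]
      exact enorm_integral_le_lintegral_enorm _
    have step2 : ∫⁻ ξ, (‖T f ξ * (starRingEnd ℂ) (K x ξ)‖₊ : ℝ≥0∞) ∂μh
        ≤ ENNReal.ofReal (cT * (1 + ‖x‖) ^ m) *
          ∫⁻ ξ, (‖T f ξ‖₊ : ℝ≥0∞) *
            Sh.indicator (fun ξ => ENNReal.ofReal ((1 + ‖ξ‖) ^ mh)) ξ ∂μh := by
      rw [← lintegral_const_mul' _ _ ENNReal.ofReal_ne_top]
      refine lintegral_mono_ae ?_
      filter_upwards [hTf0] with ξ hξ0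
      by_cases hξs : ξ ∈ Sh
      · rw [Set.indicator_of_mem hξs]
        have e1 : (‖T f ξ * (starRingEnd ℂ) (K x ξ)‖₊ : ℝ≥0∞)
            = (‖T f ξ‖₊ : ℝ≥0∞) * (‖K x ξ‖₊ : ℝ≥0∞) := by
          rw [nnnorm_mul, RCLike.nnnorm_conj, ENNReal.coe_mul]
        rw [e1]
        have e2 : (‖K x ξ‖₊ : ℝ≥0∞)
            ≤ ENNReal.ofReal (cT * (1 + ‖x‖) ^ m) * ENNReal.ofReal ((1 + ‖ξ‖) ^ mh) := by
          rw [← enorm_eq_nnnorm, ← ofReal_norm, ← ENNReal.ofReal_mul (by positivity)]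
          exact ENNReal.ofReal_le_ofReal (hKbound x ξ)
        calc (‖T f ξ‖₊ : ℝ≥0∞) * (‖K x ξ‖₊ : ℝ≥0∞)
            ≤ (‖T f ξ‖₊ : ℝ≥0∞) * (ENNReal.ofReal (cT * (1 + ‖x‖) ^ m)
              * ENNReal.ofReal ((1 + ‖ξ‖) ^ mh)) := mul_le_mul_right e2 _
          _ = ENNReal.ofReal (cT * (1 + ‖x‖) ^ m) *
              ((‖T f ξ‖₊ : ℝ≥0∞) * ENNReal.ofReal ((1 + ‖ξ‖) ^ mh)) := by ring
      · rw [hξ0 hξs]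
        simp
    have step3 : ∫⁻ ξ, (‖T f ξ‖₊ : ℝ≥0∞) *
          Sh.indicator (fun ξ => ENNReal.ofReal ((1 + ‖ξ‖) ^ mh)) ξ ∂μh
        ≤ (∫⁻ ξ, (‖T f ξ‖₊ : ℝ≥0∞) ^ 2 ∂μh) ^ (1/2:ℝ) *
          (∫⁻ ξ, (Sh.indicator (fun ξ => ENNReal.ofReal ((1 + ‖ξ‖) ^ mh)) ξ) ^ 2 ∂μh) ^ (1/2:ℝ) :=
      my_hold2 _ _ (AEStronglyMeasurable.enorm (hTmeas f hfMem)) ((my_W_meas mh).indicator hShmeas).aemeasurable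
    have eqA : (∫⁻ ξ, (‖T f ξ‖₊ : ℝ≥0∞) ^ 2 ∂μh) ^ (1/2:ℝ) = ENNReal.ofReal ‖F‖ := by
      rw [hTplan f hfMem, ← my_eLpNorm_two]
      have : eLpNorm f 2 μ = eLpNorm (F : EuclideanSpace ℝ (Fin d) → ℂ) 2 μ := by
        refine eLpNorm_congr_ae ?_
        rw [hF]
        exact (my_coeFn_comb α g hgL2).symm
      rw [this, Lp.norm_def, ENNReal.ofReal_toReal (Lp.eLpNorm_ne_top _)]
    have eqB : (∫⁻ ξ, (Sh.indicator (fun ξ => ENNReal.ofReal ((1 + ‖ξ‖) ^ mh)) ξ) ^ 2 ∂μh) ^ (1/2:ℝ)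
        = ENNReal.ofReal (Real.sqrt Br) := by
      rw [my_ind_sq μh mh hShmeas, ← hB, ← ENNReal.ofReal_toReal hShfin.ne, ← hBr,
        ENNReal.ofReal_rpow_of_nonneg ENNReal.toReal_nonneg (by norm_num), Real.sqrt_eq_rpow]
    calc (‖f x‖₊ : ℝ≥0∞)
        ≤ ENNReal.ofReal (cT * (1 + ‖x‖) ^ m) * (ENNReal.ofReal ‖F‖ * ENNReal.ofReal (Real.sqrt Br)) := by
          refine step1.trans (step2.trans ?_)
          rw [← eqA, ← eqB]
          exact mul_le_mul_right step3 _
      _ = ENNReal.ofReal (cT * (1 + ‖x‖) ^ m * Real.sqrt Br * ‖F‖) := by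
          rw [← ENNReal.ofReal_mul (norm_nonneg F), ← ENNReal.ofReal_mul (by positivity : (0:ℝ) ≤ cT * (1 + ‖x‖) ^ m)]
          congr 1
          ring
  -- uniformize over a countable dense set of coefficient vectors
  obtain ⟨D, hDc, hDd⟩ := TopologicalSpace.exists_countable_dense (Fin n → ℂ)
  have hall : ∀ᵐ x ∂μ,
      (∀ α : Fin n → ℂ, ‖∑ i : Fin n, α i * g i x‖ ≤ cT * (1 + ‖x‖) ^ m * Real.sqrt Br *
        ‖(∑ i : Fin n, α i • (hgL2 i).toLp (g i) : Lp ℂ 2 μ)‖)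
      ∧ (x ∉ S → ∀ i, g i x = 0) := by
    have h1 : ∀ᵐ x ∂μ, ∀ α ∈ D, ‖∑ i : Fin n, α i * g i x‖ ≤ cT * (1 + ‖x‖) ^ m * Real.sqrt Br *
        ‖(∑ i : Fin n, α i • (hgL2 i).toLp (g i) : Lp ℂ 2 μ)‖ :=
      (ae_ball_iff hDc).2 (fun α _ => key α)
    filter_upwards [h1, ae_all_iff.2 hgS] with x hx1 hx2
    refine ⟨?_, fun hxS i => hx2 i hxS⟩
    intro α
    have hcont1 : Continuous fun α : Fin n → ℂ => ‖∑ i : Fin n, α i * g i x‖ :=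
      (continuous_finset_sum _ fun i _ => (continuous_apply i).mul continuous_const).norm
    have hcont2 : Continuous fun α : Fin n → ℂ =>
        cT * (1 + ‖x‖) ^ m * Real.sqrt Br *
          ‖(∑ i : Fin n, α i • (hgL2 i).toLp (g i) : Lp ℂ 2 μ)‖ :=
      continuous_const.mul
        (continuous_finset_sum _ fun i _ => (continuous_apply i).smul continuous_const).norm
    have hcl : IsClosed {α : Fin n → ℂ | ‖∑ i : Fin n, α i * g i x‖ ≤
        cT * (1 + ‖x‖) ^ m * Real.sqrt Br *
          ‖(∑ i : Fin n, α i • (hgL2 i).toLp (g i) : Lp ℂ 2 μ)‖} :=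
      isClosed_le hcont1 hcont2
    have hsub : D ⊆ {α : Fin n → ℂ | ‖∑ i : Fin n, α i * g i x‖ ≤
        cT * (1 + ‖x‖) ^ m * Real.sqrt Br *
          ‖(∑ i : Fin n, α i • (hgL2 i).toLp (g i) : Lp ℂ 2 μ)‖} := fun β hβ => hx1 β hβ
    have huniv : (Set.univ : Set (Fin n → ℂ)) ⊆ {α : Fin n → ℂ | ‖∑ i : Fin n, α i * g i x‖ ≤
        cT * (1 + ‖x‖) ^ m * Real.sqrt Br *
          ‖(∑ i : Fin n, α i • (hgL2 i).toLp (g i) : Lp ℂ 2 μ)‖} := by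
      rw [← hDd.closure_eq]
      exact hcl.closure_subset_iff.2 hsub
    exact huniv (Set.mem_univ α)
  -- linear independence in L²
  have hGli : LinearIndependent ℂ fun i => (hgL2 i).toLp (g i) := by
    rw [Fintype.linearIndependent_iff]
    intro c hc
    apply hgind c
    have h0 : (((∑ i : Fin n, c i • (hgL2 i).toLp (g i) : Lp ℂ 2 μ)) : EuclideanSpace ℝ (Fin d) → ℂ)
        =ᵐ[μ] 0 := by
      rw [hc]
      exact Lp.coeFn_zero ℂ 2 μ
    exact (my_coeFn_comb c g hgL2).symm.trans h0
  -- orthonormal basis of the span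
  set V := Submodule.span ℂ (Set.range fun i => (hgL2 i).toLp (g i)) with hV
  haveI : FiniteDimensional ℂ V := FiniteDimensional.span_of_finite ℂ (Set.finite_range _)
  have hrank : Module.finrank ℂ V = n := by
    rw [hV, finrank_span_eq_card hGli, Fintype.card_fin]
  let ob : OrthonormalBasis (Fin n) ℂ V := (stdOrthonormalBasis ℂ V).reindex (finCongr hrank)
  have hon : Orthonormal ℂ fun j => ((ob j : V) : Lp ℂ 2 μ) :=
    ob.orthonormal.comp_linearIsometry V.subtypeₗᵢ
  have hcoef : ∀ j, ∃ c : Fin n → ℂ,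
      ∑ i : Fin n, c i • (hgL2 i).toLp (g i) = ((ob j : V) : Lp ℂ 2 μ) := by
    intro j
    exact (Submodule.mem_span_range_iff_exists_fun ℂ).1 ((ob j).2)
  choose c hc using hcoef
  -- algebraic identities
  have hscalar : ∀ (β : Fin n → ℂ) (x : EuclideanSpace ℝ (Fin d)),
      ∑ i : Fin n, (∑ j : Fin n, β j * c j i) * g i x
        = ∑ j : Fin n, β j * ∑ i : Fin n, c j i * g i x := by
    intro β x
    simp only [Finset.sum_mul, Finset.mul_sum]
    rw [Finset.sum_comm]
    exact Finset.sum_congr rfl fun j _ => Finset.sum_congr rfl fun i _ => (mul_assoc _ _ _)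
  have hLp : ∀ β : Fin n → ℂ,
      (∑ i : Fin n, (∑ j : Fin n, β j * c j i) • (hgL2 i).toLp (g i) : Lp ℂ 2 μ)
        = ∑ j : Fin n, β j • ((ob j : V) : Lp ℂ 2 μ) := by
    intro β
    calc (∑ i : Fin n, (∑ j : Fin n, β j * c j i) • (hgL2 i).toLp (g i) : Lp ℂ 2 μ)
        = ∑ i : Fin n, ∑ j : Fin n, (β j * c j i) • (hgL2 i).toLp (g i) := by
          refine Finset.sum_congr rfl fun i _ => ?_
          rw [Finset.sum_smul]
      _ = ∑ j : Fin n, ∑ i : Fin n, (β j * c j i) • (hgL2 i).toLp (g i) := Finset.sum_comm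
      _ = ∑ j : Fin n, β j • ((ob j : V) : Lp ℂ 2 μ) := by
          refine Finset.sum_congr rfl fun j _ => ?_
          rw [← hc j, Finset.smul_sum]
          exact Finset.sum_congr rfl fun i _ => (mul_smul _ _ _)
  have honnorm : ∀ β : Fin n → ℂ,
      ‖(∑ j : Fin n, β j • ((ob j : V) : Lp ℂ 2 μ) : Lp ℂ 2 μ)‖
        = Real.sqrt (∑ j : Fin n, ‖β j‖ ^ 2) := by
    intro β
    rw [← my_onb_norm hon β, Real.sqrt_sq (norm_nonneg _)]
  -- pointwise bound on the sum of squares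
  have hptw : ∀ᵐ x ∂μ,
      (∑ j : Fin n, ‖∑ i : Fin n, c j i * g i x‖ ^ 2)
        ≤ (cT * (1 + ‖x‖) ^ m * Real.sqrt Br) ^ 2
      ∧ (x ∉ S → ∀ j, (∑ i : Fin n, c j i * g i x) = (0:ℂ)) := by
    filter_upwards [hall] with x hx
    obtain ⟨hx1, hx2⟩ := hx
    refine ⟨?_, fun hxS j => Finset.sum_eq_zero fun i _ => by rw [hx2 hxS i, mul_zero]⟩
    set Q : ℝ := ∑ j : Fin n, ‖∑ i : Fin n, c j i * g i x‖ ^ 2 with hQ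
    have hQnn : 0 ≤ Q := Finset.sum_nonneg fun j _ => sq_nonneg _
    set β : Fin n → ℂ := fun j => (starRingEnd ℂ) (∑ i : Fin n, c j i * g i x) with hβ
    have hQb : Q ≤ cT * (1 + ‖x‖) ^ m * Real.sqrt Br * Real.sqrt Q := by
      have h1 := hx1 (fun i => ∑ j : Fin n, β j * c j i)
      have e1 : ∑ i : Fin n, (∑ j : Fin n, β j * c j i) * g i x = (Q : ℂ) := by
        rw [hscalar β x]
        have : ∀ j : Fin n, β j * (∑ i : Fin n, c j i * g i x)
            = ((‖∑ i : Fin n, c j i * g i x‖ ^ 2 : ℝ) : ℂ) := by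
          intro j
          rw [hβ]
          rw [mul_comm, Complex.mul_conj']
          push_cast
          ring
        rw [Finset.sum_congr rfl fun j _ => this j, hQ]
        push_cast
        ring
      have e3 : ∑ j : Fin n, ‖β j‖ ^ 2 = Q := by
        refine Finset.sum_congr rfl fun j _ => ?_
        rw [hβ, RCLike.norm_conj]
      rw [e1, hLp β, honnorm β, e3] at h1
      rwa [Complex.norm_real, Real.norm_of_nonneg hQnn] at h1
    by_cases hQ0 : Q = 0
    · rw [hQ0]
      positivity
    · have hQpos : 0 < Q := lt_of_le_of_ne hQnn (Ne.symm hQ0)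
      have hs : 0 < Real.sqrt Q := Real.sqrt_pos.2 hQpos
      have h2 : Real.sqrt Q * Real.sqrt Q ≤ (cT * (1 + ‖x‖) ^ m * Real.sqrt Br) * Real.sqrt Q := by
        rwa [Real.mul_self_sqrt hQnn]
      have h3 : Real.sqrt Q ≤ cT * (1 + ‖x‖) ^ m * Real.sqrt Br :=
        (mul_le_mul_iff_of_pos_right hs).1 h2
      calc Q = Real.sqrt Q ^ 2 := (Real.sq_sqrt hQnn).symm
        _ ≤ (cT * (1 + ‖x‖) ^ m * Real.sqrt Br) ^ 2 :=
          pow_le_pow_left₀ (Real.sqrt_nonneg _) h3 2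
  -- each normalized function has L² mass one
  have hone : ∀ j : Fin n, ∫⁻ x, ((‖∑ i : Fin n, c j i * g i x‖₊ : ℝ≥0∞)) ^ 2 ∂μ = 1 := by
    intro j
    have h1 : eLpNorm (fun x => ∑ i : Fin n, c j i * g i x) 2 μ = 1 := by
      rw [← eLpNorm_congr_ae (my_coeFn_comb (c j) g hgL2), hc j]
      have h2 : ‖((ob j : V) : Lp ℂ 2 μ)‖ = 1 := hon.1 j
      rw [Lp.norm_def] at h2
      rwa [ENNReal.toReal_eq_one_iff] at h2
    rw [my_eLpNorm_two] at h1
    exact my_rpow_half h1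
  have haemeas : ∀ j : Fin n,
      AEMeasurable (fun x => ((‖∑ i : Fin n, c j i * g i x‖₊ : ℝ≥0∞)) ^ 2) μ :=
    fun j => (hcombMem (c j)).aestronglyMeasurable.enorm.pow_const 2
  -- final computation
  calc (n : ℝ≥0∞) = ∑ _j : Fin n, (1:ℝ≥0∞) := by simp
    _ = ∑ j : Fin n, ∫⁻ x, ((‖∑ i : Fin n, c j i * g i x‖₊ : ℝ≥0∞)) ^ 2 ∂μ :=
        Finset.sum_congr rfl fun j _ => (hone j).symm
    _ = ∫⁻ x, ∑ j : Fin n, ((‖∑ i : Fin n, c j i * g i x‖₊ : ℝ≥0∞)) ^ 2 ∂μ :=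
        (lintegral_finset_sum' _ (fun j _ => haemeas j)).symm
    _ ≤ ∫⁻ x, S.indicator
          (fun x => ENNReal.ofReal ((cT * (1 + ‖x‖) ^ m * Real.sqrt Br) ^ 2)) x ∂μ := by
        refine lintegral_mono_ae ?_
        filter_upwards [hptw] with x hx
        by_cases hxS : x ∈ S
        · rw [Set.indicator_of_mem hxS]
          have he : ∀ j : Fin n, ((‖∑ i : Fin n, c j i * g i x‖₊ : ℝ≥0∞)) ^ 2
              = ENNReal.ofReal (‖∑ i : Fin n, c j i * g i x‖ ^ 2) := by
            intro j
            rw [ENNReal.ofReal_pow (norm_nonneg _), ofReal_norm, enorm_eq_nnnorm]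
          calc ∑ j : Fin n, ((‖∑ i : Fin n, c j i * g i x‖₊ : ℝ≥0∞)) ^ 2
              = ENNReal.ofReal (∑ j : Fin n, ‖∑ i : Fin n, c j i * g i x‖ ^ 2) := by
                rw [ENNReal.ofReal_sum_of_nonneg (fun j _ => sq_nonneg _)]
                exact Finset.sum_congr rfl fun j _ => he j
            _ ≤ ENNReal.ofReal ((cT * (1 + ‖x‖) ^ m * Real.sqrt Br) ^ 2) :=
                ENNReal.ofReal_le_ofReal hx.1
        · rw [Set.indicator_of_notMem hxS]
          have hz : ∀ j, (∑ i : Fin n, c j i * g i x) = (0:ℂ) := hx.2 hxS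
          simp [hz]
    _ = ENNReal.ofReal (cT ^ 2 * Br) *
          ((μ.withDensity fun x => ENNReal.ofReal ((1 + ‖x‖) ^ (2 * m))) S) := by
        rw [lintegral_indicator hSmeas]
        have heq : ∀ x : EuclideanSpace ℝ (Fin d),
            ENNReal.ofReal ((cT * (1 + ‖x‖) ^ m * Real.sqrt Br) ^ 2)
              = ENNReal.ofReal (cT ^ 2 * Br) * ENNReal.ofReal ((1 + ‖x‖) ^ (2 * m)) := by
          intro x
          rw [← ENNReal.ofReal_mul (by positivity)]
          congr 1
          have h1 : ((1 + ‖x‖ : ℝ) ^ m) ^ 2 = (1 + ‖x‖) ^ (2 * m) :=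
            my_rpow_sq (by positivity) m
          calc (cT * (1 + ‖x‖) ^ m * Real.sqrt Br) ^ 2
              = cT ^ 2 * (Real.sqrt Br ^ 2) * ((1 + ‖x‖) ^ m) ^ 2 := by ring
            _ = cT ^ 2 * Br * ((1 + ‖x‖) ^ m) ^ 2 := by
                rw [Real.sq_sqrt ENNReal.toReal_nonneg]
            _ = cT ^ 2 * Br * (1 + ‖x‖) ^ (2 * m) := by rw [h1]
        calc ∫⁻ x in S, ENNReal.ofReal ((cT * (1 + ‖x‖) ^ m * Real.sqrt Br) ^ 2) ∂μ
            = ∫⁻ x in S, ENNReal.ofReal (cT ^ 2 * Br)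
                * ENNReal.ofReal ((1 + ‖x‖) ^ (2 * m)) ∂μ := lintegral_congr fun x => heq x
          _ = ENNReal.ofReal (cT ^ 2 * Br)
                * ∫⁻ x in S, ENNReal.ofReal ((1 + ‖x‖) ^ (2 * m)) ∂μ :=
              lintegral_const_mul' _ _ ENNReal.ofReal_ne_top
          _ = ENNReal.ofReal (cT ^ 2 * Br)
                * ((μ.withDensity fun x => ENNReal.ofReal ((1 + ‖x‖) ^ (2 * m))) S) := by
              rw [← withDensity_apply _ hSmeas]
    _ = ENNReal.ofReal (cT ^ 2) *
          ((μ.withDensity fun x => ENNReal.ofReal ((1 + ‖x‖) ^ (2 * m))) S) *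
          ((μh.withDensity fun ξ => ENNReal.ofReal ((1 + ‖ξ‖) ^ (2 * mh))) Sh) := by
        rw [ENNReal.ofReal_mul (by positivity), hBr, ENNReal.ofReal_toReal hShfin.ne, hB]
        ring
end

section
/- (Donoho–Stark uncertainty principle for the Fourier transform.) Let S, Σ ⊂ ℝ^d be measurable, let ε₁, ε₂ ≥ 0 with ε₁² + ε₂² ≤ 1, and let f ∈ L²(ℝ^d) with ∫_{ℝ^d} |f(x)|² dx = 1. If ∫_{ℝ^d∖S} |f(x)|² dx ≤ ε₁² and ∫_{ℝ^d∖Σ} |F f(ξ)|² dξ ≤ ε₂², then |S| · |Σ| ≥ (2π)^d (1 − √(ε₁² + ε₂²))², where |·| denotes Lebesgue measure. -/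
open MeasureTheory
open scoped ENNReal NNReal

lemma aux_real (u v : ℝ) (hu : 0 ≤ u) (h1 : u^2 + v^2 ≤ 1) :
    1 - Real.sqrt (u^2 + v^2) ≤ Real.sqrt (1 - v^2) - u := by
  have hv2 : 0 ≤ 1 - v^2 := by nlinarith [sq_nonneg u]
  set a := Real.sqrt (1 - v^2) with ha0
  set b := Real.sqrt (u^2 + v^2) with hb0
  have ha : a^2 = 1 - v^2 := Real.sq_sqrt hv2
  have hb : b^2 = u^2 + v^2 := Real.sq_sqrt (by positivity)
  have ha' : 0 ≤ a := Real.sqrt_nonneg _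
  have hb' : 0 ≤ b := Real.sqrt_nonneg _
  have hab : u ≤ a * b := by
    rw [ha0, hb0, ← Real.sqrt_mul hv2]
    rw [show ((1 - v^2) * (u^2 + v^2)) = u^2 + v^2*(1 - u^2 - v^2) by ring]
    have h2 : u = Real.sqrt (u^2) := (Real.sqrt_sq hu).symm
    nth_rewrite 1 [h2]
    apply Real.sqrt_le_sqrt
    nlinarith [mul_nonneg (sq_nonneg v) (by linarith : (0:ℝ) ≤ 1 - u^2 - v^2)]
  nlinarith [sq_nonneg (a + b - 1 - u), sq_nonneg (a + b + 1 + u)]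

lemma aux_eLp2 {α : Type*} [MeasurableSpace α] (μ : Measure α) (u : α → ℂ) :
    eLpNorm u 2 μ = (∫⁻ x, (‖u x‖₊ : ℝ≥0∞) ^ 2 ∂μ) ^ (1/2 : ℝ) := by
  rw [eLpNorm_eq_lintegral_rpow_enorm_toReal (by norm_num) (by norm_num)]
  congr 1
  refine lintegral_congr fun x => ?_
  rw [show ((2:ℝ≥0∞).toReal) = ((2:ℕ):ℝ) by norm_num, ENNReal.rpow_natCast, enorm_eq_nnnorm]

lemma aux_sq_rpow (x : ℝ≥0∞) : (x ^ (1/2 : ℝ)) ^ 2 = x := by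
  rw [← ENNReal.rpow_natCast (x ^ (1/2:ℝ)) 2, ← ENNReal.rpow_mul]
  norm_num

theorem stmt_16
    (d : ℕ) (hd : 1 ≤ d)
    (Fr : (EuclideanSpace ℝ (Fin d) → ℂ) → EuclideanSpace ℝ (Fin d) → ℂ)
    (hFrdef : ∀ f : EuclideanSpace ℝ (Fin d) → ℂ, Integrable f volume → ∀ ξ,
      Fr f ξ = (((2 * Real.pi) ^ (-(d : ℝ) / 2) : ℝ) : ℂ) *
        ∫ x, f x * Complex.exp (-(Complex.I * ((inner ℝ x ξ : ℝ) : ℂ))) ∂volume)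
    (hFrmeas : ∀ f : EuclideanSpace ℝ (Fin d) → ℂ, MemLp f 2 volume → AEStronglyMeasurable (Fr f) volume)
    (hFradd : ∀ f g : EuclideanSpace ℝ (Fin d) → ℂ, MemLp f 2 volume → MemLp g 2 volume →
      Fr (f + g) =ᵐ[volume] Fr f + Fr g)
    (hFrsmul : ∀ (c : ℂ) (f : EuclideanSpace ℝ (Fin d) → ℂ), MemLp f 2 volume → Fr (c • f) =ᵐ[volume] c • Fr f)
    (hFrplan : ∀ f : EuclideanSpace ℝ (Fin d) → ℂ, MemLp f 2 volume →
      ∫⁻ ξ, (‖Fr f ξ‖₊ : ℝ≥0∞) ^ 2 ∂volume = ∫⁻ x, (‖f x‖₊ : ℝ≥0∞) ^ 2 ∂volume)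
    (hFrsurj : ∀ g : EuclideanSpace ℝ (Fin d) → ℂ, MemLp g 2 volume →
      ∃ f : EuclideanSpace ℝ (Fin d) → ℂ, MemLp f 2 volume ∧ Fr f =ᵐ[volume] g)
    (S Sh : Set (EuclideanSpace ℝ (Fin d))) (hSmeas : MeasurableSet S) (hShmeas : MeasurableSet Sh)
    (ε₁ ε₂ : ℝ) (hε₁ : 0 ≤ ε₁) (hε₂ : 0 ≤ ε₂) (hε : ε₁ ^ 2 + ε₂ ^ 2 ≤ 1)
    (f : EuclideanSpace ℝ (Fin d) → ℂ) (hf : MemLp f 2 volume)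
    (hnorm : (∫⁻ x, (‖f x‖₊ : ℝ≥0∞) ^ 2 ∂volume) = 1)
    (hconc : (∫⁻ x in Sᶜ, (‖f x‖₊ : ℝ≥0∞) ^ 2 ∂volume) ≤ ENNReal.ofReal (ε₁ ^ 2))
    (hband : (∫⁻ ξ in Shᶜ, (‖Fr f ξ‖₊ : ℝ≥0∞) ^ 2 ∂volume) ≤ ENNReal.ofReal (ε₂ ^ 2)) :
    ENNReal.ofReal ((2 * Real.pi) ^ d * (1 - Real.sqrt (ε₁ ^ 2 + ε₂ ^ 2)) ^ 2) ≤
      volume S * volume Sh := by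
  have htotF : (∫⁻ ξ, (‖Fr f ξ‖₊ : ℝ≥0∞) ^ 2 ∂volume) = 1 := (hFrplan f hf).trans hnorm
  -- degenerate cases
  by_cases hS0 : volume S = 0
  · have hz : volume.restrict S = 0 := Measure.restrict_eq_zero.mpr hS0
    have h1 : (1:ℝ≥0∞) ≤ ENNReal.ofReal (ε₁ ^ 2) := by
      have := lintegral_add_compl (fun x => (‖f x‖₊ : ℝ≥0∞) ^ 2) hSmeas (μ := volume)
      rw [hnorm] at this
      calc (1:ℝ≥0∞) = _ := this.symm
        _ = ∫⁻ x in Sᶜ, (‖f x‖₊ : ℝ≥0∞) ^ 2 ∂volume := by rw [hz]; simp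
        _ ≤ _ := hconc
    have hsum : ε₁ ^ 2 + ε₂ ^ 2 = 1 :=
      le_antisymm hε (by nlinarith [ENNReal.one_le_ofReal.mp h1, sq_nonneg ε₂])
    rw [hsum, Real.sqrt_one]
    simp
  by_cases hSh0 : volume Sh = 0
  · have hz : volume.restrict Sh = 0 := Measure.restrict_eq_zero.mpr hSh0
    have h1 : (1:ℝ≥0∞) ≤ ENNReal.ofReal (ε₂ ^ 2) := by
      have := lintegral_add_compl (fun ξ => (‖Fr f ξ‖₊ : ℝ≥0∞) ^ 2) hShmeas (μ := volume)
      rw [htotF] at this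
      calc (1:ℝ≥0∞) = _ := this.symm
        _ = ∫⁻ ξ in Shᶜ, (‖Fr f ξ‖₊ : ℝ≥0∞) ^ 2 ∂volume := by rw [hz]; simp
        _ ≤ _ := hband
    have hsum : ε₁ ^ 2 + ε₂ ^ 2 = 1 :=
      le_antisymm hε (by nlinarith [ENNReal.one_le_ofReal.mp h1, sq_nonneg ε₁])
    rw [hsum, Real.sqrt_one]
    simp
  by_cases hST : volume S = ⊤
  · rw [hST, ENNReal.top_mul hSh0]; exact le_top
  by_cases hShT : volume Sh = ⊤
  · rw [hShT, ENNReal.mul_top' , if_neg hS0]; exact le_top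
  -- main case
  set g := S.indicator f with hgdef
  have hg : MemLp g 2 volume := hf.indicator hSmeas
  have hgint : Integrable g volume := by
    rw [hgdef, integrable_indicator_iff hSmeas]
    have : IsFiniteMeasure (volume.restrict S) :=
      ⟨by rw [Measure.restrict_apply_univ]; exact lt_top_iff_ne_top.mpr hST⟩
    exact (hf.restrict S).integrable one_le_two
  have hh : MemLp (f - g) 2 volume := hf.sub hg
  have hsplit : Fr f =ᵐ[volume] Fr g + Fr (f - g) := by
    have h2 := hFradd g (f - g) hg hh
    rw [show g + (f - g) = f by abel] at h2
    exact h2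
  have htri : eLpNorm (Fr f) 2 (volume.restrict Sh) ≤
      eLpNorm (Fr g) 2 (volume.restrict Sh) + eLpNorm (Fr (f - g)) 2 (volume.restrict Sh) := by
    calc eLpNorm (Fr f) 2 (volume.restrict Sh)
        = eLpNorm (Fr g + Fr (f - g)) 2 (volume.restrict Sh) :=
          eLpNorm_congr_ae (ae_restrict_of_ae hsplit)
      _ ≤ _ := eLpNorm_add_le ((hFrmeas g hg).restrict) ((hFrmeas (f - g) hh).restrict) one_le_two
  -- Plancherel for f - g
  have hFrh : (∫⁻ ξ, (‖Fr (f - g) ξ‖₊ : ℝ≥0∞) ^ 2 ∂volume)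
      = ∫⁻ x in Sᶜ, (‖f x‖₊ : ℝ≥0∞) ^ 2 ∂volume := by
    rw [hFrplan (f - g) hh, ← lintegral_indicator hSmeas.compl]
    refine lintegral_congr fun x => ?_
    by_cases hx : x ∈ S
    · simp [hgdef, Pi.sub_apply, Set.indicator_of_mem hx, hx]
    · simp [hgdef, Pi.sub_apply, Set.indicator_of_notMem hx, hx]
  have hB : eLpNorm (Fr (f - g)) 2 (volume.restrict Sh) ≤ ENNReal.ofReal ε₁ := by
    rw [aux_eLp2]
    have h1 : (∫⁻ ξ in Sh, (‖Fr (f - g) ξ‖₊ : ℝ≥0∞) ^ 2 ∂volume) ≤ ENNReal.ofReal (ε₁ ^ 2) := by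
      refine le_trans (setLIntegral_le_lintegral _ _) ?_
      rw [hFrh]; exact hconc
    calc _ ≤ (ENNReal.ofReal (ε₁ ^ 2)) ^ (1/2 : ℝ) := ENNReal.rpow_le_rpow h1 (by norm_num)
      _ = ENNReal.ofReal ε₁ := by
          rw [ENNReal.ofReal_pow hε₁, ← ENNReal.rpow_natCast (ENNReal.ofReal ε₁) 2,
            ← ENNReal.rpow_mul]
          norm_num
  have hε₂1 : (0:ℝ) ≤ 1 - ε₂ ^ 2 := by nlinarith [sq_nonneg ε₁]
  have hC : ENNReal.ofReal (Real.sqrt (1 - ε₂ ^ 2)) ≤ eLpNorm (Fr f) 2 (volume.restrict Sh) := by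
    rw [aux_eLp2]
    have hadd := lintegral_add_compl (fun ξ => (‖Fr f ξ‖₊ : ℝ≥0∞) ^ 2) hShmeas (μ := volume)
    rw [htotF] at hadd
    have h1 : ENNReal.ofReal (1 - ε₂ ^ 2) ≤ ∫⁻ ξ in Sh, (‖Fr f ξ‖₊ : ℝ≥0∞) ^ 2 ∂volume := by
      rw [ENNReal.ofReal_sub _ (sq_nonneg ε₂), ENNReal.ofReal_one]
      refine tsub_le_iff_right.mpr ?_
      calc (1:ℝ≥0∞) = _ := hadd.symm
        _ ≤ _ + ENNReal.ofReal (ε₂ ^ 2) := add_le_add_right hband _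
    calc ENNReal.ofReal (Real.sqrt (1 - ε₂ ^ 2))
        = (ENNReal.ofReal (1 - ε₂ ^ 2)) ^ (1/2 : ℝ) := by
          rw [ENNReal.ofReal_rpow_of_nonneg hε₂1 (by norm_num), Real.sqrt_eq_rpow]
      _ ≤ _ := ENNReal.rpow_le_rpow h1 (by norm_num)
  have hA_low : ENNReal.ofReal (Real.sqrt (1 - ε₂ ^ 2) - ε₁) ≤
      eLpNorm (Fr g) 2 (volume.restrict Sh) := by
    rw [ENNReal.ofReal_sub _ hε₁]
    refine tsub_le_iff_right.mpr ?_
    calc ENNReal.ofReal (Real.sqrt (1 - ε₂ ^ 2)) ≤ _ := hC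
      _ ≤ _ := htri
      _ ≤ _ + ENNReal.ofReal ε₁ := add_le_add_right hB _
  -- Cauchy-Schwarz: L¹ norm of g
  have hf2S : eLpNorm f 2 (volume.restrict S) ≤ 1 := by
    rw [aux_eLp2]
    calc (∫⁻ x in S, (‖f x‖₊ : ℝ≥0∞) ^ 2 ∂volume) ^ (1/2:ℝ)
        ≤ (1:ℝ≥0∞) ^ (1/2:ℝ) := by
          refine ENNReal.rpow_le_rpow ?_ (by norm_num)
          rw [← hnorm]; exact setLIntegral_le_lintegral _ _
      _ = 1 := ENNReal.one_rpow _
  have hCS : (∫⁻ x, (‖g x‖₊ : ℝ≥0∞) ∂volume) ≤ (volume S) ^ (1/2 : ℝ) := by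
    have h1 : (∫⁻ x, (‖g x‖₊ : ℝ≥0∞) ∂volume) = eLpNorm f 1 (volume.restrict S) := by
      rw [eLpNorm_one_eq_lintegral_enorm, ← lintegral_indicator hSmeas]
      refine lintegral_congr fun x => ?_
      by_cases hx : x ∈ S <;> simp [hgdef, hx] <;> rfl
    rw [h1]
    calc eLpNorm f 1 (volume.restrict S)
        ≤ eLpNorm f 2 (volume.restrict S) *
            ((volume.restrict S) Set.univ) ^ (1/(1:ℝ≥0∞).toReal - 1/(2:ℝ≥0∞).toReal) :=
          eLpNorm_le_eLpNorm_mul_rpow_measure_univ one_le_two hf.1.restrict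
      _ ≤ 1 * (volume S) ^ (1/2 : ℝ) := by
          rw [Measure.restrict_apply_univ,
            show (1/(1:ℝ≥0∞).toReal - 1/(2:ℝ≥0∞).toReal) = (1/2 : ℝ) by norm_num]
          exact mul_le_mul_left hf2S _
      _ = (volume S) ^ (1/2 : ℝ) := one_mul _
  -- pointwise bound for Fr g
  have hpt : ∀ ξ, (‖Fr g ξ‖₊ : ℝ≥0∞) ≤
      ENNReal.ofReal ((2 * Real.pi) ^ (-(d:ℝ) / 2)) * (volume S) ^ (1/2 : ℝ) := by
    intro ξ
    rw [← enorm_eq_nnnorm, ← ofReal_norm, hFrdef g hgint ξ]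
    have hpos : (0:ℝ) < (2 * Real.pi) ^ (-(d:ℝ) / 2) := by positivity
    have h1 : ‖(((2 * Real.pi) ^ (-(d:ℝ) / 2) : ℝ) : ℂ) *
        ∫ x, g x * Complex.exp (-(Complex.I * ((inner ℝ x ξ : ℝ) : ℂ))) ∂volume‖
        ≤ (2 * Real.pi) ^ (-(d:ℝ) / 2) * ∫ x, ‖g x‖ ∂volume := by
      rw [norm_mul, Complex.norm_real, Real.norm_of_nonneg hpos.le]
      refine mul_le_mul_of_nonneg_left ?_ hpos.le
      refine le_trans (norm_integral_le_integral_norm _) (le_of_eq ?_)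
      have hexp : ∀ x : EuclideanSpace ℝ (Fin d),
          ‖Complex.exp (-(Complex.I * ((inner ℝ x ξ : ℝ) : ℂ)))‖ = 1 := by
        intro x
        rw [Complex.norm_exp]
        simp
      refine integral_congr_ae (Filter.Eventually.of_forall fun x => ?_)
      simp only [norm_mul, hexp x, mul_one]
    calc ENNReal.ofReal _ ≤ ENNReal.ofReal ((2 * Real.pi) ^ (-(d:ℝ) / 2) * ∫ x, ‖g x‖ ∂volume) :=
          ENNReal.ofReal_le_ofReal h1
      _ = ENNReal.ofReal ((2 * Real.pi) ^ (-(d:ℝ) / 2)) * ENNReal.ofReal (∫ x, ‖g x‖ ∂volume) :=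
          ENNReal.ofReal_mul hpos.le
      _ = ENNReal.ofReal ((2 * Real.pi) ^ (-(d:ℝ) / 2)) * ∫⁻ x, (‖g x‖₊ : ℝ≥0∞) ∂volume := by
          exact congrArg _ (ofReal_integral_norm_eq_lintegral_enorm hgint)
      _ ≤ _ := mul_le_mul_right hCS _
  set K := ENNReal.ofReal ((2 * Real.pi) ^ (-(d:ℝ) / 2)) * (volume S) ^ (1/2 : ℝ) with hKdef
  have hA_up : eLpNorm (Fr g) 2 (volume.restrict Sh) ≤ K * (volume Sh) ^ (1/2 : ℝ) := by
    rw [aux_eLp2]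
    have h1 : (∫⁻ ξ in Sh, (‖Fr g ξ‖₊ : ℝ≥0∞) ^ 2 ∂volume) ≤ K ^ 2 * volume Sh := by
      calc (∫⁻ ξ in Sh, (‖Fr g ξ‖₊ : ℝ≥0∞) ^ 2 ∂volume) ≤ ∫⁻ _ in Sh, K ^ 2 ∂volume :=
            lintegral_mono fun ξ => pow_le_pow_left₀ (by positivity) (hpt ξ) 2
        _ = K ^ 2 * volume Sh := by rw [setLIntegral_const]
    calc _ ≤ (K ^ 2 * volume Sh) ^ (1/2 : ℝ) := ENNReal.rpow_le_rpow h1 (by norm_num)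
      _ = K * (volume Sh) ^ (1/2 : ℝ) := by
          rw [ENNReal.mul_rpow_of_nonneg _ _ (by norm_num)]
          congr 1
          rw [← ENNReal.rpow_natCast K 2, ← ENNReal.rpow_mul]
          norm_num
  -- combine
  have hmain : ENNReal.ofReal (Real.sqrt (1 - ε₂ ^ 2) - ε₁) ≤ K * (volume Sh) ^ (1/2 : ℝ) :=
    hA_low.trans hA_up
  have hsq : ENNReal.ofReal ((Real.sqrt (1 - ε₂ ^ 2) - ε₁) ^ 2) ≤
      ENNReal.ofReal ((2 * Real.pi) ^ (-(d:ℝ))) * volume S * volume Sh := by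
    have hy : 0 ≤ Real.sqrt (1 - ε₂ ^ 2) - ε₁ := by
      have := aux_real ε₁ ε₂ hε₁ hε
      have h2 : Real.sqrt (ε₁^2 + ε₂^2) ≤ 1 := by
        rw [show (1:ℝ) = Real.sqrt 1 by rw [Real.sqrt_one]]
        exact Real.sqrt_le_sqrt hε
      linarith
    calc ENNReal.ofReal ((Real.sqrt (1 - ε₂ ^ 2) - ε₁) ^ 2)
        = (ENNReal.ofReal (Real.sqrt (1 - ε₂ ^ 2) - ε₁)) ^ 2 := ENNReal.ofReal_pow hy 2
      _ ≤ (K * (volume Sh) ^ (1/2 : ℝ)) ^ 2 := pow_le_pow_left₀ (by positivity) hmain 2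
      _ = ENNReal.ofReal ((2 * Real.pi) ^ (-(d:ℝ))) * volume S * volume Sh := by
          rw [hKdef, mul_pow, mul_pow, aux_sq_rpow, aux_sq_rpow,
            ← ENNReal.ofReal_pow (by positivity) 2]
          congr 2
          rw [← Real.rpow_natCast ((2 * Real.pi) ^ (-(d:ℝ)/2)) 2,
            ← Real.rpow_mul (by positivity)]
          norm_num
  have hfin : ENNReal.ofReal ((1 - Real.sqrt (ε₁ ^ 2 + ε₂ ^ 2)) ^ 2) ≤
      ENNReal.ofReal ((2 * Real.pi) ^ (-(d:ℝ))) * volume S * volume Sh := by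
    refine le_trans (ENNReal.ofReal_le_ofReal ?_) hsq
    have h2 : Real.sqrt (ε₁^2 + ε₂^2) ≤ 1 := by
      rw [show (1:ℝ) = Real.sqrt 1 by rw [Real.sqrt_one]]
      exact Real.sqrt_le_sqrt hε
    exact pow_le_pow_left₀ (by linarith) (aux_real ε₁ ε₂ hε₁ hε) 2
  rw [ENNReal.ofReal_mul (by positivity)]
  calc ENNReal.ofReal ((2 * Real.pi) ^ d) * ENNReal.ofReal ((1 - Real.sqrt (ε₁ ^ 2 + ε₂ ^ 2)) ^ 2)
      ≤ ENNReal.ofReal ((2 * Real.pi) ^ d) *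
        (ENNReal.ofReal ((2 * Real.pi) ^ (-(d:ℝ))) * volume S * volume Sh) :=
        mul_le_mul_right hfin _
    _ = volume S * volume Sh := by
        rw [← mul_assoc, ← mul_assoc, ← ENNReal.ofReal_mul (by positivity)]
        have h3 : (2 * Real.pi) ^ d * (2 * Real.pi) ^ (-(d:ℝ)) = 1 := by
          rw [← Real.rpow_natCast (2 * Real.pi) d, ← Real.rpow_add (by positivity)]
          norm_num
        rw [h3, ENNReal.ofReal_one, one_mul]
end

section
/- (Global uncertainty principle for the Fourier transform.) For every s, β > 0 there exists a constant C = C(s, β, d) > 0 such that for all f ∈ L²(ℝ^d): ( ∫_{ℝ^d} |x|^{2s} |f(x)|² dx )^{β/(s+β)} · ( ∫_{ℝ^d} |ξ|^{2β} |F f(ξ)|² dξ )^{s/(s+β)} ≥ C · ∫_{ℝ^d} |f(x)|² dx. -/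
open MeasureTheory Metric
open scoped ENNReal NNReal

lemma ofReal_norm_eq_coe_nnnorm {E : Type*} [SeminormedAddCommGroup E] (a : E) :
    ENNReal.ofReal ‖a‖ = (‖a‖₊ : ℝ≥0∞) := ENNReal.ofReal_eq_coe_nnreal _

lemma pow_two_eq_rpow' (y : ℝ≥0∞) : y ^ (2:ℕ) = y ^ (2:ℝ) := by
  rw [← ENNReal.rpow_natCast y 2]; norm_num

lemma sq_add_le' (a b : ℂ) : (‖a+b‖₊:ℝ≥0∞)^2 ≤ 2*(‖a‖₊:ℝ≥0∞)^2 + 2*(‖b‖₊:ℝ≥0∞)^2 := by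
  have hreal : ‖a+b‖^2 ≤ 2*‖a‖^2 + 2*‖b‖^2 := by
    have h := norm_add_le a b
    nlinarith [norm_nonneg a, norm_nonneg b, norm_nonneg (a+b), sq_nonneg (‖a‖ - ‖b‖), sq_nonneg (‖a‖ + ‖b‖)]
  calc (‖a+b‖₊:ℝ≥0∞)^2 = ENNReal.ofReal (‖a+b‖^2) := by
        rw [ENNReal.ofReal_pow (norm_nonneg _), ofReal_norm_eq_coe_nnnorm]
    _ ≤ ENNReal.ofReal (2*‖a‖^2 + 2*‖b‖^2) := ENNReal.ofReal_le_ofReal hreal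
    _ = 2*(‖a‖₊:ℝ≥0∞)^2 + 2*(‖b‖₊:ℝ≥0∞)^2 := by
        rw [ENNReal.ofReal_add (by positivity) (by positivity), ENNReal.ofReal_mul (by norm_num),
          ENNReal.ofReal_mul (by norm_num), ENNReal.ofReal_pow (norm_nonneg _),
          ENNReal.ofReal_pow (norm_nonneg _), ofReal_norm_eq_coe_nnnorm,
          ofReal_norm_eq_coe_nnnorm, ENNReal.ofReal_ofNat]

lemma tail_bound' {E : Type*} [MeasurableSpace E] [NormedAddCommGroup E] [BorelSpace E]
    {μ : Measure E} (g : E → ℂ) (R t : ℝ) (hR : 0 < R) (ht : 0 < t) :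
    ∫⁻ x in (closedBall (0:E) R)ᶜ, (‖g x‖₊:ℝ≥0∞)^2 ∂μ
      ≤ ENNReal.ofReal (R ^ (-t)) * ∫⁻ x, (‖x‖₊:ℝ≥0∞) ^ t * (‖g x‖₊:ℝ≥0∞)^2 ∂μ := by
  rw [← lintegral_indicator measurableSet_closedBall.compl,
    ← lintegral_const_mul' _ _ (by exact ENNReal.ofReal_ne_top)]
  refine lintegral_mono fun x => ?_
  by_cases hx : x ∈ (closedBall (0:E) R)ᶜ
  · rw [Set.indicator_of_mem hx]
    have hnorm : R < ‖x‖ := by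
      simpa [mem_closedBall, dist_eq_norm, not_le] using hx
    have h1 : (1:ℝ≥0∞) ≤ ENNReal.ofReal (R ^ (-t)) * (‖x‖₊:ℝ≥0∞) ^ t := by
      have hx0 : (0:ℝ) < ‖x‖ := lt_trans hR hnorm
      have : (‖x‖₊:ℝ≥0∞) ^ t = ENNReal.ofReal (‖x‖ ^ t) := by
        rw [← ofReal_norm_eq_coe_nnnorm, ← ENNReal.ofReal_rpow_of_pos hx0]
      rw [this, ← ENNReal.ofReal_mul (by positivity)]
      have : (1:ℝ) ≤ R ^ (-t) * ‖x‖ ^ t := by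
        have h2 : R ^ t ≤ ‖x‖ ^ t := Real.rpow_le_rpow hR.le hnorm.le ht.le
        rw [Real.rpow_neg hR.le]
        rw [inv_mul_eq_div, le_div_iff₀ (by positivity), one_mul]
        exact h2
      calc (1:ℝ≥0∞) = ENNReal.ofReal 1 := by simp
        _ ≤ _ := ENNReal.ofReal_le_ofReal this
    calc (‖g x‖₊:ℝ≥0∞)^2 = 1 * (‖g x‖₊:ℝ≥0∞)^2 := (one_mul _).symm
      _ ≤ (ENNReal.ofReal (R ^ (-t)) * (‖x‖₊:ℝ≥0∞) ^ t) * (‖g x‖₊:ℝ≥0∞)^2 :=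
          mul_le_mul_left h1 _
      _ = ENNReal.ofReal (R ^ (-t)) * ((‖x‖₊:ℝ≥0∞) ^ t * (‖g x‖₊:ℝ≥0∞)^2) := by ring
  · rw [Set.indicator_of_notMem hx]; exact bot_le

lemma l1_sq_le' {E : Type*} [MeasurableSpace E] {μ : Measure E} (f : E → ℂ)
    (hf : AEMeasurable (fun x => (‖f x‖₊ : ℝ≥0∞)) μ) (s : Set E) :
    (∫⁻ x in s, (‖f x‖₊:ℝ≥0∞) ∂μ)^2 ≤ μ s * ∫⁻ x, (‖f x‖₊:ℝ≥0∞)^2 ∂μ := by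
  have hconj : Real.HolderConjugate 2 2 := Real.HolderConjugate.two_two
  have h := ENNReal.lintegral_mul_le_Lp_mul_Lq (μ.restrict s) hconj
    (aemeasurable_const (b := (1:ℝ≥0∞))) hf.restrict
  simp only [Pi.mul_apply, one_mul] at h
  have h1 : ∫⁻ _ in s, (1:ℝ≥0∞)^(2:ℝ) ∂μ = μ s := by simp
  rw [h1] at h
  simp_rw [← pow_two_eq_rpow'] at h
  have h2 : ∫⁻ x in s, (‖f x‖₊:ℝ≥0∞)^2 ∂μ ≤ ∫⁻ x, (‖f x‖₊:ℝ≥0∞)^2 ∂μ :=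
    setLIntegral_le_lintegral _ _
  calc (∫⁻ x in s, (‖f x‖₊:ℝ≥0∞) ∂μ)^2
      ≤ (μ s ^ (1/(2:ℝ)) * (∫⁻ x in s, (‖f x‖₊:ℝ≥0∞)^2 ∂μ) ^ (1/(2:ℝ)))^2 := by
        rw [pow_two_eq_rpow', pow_two_eq_rpow']
        exact ENNReal.rpow_le_rpow h (by norm_num)
    _ = μ s * ∫⁻ x in s, (‖f x‖₊:ℝ≥0∞)^2 ∂μ := by
        rw [mul_pow, ← ENNReal.rpow_natCast (μ s ^ (1/(2:ℝ))) 2,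
          ← ENNReal.rpow_natCast ((∫⁻ x in s, (‖f x‖₊:ℝ≥0∞)^2 ∂μ) ^ (1/(2:ℝ))) 2,
          ← ENNReal.rpow_mul, ← ENNReal.rpow_mul]
        norm_num
    _ ≤ μ s * ∫⁻ x, (‖f x‖₊:ℝ≥0∞)^2 ∂μ := mul_le_mul_right h2 _

lemma lintegral_sq_lt_top' {E : Type*} [MeasurableSpace E] {μ : Measure E} (f : E → ℂ)
    (hf : MemLp f 2 μ) : ∫⁻ x, (‖f x‖₊:ℝ≥0∞)^2 ∂μ < ⊤ := by
  have h := hf.2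
  rw [eLpNorm_eq_lintegral_rpow_enorm_toReal (by norm_num) (by norm_num)] at h
  simp only [ENNReal.toReal_ofNat] at h
  have h2 : ∫⁻ x, (‖f x‖₊:ℝ≥0∞)^(2:ℝ) ∂μ < ⊤ :=
    (ENNReal.rpow_lt_top_iff_of_pos (by norm_num : (0:ℝ) < 1/(2:ℝ))).mp h
  simpa [← pow_two_eq_rpow'] using h2

lemma opt' (s β : ℝ) (hs : 0 < s) (hβ : 0 < β) (a b n : ℝ) (ha : 0 < a) (hb : 0 < b)
    (h : ∀ lam : ℝ, 0 < lam → n ≤ lam ^ (-(2*s)) * a + lam ^ (2*β) * b) :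
    n ≤ 2 * (a ^ (β/(s+β)) * b ^ (s/(s+β))) := by
  have hsβ : 0 < s + β := by linarith
  set lam := (a/b) ^ (1/(2*(s+β))) with hlam
  have hab : (0:ℝ) < a / b := div_pos ha hb
  have hlam0 : 0 < lam := Real.rpow_pos_of_pos hab _
  have key : ∀ t : ℝ, (a/b) ^ t = a ^ t * b ^ (-t) := fun t => by
    rw [Real.div_rpow ha.le hb.le, Real.rpow_neg hb.le, div_eq_mul_inv]
  have e1 : lam ^ (-(2*s)) * a = a ^ (β/(s+β)) * b ^ (s/(s+β)) := by
    rw [hlam, ← Real.rpow_mul hab.le]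
    have h1 : 1/(2*(s+β)) * -(2*s) = -(s/(s+β)) := by field_simp
    rw [h1, key, neg_neg]
    have h2 : a ^ (-(s/(s+β))) * b ^ (s/(s+β)) * a
        = (a ^ (-(s/(s+β))) * a ^ (1:ℝ)) * b ^ (s/(s+β)) := by rw [Real.rpow_one]; ring
    rw [h2, ← Real.rpow_add ha]
    have h3 : -(s/(s+β)) + 1 = β/(s+β) := by field_simp; ring
    rw [h3]
  have e2 : lam ^ (2*β) * b = a ^ (β/(s+β)) * b ^ (s/(s+β)) := by
    rw [hlam, ← Real.rpow_mul hab.le]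
    have h1 : 1/(2*(s+β)) * (2*β) = β/(s+β) := by field_simp
    rw [h1, key]
    have h2 : a ^ (β/(s+β)) * b ^ (-(β/(s+β))) * b
        = a ^ (β/(s+β)) * (b ^ (-(β/(s+β))) * b ^ (1:ℝ)) := by rw [Real.rpow_one]; ring
    rw [h2, ← Real.rpow_add hb]
    have h3 : -(β/(s+β)) + 1 = s/(s+β) := by field_simp; ring
    rw [h3]
  have := h lam hlam0
  rw [e1, e2] at this
  linarith

lemma four_bound' (d : ℕ) (u : EuclideanSpace ℝ (Fin d) → ℂ) (hu : Integrable u volume)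
    (g : EuclideanSpace ℝ (Fin d) → ℂ)
    (hg : ∀ ξ, g ξ = (((2 * Real.pi) ^ (-(d : ℝ) / 2) : ℝ) : ℂ) *
        ∫ x, u x * Complex.exp (-(Complex.I * ((inner ℝ x ξ : ℝ) : ℂ))) ∂volume)
    (ξ : EuclideanSpace ℝ (Fin d)) :
    (‖g ξ‖₊ : ℝ≥0∞) ≤ ENNReal.ofReal ((2 * Real.pi) ^ (-(d : ℝ) / 2)) * ∫⁻ x, (‖u x‖₊:ℝ≥0∞) ∂volume := by
  have hc : (0:ℝ) < (2 * Real.pi) ^ (-(d : ℝ) / 2) :=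
    Real.rpow_pos_of_pos (by positivity) _
  have hnorm : ‖g ξ‖ ≤ (2 * Real.pi) ^ (-(d : ℝ) / 2) * ∫ x, ‖u x‖ ∂volume := by
    rw [hg, norm_mul, Complex.norm_real, Real.norm_of_nonneg hc.le]
    refine mul_le_mul_of_nonneg_left ?_ hc.le
    calc ‖∫ x, u x * Complex.exp (-(Complex.I * ((inner ℝ x ξ : ℝ) : ℂ))) ∂volume‖
        ≤ ∫ x, ‖u x * Complex.exp (-(Complex.I * ((inner ℝ x ξ : ℝ) : ℂ)))‖ ∂volume :=
          norm_integral_le_integral_norm _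
      _ = ∫ x, ‖u x‖ ∂volume := by
          congr 1; funext x
          rw [norm_mul]
          have : ‖Complex.exp (-(Complex.I * ((inner ℝ x ξ : ℝ) : ℂ)))‖ = 1 := by
            rw [Complex.norm_exp]
            simp
          rw [this, mul_one]
  calc (‖g ξ‖₊ : ℝ≥0∞) = ENNReal.ofReal ‖g ξ‖ := (ofReal_norm_eq_coe_nnnorm _).symm
    _ ≤ ENNReal.ofReal ((2 * Real.pi) ^ (-(d : ℝ) / 2) * ∫ x, ‖u x‖ ∂volume) :=
        ENNReal.ofReal_le_ofReal hnorm
    _ = _ := by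
        rw [ENNReal.ofReal_mul hc.le, ofReal_integral_norm_eq_lintegral_enorm hu]
        rfl

theorem stmt_18
    (d : ℕ) (hd : 1 ≤ d)
    (Fr : (EuclideanSpace ℝ (Fin d) → ℂ) → EuclideanSpace ℝ (Fin d) → ℂ)
    (hFrdef : ∀ f : EuclideanSpace ℝ (Fin d) → ℂ, Integrable f volume → ∀ ξ,
      Fr f ξ = (((2 * Real.pi) ^ (-(d : ℝ) / 2) : ℝ) : ℂ) *
        ∫ x, f x * Complex.exp (-(Complex.I * ((inner ℝ x ξ : ℝ) : ℂ))) ∂volume)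
    (hFrmeas : ∀ f : EuclideanSpace ℝ (Fin d) → ℂ, MemLp f 2 volume → AEStronglyMeasurable (Fr f) volume)
    (hFradd : ∀ f g : EuclideanSpace ℝ (Fin d) → ℂ, MemLp f 2 volume → MemLp g 2 volume →
      Fr (f + g) =ᵐ[volume] Fr f + Fr g)
    (hFrsmul : ∀ (c : ℂ) (f : EuclideanSpace ℝ (Fin d) → ℂ), MemLp f 2 volume → Fr (c • f) =ᵐ[volume] c • Fr f)
    (hFrplan : ∀ f : EuclideanSpace ℝ (Fin d) → ℂ, MemLp f 2 volume →
      ∫⁻ ξ, (‖Fr f ξ‖₊ : ℝ≥0∞) ^ 2 ∂volume = ∫⁻ x, (‖f x‖₊ : ℝ≥0∞) ^ 2 ∂volume)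
    (hFrsurj : ∀ g : EuclideanSpace ℝ (Fin d) → ℂ, MemLp g 2 volume →
      ∃ f : EuclideanSpace ℝ (Fin d) → ℂ, MemLp f 2 volume ∧ Fr f =ᵐ[volume] g)
    (s β : ℝ) (hs : 0 < s) (hβ : 0 < β) :
    ∃ C : ℝ, 0 < C ∧ ∀ f : EuclideanSpace ℝ (Fin d) → ℂ, MemLp f 2 volume →
      ENNReal.ofReal C * (∫⁻ x, (‖f x‖₊ : ℝ≥0∞) ^ 2 ∂volume) ≤
        (∫⁻ x, (‖x‖₊ : ℝ≥0∞) ^ (2 * s) * (‖f x‖₊ : ℝ≥0∞) ^ 2 ∂volume) ^ (β / (s + β)) *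
        (∫⁻ ξ, (‖ξ‖₊ : ℝ≥0∞) ^ (2 * β) * (‖Fr f ξ‖₊ : ℝ≥0∞) ^ 2 ∂volume) ^ (s / (s + β)) := by
  haveI hne : Nonempty (Fin d) := ⟨⟨0, hd⟩⟩
  set c : ℝ := (2 * Real.pi) ^ (-(d:ℝ)/2) with hc_def
  have hc : 0 < c := Real.rpow_pos_of_pos (by positivity) _
  set V : ℝ≥0∞ := volume (Metric.ball (0:EuclideanSpace ℝ (Fin d)) 1) with hV_def
  have hV0 : 0 < V := measure_ball_pos _ _ one_pos
  have hVt : V ≠ ⊤ := measure_ball_lt_top.ne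
  set v : ℝ := V.toReal with hv_def
  have hv : 0 < v := ENNReal.toReal_pos hV0.ne' hVt
  have hd0 : (d:ℝ) ≠ 0 := Nat.cast_ne_zero.mpr (by omega)
  set r₀ : ℝ := (1/(4*c^2*v^2)) ^ (1/(d:ℝ)) with hr₀_def
  have hr₀ : 0 < r₀ := Real.rpow_pos_of_pos (by positivity) _
  have hr₀d : r₀ ^ (d:ℕ) = 1/(4*c^2*v^2) := by
    rw [← Real.rpow_natCast r₀ d, hr₀_def, ← Real.rpow_mul (by positivity)]
    have : (1/(d:ℝ)) * (d:ℝ) = 1 := by field_simp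
    rw [this, Real.rpow_one]
  have hθ : 0 < β/(s+β) := by positivity
  have hσ : 0 < s/(s+β) := by positivity
  set c₁ : ℝ := 2 * (4:ℝ)^(β/(s+β)) * (2*r₀^(-(2*β)))^(s/(s+β)) with hc₁_def
  have hc₁ : 0 < c₁ := by positivity
  refine ⟨1/c₁, by positivity, ?_⟩
  intro f hf
  set N := ∫⁻ x, (‖f x‖₊ : ℝ≥0∞) ^ 2 ∂volume with hN_def
  set A := ∫⁻ x, (‖x‖₊ : ℝ≥0∞) ^ (2 * s) * (‖f x‖₊ : ℝ≥0∞) ^ 2 ∂volume with hA_def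
  set B := ∫⁻ ξ, (‖ξ‖₊ : ℝ≥0∞) ^ (2 * β) * (‖Fr f ξ‖₊ : ℝ≥0∞) ^ 2 ∂volume with hB_def
  have hNt : N ≠ ⊤ := (lintegral_sq_lt_top' f hf).ne
  -- degenerate cases
  rcases eq_or_ne A 0 with hA0 | hA0
  · have hm : AEMeasurable (fun x => (‖x‖₊:ℝ≥0∞) ^ (2*s) * (‖f x‖₊:ℝ≥0∞) ^ 2) volume :=
      ((measurable_nnnorm.coe_nnreal_ennreal).pow_const (2*s)).aemeasurable.mul
        (hf.1.enorm.pow_const 2)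
    have hz : (fun x => (‖x‖₊:ℝ≥0∞)^(2*s) * (‖f x‖₊:ℝ≥0∞)^2) =ᵐ[volume] 0 :=
      (lintegral_eq_zero_iff' hm).mp hA0
    have h0 : ∀ᵐ (x : EuclideanSpace ℝ (Fin d)) ∂volume, x ≠ 0 := by
      rw [ae_iff]
      simp only [ne_eq, not_not]
      have he : {x : EuclideanSpace ℝ (Fin d) | x = 0} = {0} := by ext; simp
      rw [he]
      exact measure_singleton 0
    have hNzero : N = 0 := by
      rw [hN_def, lintegral_eq_zero_iff' (f := fun x => (‖f x‖₊:ℝ≥0∞)^2) (hf.1.enorm.pow_const 2)]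
      filter_upwards [hz, h0] with x hx hx0
      rcases mul_eq_zero.mp hx with h | h
      · exfalso
        rcases ENNReal.rpow_eq_zero_iff.mp h with ⟨h1, _⟩ | ⟨h1, _⟩
        · exact hx0 (by simpa using h1)
        · exact ENNReal.coe_ne_top h1
      · simpa using h
    rw [hNzero, mul_zero]
    exact bot_le
  rcases eq_or_ne B 0 with hB0 | hB0
  · have hm : AEMeasurable (fun ξ => (‖ξ‖₊:ℝ≥0∞) ^ (2*β) * (‖Fr f ξ‖₊:ℝ≥0∞) ^ 2) volume :=
      ((measurable_nnnorm.coe_nnreal_ennreal).pow_const (2*β)).aemeasurable.mul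
        ((hFrmeas f hf).enorm.pow_const 2)
    have hz : (fun ξ => (‖ξ‖₊:ℝ≥0∞)^(2*β) * (‖Fr f ξ‖₊:ℝ≥0∞)^2) =ᵐ[volume] 0 :=
      (lintegral_eq_zero_iff' hm).mp hB0
    have h0 : ∀ᵐ (x : EuclideanSpace ℝ (Fin d)) ∂volume, x ≠ 0 := by
      rw [ae_iff]
      simp only [ne_eq, not_not]
      have he : {x : EuclideanSpace ℝ (Fin d) | x = 0} = {0} := by ext; simp
      rw [he]
      exact measure_singleton 0
    have hNzero : N = 0 := by
      rw [hN_def, ← hFrplan f hf,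
        lintegral_eq_zero_iff' (f := fun ξ => (‖Fr f ξ‖₊:ℝ≥0∞)^2) ((hFrmeas f hf).enorm.pow_const 2)]
      filter_upwards [hz, h0] with x hx hx0
      rcases mul_eq_zero.mp hx with h | h
      · exfalso
        rcases ENNReal.rpow_eq_zero_iff.mp h with ⟨h1, _⟩ | ⟨h1, _⟩
        · exact hx0 (by simpa using h1)
        · exact ENNReal.coe_ne_top h1
      · simpa using h
    rw [hNzero, mul_zero]
    exact bot_le
  rcases eq_or_ne A ⊤ with hAt | hAt
  · rw [hAt, ENNReal.top_rpow_of_pos hθ, ENNReal.top_mul]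
    · exact le_top
    · intro h
      rcases ENNReal.rpow_eq_zero_iff.mp h with ⟨h1, _⟩ | ⟨_, h2⟩
      · exact hB0 h1
      · linarith
  rcases eq_or_ne B ⊤ with hBt | hBt
  · rw [hBt, ENNReal.top_rpow_of_pos hσ, ENNReal.mul_top]
    · exact le_top
    · intro h
      rcases ENNReal.rpow_eq_zero_iff.mp h with ⟨h1, _⟩ | ⟨_, h2⟩
      · exact hA0 h1
      · linarith
  -- main case
  -- core estimate
  have core : ∀ R ρ : ℝ, 0 < R → 0 < ρ →
      N ≤ ENNReal.ofReal (2 * c^2 * (R^(d:ℕ) * v) * (ρ^(d:ℕ) * v)) * N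
          + ENNReal.ofReal (2 * R^(-(2*s))) * A + ENNReal.ofReal (ρ^(-(2*β))) * B := by
    intro R ρ hR hρ
    set BR := Metric.closedBall (0:EuclideanSpace ℝ (Fin d)) R with hBR_def
    set Sρ := Metric.closedBall (0:EuclideanSpace ℝ (Fin d)) ρ with hSρ_def
    set u := BR.indicator f with hu_def
    set w := (BRᶜ).indicator f with hw_def
    have huw : u + w = f := by
      funext x
      by_cases hx : x ∈ BR <;> simp [hu_def, hw_def, Set.indicator_apply, hx]
    have hu2 : MemLp u 2 volume := hf.indicator measurableSet_closedBall
    have hw2 : MemLp w 2 volume := hf.indicator measurableSet_closedBall.compl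
    have huI : Integrable u volume := by
      rw [hu_def, integrable_indicator_iff measurableSet_closedBall]
      haveI hfin : IsFiniteMeasure (volume.restrict BR) :=
        ⟨by rw [Measure.restrict_apply_univ]; exact measure_closedBall_lt_top⟩
      have hfr : MemLp f 2 (volume.restrict BR) := hf.mono_measure Measure.restrict_le_self
      exact memLp_one_iff_integrable.mp (hfr.mono_exponent (by norm_num))
    have hvolR : volume BR = ENNReal.ofReal (R^(d:ℕ) * v) := by
      rw [hBR_def, Measure.addHaar_closedBall volume 0 hR.le, finrank_euclideanSpace_fin,
        ENNReal.ofReal_mul (by positivity), hv_def, ENNReal.ofReal_toReal hVt]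
    have hvolS : volume Sρ = ENNReal.ofReal (ρ^(d:ℕ) * v) := by
      rw [hSρ_def, Measure.addHaar_closedBall volume 0 hρ.le, finrank_euclideanSpace_fin,
        ENNReal.ofReal_mul (by positivity), hv_def, ENNReal.ofReal_toReal hVt]
    have hIu : ∫⁻ x, (‖u x‖₊:ℝ≥0∞) ∂volume = ∫⁻ x in BR, (‖f x‖₊:ℝ≥0∞) ∂volume := by
      rw [← lintegral_indicator measurableSet_closedBall]
      refine lintegral_congr fun x => ?_
      by_cases hx : x ∈ BR <;> simp [hu_def, Set.indicator_apply, hx, ← hBR_def]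
    have hIw : ∫⁻ x, (‖w x‖₊:ℝ≥0∞)^2 ∂volume = ∫⁻ x in BRᶜ, (‖f x‖₊:ℝ≥0∞)^2 ∂volume := by
      rw [← lintegral_indicator measurableSet_closedBall.compl]
      refine lintegral_congr fun x => ?_
      by_cases hx : x ∈ BRᶜ <;> simp [hw_def, Set.indicator_apply, hx, ← hBR_def]
    have hCS : (∫⁻ x in BR, (‖f x‖₊:ℝ≥0∞) ∂volume)^2 ≤ volume BR * N :=
      l1_sq_le' f hf.1.enorm BR
    have hFru_pt := four_bound' d u huI (Fr u) (hFrdef u huI)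
    have hM : ∀ ξ, (‖Fr u ξ‖₊:ℝ≥0∞)^2 ≤ ENNReal.ofReal c ^ 2 * (volume BR * N) := by
      intro ξ
      calc (‖Fr u ξ‖₊:ℝ≥0∞)^2
          ≤ (ENNReal.ofReal c * ∫⁻ x, (‖u x‖₊:ℝ≥0∞) ∂volume)^2 :=
            pow_le_pow_left' (hFru_pt ξ) 2
        _ = ENNReal.ofReal c ^ 2 * (∫⁻ x, (‖u x‖₊:ℝ≥0∞) ∂volume)^2 := by rw [mul_pow]
        _ = ENNReal.ofReal c ^ 2 * (∫⁻ x in BR, (‖f x‖₊:ℝ≥0∞) ∂volume)^2 := by rw [hIu]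
        _ ≤ _ := mul_le_mul_right hCS _
    have hT1u : ∫⁻ ξ in Sρ, (‖Fr u ξ‖₊:ℝ≥0∞)^2 ∂volume
        ≤ ENNReal.ofReal c ^ 2 * (volume BR * N) * volume Sρ := by
      calc ∫⁻ ξ in Sρ, (‖Fr u ξ‖₊:ℝ≥0∞)^2 ∂volume
          ≤ ∫⁻ _ in Sρ, (ENNReal.ofReal c ^ 2 * (volume BR * N)) ∂volume :=
            lintegral_mono fun ξ => hM ξ
        _ = _ := setLIntegral_const _ _
    have hwTail : ∫⁻ x, (‖w x‖₊:ℝ≥0∞)^2 ∂volume ≤ ENNReal.ofReal (R^(-(2*s))) * A := by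
      rw [hIw, hA_def]
      exact tail_bound' f R (2*s) hR (by positivity)
    have hT1w : ∫⁻ ξ in Sρ, (‖Fr w ξ‖₊:ℝ≥0∞)^2 ∂volume ≤ ENNReal.ofReal (R^(-(2*s))) * A := by
      refine le_trans (setLIntegral_le_lintegral _ _) ?_
      rw [hFrplan w hw2]
      exact hwTail
    have hae : Fr f =ᵐ[volume] Fr u + Fr w := by
      have h := hFradd u w hu2 hw2
      rwa [huw] at h
    have hsplit : ∫⁻ ξ in Sρ, (‖Fr f ξ‖₊:ℝ≥0∞)^2 ∂volume
        ≤ 2 * (ENNReal.ofReal c ^ 2 * (volume BR * N) * volume Sρ)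
          + 2 * (ENNReal.ofReal (R^(-(2*s))) * A) := by
      have hptwise : ∀ᵐ ξ ∂(volume.restrict Sρ),
          (‖Fr f ξ‖₊:ℝ≥0∞)^2 ≤ 2*(‖Fr u ξ‖₊:ℝ≥0∞)^2 + 2*(‖Fr w ξ‖₊:ℝ≥0∞)^2 :=
        ae_restrict_of_ae (hae.mono fun ξ hξ => by
          rw [hξ, Pi.add_apply]; exact sq_add_le' _ _)
      calc ∫⁻ ξ in Sρ, (‖Fr f ξ‖₊:ℝ≥0∞)^2 ∂volume
          ≤ ∫⁻ ξ in Sρ, (2*(‖Fr u ξ‖₊:ℝ≥0∞)^2 + 2*(‖Fr w ξ‖₊:ℝ≥0∞)^2) ∂volume :=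
            lintegral_mono_ae hptwise
        _ = (∫⁻ ξ in Sρ, 2*(‖Fr u ξ‖₊:ℝ≥0∞)^2 ∂volume)
            + ∫⁻ ξ in Sρ, 2*(‖Fr w ξ‖₊:ℝ≥0∞)^2 ∂volume :=
            lintegral_add_left' ((((hFrmeas u hu2).enorm.pow_const 2).const_mul 2).restrict) _
        _ = 2 * (∫⁻ ξ in Sρ, (‖Fr u ξ‖₊:ℝ≥0∞)^2 ∂volume)
            + 2 * ∫⁻ ξ in Sρ, (‖Fr w ξ‖₊:ℝ≥0∞)^2 ∂volume := by
            rw [lintegral_const_mul' 2 _ (by norm_num), lintegral_const_mul' 2 _ (by norm_num)]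
        _ ≤ _ := add_le_add (mul_le_mul_right hT1u 2) (mul_le_mul_right hT1w 2)
    have hT2 : ∫⁻ ξ in Sρᶜ, (‖Fr f ξ‖₊:ℝ≥0∞)^2 ∂volume ≤ ENNReal.ofReal (ρ^(-(2*β))) * B := by
      rw [hSρ_def, hB_def]
      exact tail_bound' (Fr f) ρ (2*β) hρ (by positivity)
    calc N = ∫⁻ ξ, (‖Fr f ξ‖₊:ℝ≥0∞)^2 ∂volume := (hFrplan f hf).symm
      _ = (∫⁻ ξ in Sρ, (‖Fr f ξ‖₊:ℝ≥0∞)^2 ∂volume)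
          + ∫⁻ ξ in Sρᶜ, (‖Fr f ξ‖₊:ℝ≥0∞)^2 ∂volume :=
          (lintegral_add_compl _ measurableSet_closedBall).symm
      _ ≤ (2 * (ENNReal.ofReal c ^ 2 * (volume BR * N) * volume Sρ)
            + 2 * (ENNReal.ofReal (R^(-(2*s))) * A))
          + ENNReal.ofReal (ρ^(-(2*β))) * B := add_le_add hsplit hT2
      _ = ENNReal.ofReal (2 * c^2 * (R^(d:ℕ) * v) * (ρ^(d:ℕ) * v)) * N
          + ENNReal.ofReal (2 * R^(-(2*s))) * A + ENNReal.ofReal (ρ^(-(2*β))) * B := by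
          rw [hvolR, hvolS]
          rw [show (2 * c^2 * (R^(d:ℕ) * v) * (ρ^(d:ℕ) * v))
              = 2 * (c^2 * ((R^(d:ℕ) * v) * (ρ^(d:ℕ) * v))) from by ring]
          rw [ENNReal.ofReal_mul (by norm_num : (0:ℝ) ≤ 2),
            ENNReal.ofReal_mul (by positivity : (0:ℝ) ≤ c^2),
            ENNReal.ofReal_mul (by positivity : (0:ℝ) ≤ R^(d:ℕ) * v),
            ENNReal.ofReal_mul (by norm_num : (0:ℝ) ≤ 2),
            ENNReal.ofReal_pow hc.le, ENNReal.ofReal_ofNat]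
          ring
  -- convert to real numbers
  set n := N.toReal with hn_def
  set a := A.toReal with ha_def
  set b := B.toReal with hb_def
  have ha : 0 < a := ENNReal.toReal_pos hA0 hAt
  have hb : 0 < b := ENNReal.toReal_pos hB0 hBt
  have hrcore : ∀ lam : ℝ, 0 < lam →
      n ≤ lam ^ (-(2*s)) * (4*a) + lam ^ (2*β) * (2*r₀^(-(2*β))*b) := by
    intro lam hlam
    have h := core lam (r₀/lam) hlam (by positivity)
    have hfin1 : ENNReal.ofReal (2 * c^2 * (lam^(d:ℕ) * v) * ((r₀/lam)^(d:ℕ) * v)) * N ≠ ⊤ :=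
      ENNReal.mul_ne_top ENNReal.ofReal_ne_top hNt
    have hfin2 : ENNReal.ofReal (2 * lam^(-(2*s))) * A ≠ ⊤ :=
      ENNReal.mul_ne_top ENNReal.ofReal_ne_top hAt
    have hfin3 : ENNReal.ofReal ((r₀/lam)^(-(2*β))) * B ≠ ⊤ :=
      ENNReal.mul_ne_top ENNReal.ofReal_ne_top hBt
    have hreal := (ENNReal.toReal_le_toReal hNt
      (by exact ENNReal.add_ne_top.mpr ⟨ENNReal.add_ne_top.mpr ⟨hfin1, hfin2⟩, hfin3⟩)).mpr h
    rw [ENNReal.toReal_add (ENNReal.add_ne_top.mpr ⟨hfin1, hfin2⟩) hfin3,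
      ENNReal.toReal_add hfin1 hfin2, ENNReal.toReal_mul, ENNReal.toReal_mul,
      ENNReal.toReal_mul, ENNReal.toReal_ofReal (by positivity),
      ENNReal.toReal_ofReal (by positivity), ENNReal.toReal_ofReal (by positivity)] at hreal
    have hk1 : 2 * c^2 * (lam^(d:ℕ) * v) * ((r₀/lam)^(d:ℕ) * v) = 1/2 := by
      have h1 : 2 * c^2 * (lam^(d:ℕ) * v) * ((r₀/lam)^(d:ℕ) * v)
          = 2 * c^2 * v^2 * (r₀^(d:ℕ)) * (lam^(d:ℕ)/lam^(d:ℕ)) := by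
        rw [div_pow]; ring
      rw [h1, div_self (pow_ne_zero _ hlam.ne'), mul_one, hr₀d]
      field_simp
      ring
    have hdiv : (r₀/lam)^(-(2*β)) = r₀^(-(2*β)) * lam^(2*β) := by
      rw [Real.div_rpow hr₀.le hlam.le, Real.rpow_neg hlam.le, div_eq_mul_inv, inv_inv]
    rw [hk1, hdiv] at hreal
    linarith
  have hopt := opt' s β hs hβ (4*a) (2*r₀^(-(2*β))*b) n (by positivity) (by positivity) hrcore
  rw [Real.mul_rpow (by norm_num : (0:ℝ) ≤ 4) ha.le,
    Real.mul_rpow (by positivity : (0:ℝ) ≤ 2*r₀^(-(2*β))) hb.le] at hopt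
  have hfinal : n ≤ c₁ * (a^(β/(s+β)) * b^(s/(s+β))) := by
    rw [hc₁_def]; nlinarith [hopt]
  have hCn : 1/c₁ * n ≤ a^(β/(s+β)) * b^(s/(s+β)) := by
    rw [one_div, inv_mul_le_iff₀ hc₁]
    exact hfinal
  calc ENNReal.ofReal (1/c₁) * N
      = ENNReal.ofReal (1/c₁ * n) := by
        rw [ENNReal.ofReal_mul (by positivity), hn_def, ENNReal.ofReal_toReal hNt]
    _ ≤ ENNReal.ofReal (a^(β/(s+β)) * b^(s/(s+β))) := ENNReal.ofReal_le_ofReal hCn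
    _ = ENNReal.ofReal (a^(β/(s+β))) * ENNReal.ofReal (b^(s/(s+β))) :=
        ENNReal.ofReal_mul (by positivity)
    _ = A ^ (β/(s+β)) * B ^ (s/(s+β)) := by
        rw [ha_def, hb_def, ENNReal.toReal_rpow, ENNReal.toReal_rpow,
          ENNReal.ofReal_toReal (ENNReal.rpow_ne_top_of_nonneg hθ.le hAt),
          ENNReal.ofReal_toReal (ENNReal.rpow_ne_top_of_nonneg hσ.le hBt)]
end
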